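/- arXiv:2310.15561 — 13 statements merged into one kernel-verified Lean document; each statement's English description precedes it below -/
import Mathlib

section
/- If T is a bounded linear operator on a Banach space X such that the Cesàro averages M_n(T) = (1/n)∑_{k=1}^n T^k converge in operator norm to some operator E, then the range (I-T)X is a closed subspace of X. -/
open Filter Topology
set_option maxHeartbeats 1000000

private lemma aux_norm_smul {𝕜 : Type*} [RCLike 𝕜]
    {X : Type*} [NormedAddCommGroup X] [NormedSpace 𝕜 X]
    (c : 𝕜) (A : X →L[𝕜] X) : ‖c • A‖ = ‖c‖ * ‖A‖ := norm_smul c A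

/-- If the Cesàro averages `M_n(T) = (1/n) ∑_{k=1}^n T^k` of a bounded operator `T` on a
Banach space converge in operator norm to some operator `E`, then `(I-T)X` is closed. -/
theorem uniformly_ergodic_range_closed {𝕜 : Type*} [RCLike 𝕜]
    {X : Type*} [NormedAddCommGroup X] [NormedSpace 𝕜 X] [CompleteSpace X]
    (T : X →L[𝕜] X) (E : X →L[𝕜] X)
    (h : Tendsto (fun n : ℕ => (n : 𝕜)⁻¹ • ∑ k ∈ Finset.Icc 1 n, T ^ k) atTop (𝓝 E)) :
    IsClosed (Set.range ⇑(1 - T)) := by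
  set S : ℕ → (X →L[𝕜] X) := fun n => ∑ k ∈ Finset.Icc 1 n, T ^ k with hS
  set M : ℕ → (X →L[𝕜] X) := fun n => (n : 𝕜)⁻¹ • S n with hMdef
  -- S (n+1) = S n + T^(n+1)
  have hSsucc : ∀ n : ℕ, S (n + 1) = S n + T ^ (n + 1) := by
    intro n
    simp only [hS]
    rw [Finset.sum_Icc_succ_top (by omega : 1 ≤ n + 1)]
  -- T * S n = S (n+1) - T
  have hTS : ∀ n : ℕ, T * S n = S (n + 1) - T := by
    intro n
    induction n with
    | zero => simp [hS]
    | succ n ih =>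
      rw [hSsucc, mul_add, ih, hSsucc (n+1)]
      rw [show T * T ^ (n+1) = T ^ (n+2) by rw [← pow_succ']]
      abel
  -- key small-o lemma: (n+1)⁻¹ • T^(n+1) → 0
  have hu : Tendsto (fun n : ℕ => ((n : 𝕜) + 1)⁻¹ • T ^ (n + 1)) atTop (𝓝 0) := by
    have h1 : Tendsto (fun n : ℕ => M (n + 1)) atTop (𝓝 E) :=
      h.comp (tendsto_add_atTop_nat 1)
    have hc : Tendsto (fun n : ℕ => (n : 𝕜) / ((n : 𝕜) + 1)) atTop (𝓝 1) := by
      simpa using tendsto_natCast_div_add_atTop (1 : 𝕜)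
    have h3 : Tendsto (fun n : ℕ => M (n + 1) - ((n : 𝕜) / ((n : 𝕜) + 1)) • M n) atTop
        (𝓝 (E - (1 : 𝕜) • E)) := h1.sub (hc.smul h)
    rw [one_smul, sub_self] at h3
    convert h3 using 2 with n
    rcases Nat.eq_zero_or_pos n with rfl | hn
    · simp [hMdef, hS]
    · have hn0 : (n : 𝕜) ≠ 0 := Nat.cast_ne_zero.mpr hn.ne'
      simp only [hMdef, hSsucc n, smul_add, smul_smul]
      rw [div_mul_eq_mul_div, mul_inv_cancel₀ hn0]
      have : ((n : 𝕜) + 1)⁻¹ = 1 / ((n:𝕜)+1) := by rw [one_div]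
      field_simp
      push_cast
      abel
  -- (1/n) • T ↦ 0
  have hT0 : Tendsto (fun n : ℕ => (n : 𝕜)⁻¹ • T) atTop (𝓝 0) := by
    simpa using (tendsto_inv_atTop_nhds_zero_nat (𝕜 := 𝕜)).smul_const T
  -- (1/n) • T^(n+1) → 0
  have hTn : Tendsto (fun n : ℕ => (n : 𝕜)⁻¹ • T ^ (n + 1)) atTop (𝓝 0) := by
    apply squeeze_zero_norm' (a := fun n : ℕ => 2 * ‖((n : 𝕜) + 1)⁻¹ • T ^ (n + 1)‖)
    · filter_upwards [eventually_ge_atTop 1] with n hn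
      have e1 : ‖(n : 𝕜)⁻¹‖ = ((n : ℝ))⁻¹ := by
        rw [norm_inv, RCLike.norm_natCast]
      have e2 : ‖((n : 𝕜) + 1)⁻¹‖ = (((n : ℝ)) + 1)⁻¹ := by
        rw [norm_inv]
        rw [show ((n : 𝕜) + 1) = ((n + 1 : ℕ) : 𝕜) by push_cast; ring, RCLike.norm_natCast]
        push_cast; ring
      rw [aux_norm_smul, aux_norm_smul, e1, e2, ← mul_assoc]
      apply mul_le_mul_of_nonneg_right _ (norm_nonneg _)
      have hn1 : (1 : ℝ) ≤ (n : ℝ) := by exact_mod_cast hn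
      rw [show (2:ℝ) * ((n:ℝ)+1)⁻¹ = 2 / ((n:ℝ)+1) by ring, inv_eq_one_div,
        div_le_div_iff₀ (by linarith) (by linarith)]
      linarith
    · simpa using (hu.norm).const_mul 2
  -- T * M n - M n → 0 and M n * T - M n → 0
  have hST : ∀ n : ℕ, S n * T = S (n + 1) - T := by
    intro n
    induction n with
    | zero => simp [hS]
    | succ n ih =>
      rw [hSsucc, add_mul, ih, hSsucc (n+1)]
      rw [show T ^ (n+1) * T = T ^ (n+2) by rw [← pow_succ]]
      abel
  have key : ∀ n : ℕ, (n : 𝕜)⁻¹ • (S (n+1) - T - S n) = (n : 𝕜)⁻¹ • T ^ (n+1) - (n : 𝕜)⁻¹ • T := by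
    intro n
    rw [hSsucc]
    rw [show S n + T ^ (n+1) - T - S n = T ^ (n+1) - T by abel, smul_sub]
  have hdl : Tendsto (fun n : ℕ => T * M n - M n) atTop (𝓝 0) := by
    have : (fun n : ℕ => T * M n - M n) = fun n : ℕ => (n : 𝕜)⁻¹ • T ^ (n+1) - (n : 𝕜)⁻¹ • T := by
      funext n
      rw [hMdef]
      rw [mul_smul_comm, hTS, ← smul_sub, key]
    rw [this]
    simpa using hTn.sub hT0
  have hdr : Tendsto (fun n : ℕ => M n * T - M n) atTop (𝓝 0) := by
    have : (fun n : ℕ => M n * T - M n) = fun n : ℕ => (n : 𝕜)⁻¹ • T ^ (n+1) - (n : 𝕜)⁻¹ • T := by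
      funext n
      rw [hMdef]
      rw [smul_mul_assoc, hST, ← smul_sub, key]
    rw [this]
    simpa using hTn.sub hT0
  have hTE : T * E = E := by
    have h1 : Tendsto (fun n : ℕ => T * M n - M n) atTop (𝓝 (T * E - E)) :=
      (h.const_mul T).sub h
    have := tendsto_nhds_unique h1 hdl
    rwa [sub_eq_zero] at this
  have hET : E * T = E := by
    have h1 : Tendsto (fun n : ℕ => M n * T - M n) atTop (𝓝 (E * T - E)) :=
      (h.mul_const T).sub h
    have := tendsto_nhds_unique h1 hdr
    rwa [sub_eq_zero] at this
  -- E absorbs powers and averages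
  have hTkE : ∀ k : ℕ, 1 ≤ k → T ^ k * E = E := by
    intro k hk
    induction k with
    | zero => omega
    | succ k ih =>
      rcases Nat.eq_zero_or_pos k with rfl | hk'
      · simpa using hTE
      · rw [pow_succ, mul_assoc, hTE, ih hk']
  have hETk : ∀ k : ℕ, 1 ≤ k → E * T ^ k = E := by
    intro k hk
    induction k with
    | zero => omega
    | succ k ih =>
      rcases Nat.eq_zero_or_pos k with rfl | hk'
      · simpa using hET
      · rw [pow_succ, ← mul_assoc, ih hk', hET]
  have hME : ∀ n : ℕ, 1 ≤ n → M n * E = E := by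
    intro n hn
    have hn0 : (n : 𝕜) ≠ 0 := Nat.cast_ne_zero.mpr (by omega)
    rw [hMdef]
    rw [smul_mul_assoc, hS]
    rw [Finset.sum_mul]
    rw [Finset.sum_congr rfl (fun k hk => hTkE k (Finset.mem_Icc.mp hk).1)]
    rw [Finset.sum_const, Nat.card_Icc]
    simp only [Nat.add_sub_cancel]
    rw [← Nat.cast_smul_eq_nsmul 𝕜, smul_smul, inv_mul_cancel₀ hn0, one_smul]
  have hEM : ∀ n : ℕ, 1 ≤ n → E * M n = E := by
    intro n hn
    have hn0 : (n : 𝕜) ≠ 0 := Nat.cast_ne_zero.mpr (by omega)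
    rw [hMdef]
    rw [mul_smul_comm, hS]
    rw [Finset.mul_sum]
    rw [Finset.sum_congr rfl (fun k hk => hETk k (Finset.mem_Icc.mp hk).1)]
    rw [Finset.sum_const, Nat.card_Icc]
    simp only [Nat.add_sub_cancel]
    rw [← Nat.cast_smul_eq_nsmul 𝕜, smul_smul, inv_mul_cancel₀ hn0, one_smul]
  have hEE : E * E = E := by
    have h1 : Tendsto (fun n : ℕ => E * M n) atTop (𝓝 (E * E)) := h.const_mul E
    have h2 : Tendsto (fun n : ℕ => E * M n) atTop (𝓝 E) := by
      refine (tendsto_const_nhds : Tendsto (fun _ : ℕ => E) atTop (𝓝 E)).congr' ?_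
      filter_upwards [eventually_ge_atTop 1] with n hn
      exact (hEM n hn).symm
    exact tendsto_nhds_unique h1 h2
  -- choose N with ‖M N - E‖ < 1
  obtain ⟨N0, hN0⟩ := Metric.tendsto_atTop.mp h 1 one_pos
  set N : ℕ := max N0 1 with hNdef
  have hN1 : 1 ≤ N := le_max_right _ _
  have hNa : ‖M N - E‖ < 1 := by
    have := hN0 N (le_max_left _ _)
    rwa [dist_eq_norm] at this
  set w : (X →L[𝕜] X)ˣ := Units.oneSub (M N - E) hNa with hw
  have hwval : (w : X →L[𝕜] X) = 1 - (M N - E) := rfl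
  set Q : X →L[𝕜] X := (N : 𝕜)⁻¹ • ∑ k ∈ Finset.Icc 1 N, ∑ j ∈ Finset.range k, T ^ j with hQdef
  have hQ : (1 - T) * Q = 1 - M N := by
    have hN0' : (N : 𝕜) ≠ 0 := Nat.cast_ne_zero.mpr (by omega)
    rw [hQdef, mul_smul_comm, Finset.mul_sum]
    have : ∀ k ∈ Finset.Icc 1 N, (1 - T) * ∑ j ∈ Finset.range k, T ^ j = 1 - T ^ k := by
      intro k _
      have := mul_geom_sum T k
      calc (1 - T) * ∑ j ∈ Finset.range k, T ^ j
          = -((T - 1) * ∑ j ∈ Finset.range k, T ^ j) := by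
            rw [← neg_sub T 1, neg_mul]
        _ = -(T ^ k - 1) := by rw [this]
        _ = 1 - T ^ k := by rw [neg_sub]
    rw [Finset.sum_congr rfl this, Finset.sum_sub_distrib]
    rw [Finset.sum_const, Nat.card_Icc]
    simp only [Nat.add_sub_cancel]
    rw [smul_sub, ← Nat.cast_smul_eq_nsmul 𝕜, smul_smul, inv_mul_cancel₀ hN0', one_smul, hMdef, hS]
  have hEw : E * ↑w⁻¹ = E := by
    have h1 : E * (w : X →L[𝕜] X) = E := by
      rw [hwval, mul_sub, mul_one, mul_sub, hEM N hN1, hEE, sub_sub_cancel]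
    calc E * ↑w⁻¹ = (E * ↑w) * ↑w⁻¹ := by rw [h1]
      _ = E * (↑w * ↑w⁻¹) := by rw [mul_assoc]
      _ = E := by rw [w.mul_inv, mul_one]
  have hker : E * (1 - T) = 0 := by
    rw [mul_sub, mul_one, hET, sub_self]
  -- range (1-T) = ker E
  have hrange : Set.range ⇑(1 - T) = ⇑E ⁻¹' {0} := by
    ext y
    constructor
    · rintro ⟨x, rfl⟩
      have : E ((1 - T) x) = (E * (1 - T)) x := rfl
      simp only [Set.mem_preimage, Set.mem_singleton_iff, this, hker,
        ContinuousLinearMap.zero_apply]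
    · intro hy
      have hy0 : E y = 0 := hy
      refine ⟨Q ((↑w⁻¹ : X →L[𝕜] X) y), ?_⟩
      have e1 : (1 - T) (Q ((↑w⁻¹ : X →L[𝕜] X) y)) = (((1 - T) * Q) * ↑w⁻¹) y := rfl
      rw [e1, hQ]
      have e2 : (1 : X →L[𝕜] X) - M N = (w : X →L[𝕜] X) - E := by
        rw [hwval]; abel
      rw [e2, sub_mul, w.mul_inv, hEw]
      simp [hy0]
  rw [hrange]
  exact IsClosed.preimage E.continuous isClosed_singleton
end

section
/- If T is a bounded linear operator on a Banach space with ‖M_n(T)‖ → 0 (where M_n(T) = (1/n)∑_{k=1}^n T^k), then I - T is invertible. -/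
open Filter Topology Finset

/-!
Summing `1 - T ^ k = (1 - T) ∑_{j<k} T ^ j` over `k = 1, …, n` gives `1 - M_n(T) = (1 - T) C_n`
with `C_n` a polynomial in `T`, so commuting with `1 - T`. Once `‖M_n(T)‖ < 1`, the Neumann series
makes `1 - M_n(T)` invertible, and a factor of a unit that commutes with its cofactor is a unit.
-/

theorem one_sub_mul_sum_Icc_geom_sum {R : Type*} [Ring R] (a : R) (n : ℕ) :
    (1 - a) * ∑ k ∈ Icc 1 n, ∑ j ∈ range k, a ^ j = n - ∑ k ∈ Icc 1 n, a ^ k := by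
  rw [mul_sum]
  simp only [mul_neg_geom_sum, sum_sub_distrib, sum_const, Nat.card_Icc, add_tsub_cancel_right,
    nsmul_eq_mul, mul_one]

section Cesaro

variable (𝕜 : Type*) {A : Type*} [Field 𝕜] [CharZero 𝕜] [Ring A] [Algebra 𝕜 A]

def cesaroMean (a : A) (n : ℕ) : A :=
  (n : 𝕜)⁻¹ • ∑ k ∈ Icc 1 n, a ^ k

variable {𝕜}

theorem isUnit_one_sub_of_isUnit_one_sub_cesaroMean {a : A} {n : ℕ} (hn : n ≠ 0)
    (h : IsUnit (1 - cesaroMean 𝕜 a n)) : IsUnit (1 - a) := by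
  set C : A := (n : 𝕜)⁻¹ • ∑ k ∈ Icc 1 n, ∑ j ∈ range k, a ^ j
  have hfactor : (1 - a) * C = 1 - cesaroMean 𝕜 a n := by
    have hn' : (n : 𝕜)⁻¹ • (n : A) = 1 := by
      rw [← map_natCast (algebraMap 𝕜 A), Algebra.smul_def, ← map_mul,
        inv_mul_cancel₀ (Nat.cast_ne_zero.mpr hn), map_one]
    rw [mul_smul_comm, one_sub_mul_sum_Icc_geom_sum, smul_sub, hn', cesaroMean]
  have hcomm : Commute (1 - a) C :=
    .smul_right (.sum_right _ _ _ fun _ _ => .sum_right _ _ _ fun j _ =>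
      (Commute.one_left _).sub_left (Commute.self_pow a j)) _
  exact (hcomm.isUnit_mul_iff.mp (hfactor ▸ h)).1

end Cesaro

/-- If `‖M_n(T)‖ → 0`, where `M_n(T) = (1/n) ∑_{k=1}^n T^k`, then `I - T` is invertible. -/
theorem isUnit_one_sub_of_norm_cesaro_tendsto_zero {𝕜 : Type*} [RCLike 𝕜]
    {X : Type*} [NormedAddCommGroup X] [NormedSpace 𝕜 X] [CompleteSpace X]
    (T : X →L[𝕜] X)
    (h : Tendsto (fun n : ℕ => ‖(n : 𝕜)⁻¹ • ∑ k ∈ Finset.Icc 1 n, T ^ k‖) atTop (𝓝 0)) :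
    IsUnit (1 - T) := by
  obtain ⟨n, hn, hlt⟩ :=
    ((eventually_ne_atTop 0).and (h.eventually (gt_mem_nhds one_pos))).exists
  exact isUnit_one_sub_of_isUnit_one_sub_cesaroMean (𝕜 := 𝕜) hn
    (isUnit_one_sub_of_norm_lt_one hlt)
end

section
/- Let T be a bounded linear operator on a Banach space X such that the one-sided ergodic Hilbert transform H_T x := lim_{n→∞} ∑_{k=1}^n T^k x / k exists for some x ∈ X. Then x lies in the closure of the range of I - T. -/
/-!
Write `b n = ∑_{k=1}^n T^k x / k`. Abel summation gives
`(1/n) ∑_{k=1}^n T^k x = b n - (1/n) ∑_{m<n} b m`, so convergence of `b` and of its Cesàro means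
to the same limit forces the Cesàro means of `T^k x` to vanish (Kronecker's lemma). On the other
hand `x - (1/n) ∑_{k=1}^n T^k x = (I - T) ((1/n) ∑_{k=1}^n ∑_{i<k} T^i x)`, since
`(I - T) ∑_{i<k} T^i = I - T^k`; so `x` is a limit of points of the range of `I - T`.
-/

open Filter Topology Finset

theorem sum_Icc_eq_natCast_smul_sub_sum_range {𝕜 E : Type*} [Field 𝕜] [CharZero 𝕜]
    [AddCommGroup E] [Module 𝕜 E] (a : ℕ → E) (n : ℕ) :
    ∑ k ∈ Icc 1 n, a k = (n : 𝕜) • ∑ k ∈ Icc 1 n, (k : 𝕜)⁻¹ • a k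
      - ∑ m ∈ range n, ∑ k ∈ Icc 1 m, (k : 𝕜)⁻¹ • a k := by
  induction n with
  | zero => simp
  | succ n ih =>
    rw [sum_Icc_succ_top (by omega), ih, sum_Icc_succ_top (by omega), sum_range_succ,
      smul_add, smul_smul, mul_inv_cancel₀ (Nat.cast_ne_zero.mpr n.succ_ne_zero), one_smul]
    push_cast
    module

section

variable {𝕜 E : Type*} [RCLike 𝕜] [NormedAddCommGroup E] [NormedSpace 𝕜 E]

theorem Filter.Tendsto.rclike_cesaro_smul {u : ℕ → E} {l : E} (h : Tendsto u atTop (𝓝 l)) :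
    Tendsto (fun n : ℕ => (n : 𝕜)⁻¹ • ∑ i ∈ range n, u i) atTop (𝓝 l) := by
  let := NormedSpace.restrictScalars ℝ 𝕜 E
  convert h.cesaro_smul using 2 with n
  change _ = algebraMap ℝ 𝕜 (n : ℝ)⁻¹ • ∑ i ∈ range n, u i
  simp

theorem one_sub_apply_geom_sum (T : E →L[𝕜] E) (x : E) (k : ℕ) :
    (1 - T) (∑ i ∈ range k, (T ^ i) x) = x - (T ^ k) x := by
  simpa using congr($(mul_neg_geom_sum T k) x)

theorem tendsto_inv_smul_sum_Icc_of_tendsto_sum_Icc_inv_smul {a : ℕ → E} {y : E}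
    (h : Tendsto (fun n : ℕ => ∑ k ∈ Icc 1 n, (k : 𝕜)⁻¹ • a k) atTop (𝓝 y)) :
    Tendsto (fun n : ℕ => (n : 𝕜)⁻¹ • ∑ k ∈ Icc 1 n, a k) atTop (𝓝 0) := by
  have hlim := h.sub (h.rclike_cesaro_smul (𝕜 := 𝕜))
  rw [sub_self] at hlim
  refine hlim.congr' ?_
  filter_upwards [eventually_ne_atTop 0] with n hn
  rw [sum_Icc_eq_natCast_smul_sub_sum_range (𝕜 := 𝕜) a, smul_sub, smul_smul,
    inv_mul_cancel₀ (Nat.cast_ne_zero.mpr hn), one_smul]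

theorem sub_inv_smul_sum_Icc_pow_apply_mem_range (T : E →L[𝕜] E) (x : E) {n : ℕ} (hn : n ≠ 0) :
    x - (n : 𝕜)⁻¹ • ∑ k ∈ Icc 1 n, (T ^ k) x ∈ Set.range ⇑(1 - T) := by
  refine ⟨(n : 𝕜)⁻¹ • ∑ k ∈ Icc 1 n, ∑ i ∈ range k, (T ^ i) x, ?_⟩
  have hn' : (n : 𝕜) ≠ 0 := Nat.cast_ne_zero.mpr hn
  rw [map_smul, map_sum]
  simp only [one_sub_apply_geom_sum]
  rw [sum_sub_distrib, sum_const, Nat.card_Icc, Nat.add_sub_cancel, smul_sub,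
    ← Nat.cast_smul_eq_nsmul 𝕜, smul_smul, inv_mul_cancel₀ hn', one_smul]

theorem mem_closure_range_one_sub_of_tendsto_inv_smul_sum_Icc_pow_apply (T : E →L[𝕜] E) (x : E)
    (h : Tendsto (fun n : ℕ => (n : 𝕜)⁻¹ • ∑ k ∈ Icc 1 n, (T ^ k) x) atTop (𝓝 0)) :
    x ∈ closure (Set.range ⇑(1 - T)) :=
  mem_closure_of_tendsto (by simpa using tendsto_const_nhds.sub h) <|
    (eventually_ne_atTop 0).mono fun _ hn => sub_inv_smul_sum_Icc_pow_apply_mem_range T x hn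

end

theorem mem_closure_range_of_hilbert_transform_converges_general {𝕜 : Type*} [RCLike 𝕜]
    {X : Type*} [NormedAddCommGroup X] [NormedSpace 𝕜 X]
    (T : X →L[𝕜] X) (x : X)
    (h : ∃ y : X, Tendsto (fun n : ℕ => ∑ k ∈ Finset.Icc 1 n, (k : 𝕜)⁻¹ • (T ^ k) x)
      atTop (𝓝 y)) :
    x ∈ closure (Set.range ⇑(1 - T)) := by
  obtain ⟨y, hy⟩ := h
  exact mem_closure_range_one_sub_of_tendsto_inv_smul_sum_Icc_pow_apply T x
    (tendsto_inv_smul_sum_Icc_of_tendsto_sum_Icc_inv_smul hy)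

/-- If the one-sided ergodic Hilbert transform `∑_{k=1}^∞ T^k x / k` converges for some `x`,
then `x` lies in the closure of the range of `I - T`. -/
theorem mem_closure_range_of_hilbert_transform_converges {𝕜 : Type*} [RCLike 𝕜]
    {X : Type*} [NormedAddCommGroup X] [NormedSpace 𝕜 X] [CompleteSpace X]
    (T : X →L[𝕜] X) (x : X)
    (h : ∃ y : X, Tendsto (fun n : ℕ => ∑ k ∈ Finset.Icc 1 n, (k : 𝕜)⁻¹ • (T ^ k) x)
      atTop (𝓝 y)) :
    x ∈ closure (Set.range ⇑(1 - T)) :=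
  mem_closure_range_of_hilbert_transform_converges_general T x h
end

section
/- Let T be a bounded linear operator on a Banach space with sup_n ‖M_n(T)‖ < ∞ and T^n x / n → 0 for every x. Then for every x in (I-T)X, the series ∑_{k=1}^∞ T^k x / k converges, i.e. (I-T)X ⊆ D(H). -/
open Filter Topology

/-- If `sup_n ‖M_n(T)‖ < ∞` and `T^n x / n → 0` for every `x`, then for every `x ∈ (I-T)X`
the one-sided ergodic Hilbert transform `∑_{k=1}^∞ T^k x / k` converges. -/
theorem range_subset_domain_hilbert_transform {𝕜 : Type*} [RCLike 𝕜]
    {X : Type*} [NormedAddCommGroup X] [NormedSpace 𝕜 X] [CompleteSpace X]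
    (T : X →L[𝕜] X)
    (hbdd : ∃ C : ℝ, ∀ n : ℕ, ‖(n : 𝕜)⁻¹ • ∑ k ∈ Finset.Icc 1 n, T ^ k‖ ≤ C)
    (hpow : ∀ x : X, Tendsto (fun n : ℕ => (n : 𝕜)⁻¹ • (T ^ n) x) atTop (𝓝 0)) :
    ∀ x ∈ Set.range ⇑(1 - T),
      ∃ y : X, Tendsto (fun n : ℕ => ∑ k ∈ Finset.Icc 1 n, (k : 𝕜)⁻¹ • (T ^ k) x)
        atTop (𝓝 y) := by
  obtain ⟨C, hC⟩ := hbdd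
  have hC0 : 0 ≤ C := le_trans (norm_nonneg _) (hC 1)
  rintro x ⟨y, rfl⟩
  set S : ℕ → X := fun k => ∑ j ∈ Finset.Icc 1 k, (T ^ j) y with hSdef
  set a : ℕ → 𝕜 := fun k => ((k : 𝕜) * ((k : 𝕜) - 1))⁻¹ with hadef
  -- pointwise expansion of T^k x
  have hTk : ∀ k : ℕ, (T ^ k) ((1 - T) y) = (T ^ k) y - (T ^ (k+1)) y := by
    intro k
    have : (1 - T) y = y - T y := by simp
    rw [this, map_sub, pow_succ, ContinuousLinearMap.mul_apply]
  -- bound on S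
  have hSb : ∀ n : ℕ, ‖S n‖ ≤ n * C * ‖y‖ := by
    intro n
    rcases Nat.eq_zero_or_pos n with rfl | hn
    · simp [hSdef]
    · have hn0 : (n : 𝕜) ≠ 0 := Nat.cast_ne_zero.mpr hn.ne'
      have : S n = ((∑ k ∈ Finset.Icc 1 n, T ^ k) : X →L[𝕜] X) y := by
        simp [hSdef, ContinuousLinearMap.sum_apply]
      rw [this]
      calc ‖(∑ k ∈ Finset.Icc 1 n, T ^ k) y‖
          ≤ ‖(∑ k ∈ Finset.Icc 1 n, T ^ k : X →L[𝕜] X)‖ * ‖y‖ :=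
            ContinuousLinearMap.le_opNorm _ _
        _ ≤ (n * C) * ‖y‖ := by
            refine mul_le_mul_of_nonneg_right ?_ (norm_nonneg _)
            have heq : (∑ k ∈ Finset.Icc 1 n, T ^ k : X →L[𝕜] X)
                = (n : 𝕜) • ((n : 𝕜)⁻¹ • ∑ k ∈ Finset.Icc 1 n, T ^ k) := by
              rw [smul_smul, mul_inv_cancel₀ hn0, one_smul]
            calc ‖(∑ k ∈ Finset.Icc 1 n, T ^ k : X →L[𝕜] X)‖
                ≤ ‖(n : 𝕜)‖ * ‖(n : 𝕜)⁻¹ • ∑ k ∈ Finset.Icc 1 n, T ^ k‖ := by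
                  conv_lhs => rw [heq]
                  exact norm_smul_le (n : 𝕜) ((n : 𝕜)⁻¹ • ∑ k ∈ Finset.Icc 1 n, T ^ k : X →L[𝕜] X)
              _ ≤ n * C := by
                  rw [RCLike.norm_natCast]
                  exact mul_le_mul_of_nonneg_left (hC n) (Nat.cast_nonneg n)
  -- the key finite identity
  have key : ∀ n : ℕ, 2 ≤ n →
      ∑ k ∈ Finset.Icc 1 n, (k : 𝕜)⁻¹ • (T ^ k) ((1 - T) y)
        = T y - (n : 𝕜)⁻¹ • (T ^ (n+1)) y - a n • S n + a 2 • S 1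
          - ∑ k ∈ Finset.Icc 2 (n-1), (a k - a (k+1)) • S k := by
    intro n hn
    induction n, hn using Nat.le_induction with
    | base =>
        have h12 : Finset.Icc 1 2 = {1, 2} := by decide
        have h12' : Finset.Icc 1 2 = {1, 2} := h12
        have hS1 : S 1 = T y := by simp [hSdef]
        have hS2 : S 2 = T y + (T ^ 2) y := by
          have : Finset.Icc 1 2 = {1, 2} := by decide
          simp [hSdef, this, Finset.sum_insert, pow_one]
        rw [h12]
        simp only [Finset.sum_insert, Finset.mem_singleton, Finset.sum_singleton,
          hTk, hS1, hS2, hadef]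
        norm_num
        module
    | succ n hn ih =>
        have hn0 : (n : 𝕜) ≠ 0 := Nat.cast_ne_zero.mpr (by omega)
        have hn1 : (n : 𝕜) + 1 ≠ 0 := by
          have : ((n+1 : ℕ) : 𝕜) ≠ 0 := Nat.cast_ne_zero.mpr (by omega)
          push_cast at this; exact this
        obtain ⟨m, rfl⟩ : ∃ m, n = m + 2 := ⟨n - 2, by omega⟩
        rw [Finset.sum_Icc_succ_top (by omega : 1 ≤ m + 2 + 1), ih]
        have hIcc : Finset.Icc 2 (m + 2 + 1 - 1) = Finset.Icc 2 (m + 1 + 1) := by norm_num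
        rw [hIcc, Finset.sum_Icc_succ_top (by omega : 2 ≤ m + 1 + 1)]
        have h1 : m + 2 - 1 = m + 1 := by omega
        rw [h1, hTk]
        have hS3 : S (m + 2 + 1) = S (m + 2) + (T ^ (m + 3)) y := by
          rw [hSdef]; exact Finset.sum_Icc_succ_top (by omega) _
        rw [hS3, hadef]
        push_cast
        have hm1 : (m:𝕜) + 1 ≠ 0 := by
          have : ((m+1:ℕ):𝕜) ≠ 0 := Nat.cast_ne_zero.mpr (by omega)
          push_cast at this; exact this
        have hm2 : (m:𝕜) + 2 ≠ 0 := by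
          have : ((m+2:ℕ):𝕜) ≠ 0 := Nat.cast_ne_zero.mpr (by omega)
          push_cast at this; exact this
        have hm3 : (m:𝕜) + 3 ≠ 0 := by
          have : ((m+3:ℕ):𝕜) ≠ 0 := Nat.cast_ne_zero.mpr (by omega)
          push_cast at this; exact this
        simp only [show m+2+1 = m+3 from rfl, show m+1+1 = m+2 from rfl,
          show m+2+1+1 = m+4 from rfl]
        have h65 : (6:𝕜) + (m:𝕜)*5 + (m:𝕜)^2 ≠ 0 := fun h =>
          (mul_ne_zero hm2 hm3) (by linear_combination h)
        have hm3' : (3:𝕜) + (m:𝕜) ≠ 0 := fun h => hm3 (by linear_combination h)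
        have hm2' : (2:𝕜) + (m:𝕜) ≠ 0 := fun h => hm2 (by linear_combination h)
        match_scalars <;> (try ring) <;> field_simp <;> ring
  -- norm of a k
  have hanorm : ∀ k : ℕ, 1 ≤ k → ‖a k‖ = (((k - 1) * k : ℕ) : ℝ)⁻¹ := by
    intro k hk
    obtain ⟨j, rfl⟩ : ∃ j, k = j + 1 := ⟨k - 1, by omega⟩
    have : a (j+1) = (((j * (j+1) : ℕ) : 𝕜))⁻¹ := by
      rw [hadef]; push_cast; ring_nf
    rw [this, norm_inv, RCLike.norm_natCast]
    norm_num [Nat.mul_comm]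
  -- the difference a k - a (k+1)
  have hadiff : ∀ j : ℕ, a (j+2) - a (j+3)
      = 2 * ((((j+1) * (j+2) * (j+3) : ℕ)) : 𝕜)⁻¹ := by
    intro j
    have h1 : ((j:𝕜) + 1) ≠ 0 := by
      have : ((j+1:ℕ):𝕜) ≠ 0 := Nat.cast_ne_zero.mpr (by omega)
      push_cast at this; exact this
    have h2 : ((j:𝕜) + 2) ≠ 0 := by
      have : ((j+2:ℕ):𝕜) ≠ 0 := Nat.cast_ne_zero.mpr (by omega)
      push_cast at this; exact this
    have h3 : ((j:𝕜) + 3) ≠ 0 := by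
      have : ((j+3:ℕ):𝕜) ≠ 0 := Nat.cast_ne_zero.mpr (by omega)
      push_cast at this; exact this
    have hA : (2:𝕜) + (j:𝕜)*3 + (j:𝕜)^2 ≠ 0 := fun h =>
      (mul_ne_zero h1 h2) (by linear_combination h)
    have hB : (6:𝕜) + (j:𝕜)*5 + (j:𝕜)^2 ≠ 0 := fun h =>
      (mul_ne_zero h2 h3) (by linear_combination h)
    rw [hadef]
    push_cast
    rw [inv_sub_inv (by intro h; exact mul_ne_zero h2 h1 (by linear_combination h))
        (by intro h; exact mul_ne_zero h3 h2 (by linear_combination h))]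
    rw [div_eq_iff (fun h => mul_ne_zero (mul_ne_zero h2 h1) (mul_ne_zero h3 h2)
          (by linear_combination h)),
        inv_eq_one_div, ← mul_div_assoc, mul_one,
        div_mul_eq_mul_div, eq_comm, div_eq_iff
          (fun h => mul_ne_zero (mul_ne_zero h1 h2) h3 (by linear_combination h))]
    ring
  -- summability of the series of h k = (a k - a (k+1)) • S k
  set h : ℕ → X := fun k => (a k - a (k+1)) • S k with hhdef
  have hsum : Summable h := by
    apply Summable.of_norm_bounded_eventually_nat (g := fun k => (4 * C * ‖y‖) * ((k:ℝ)^2)⁻¹)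
    · apply Summable.mul_left
      exact Real.summable_nat_pow_inv.mpr one_lt_two
    · filter_upwards [eventually_ge_atTop 2] with k hk
      obtain ⟨j, rfl⟩ : ∃ j, k = j + 2 := ⟨k - 2, by omega⟩
      rw [hhdef]
      have hnn : ‖a (j+2) - a (j+2+1)‖ = 2 * ((((j+1) * (j+2) * (j+3) : ℕ)) : ℝ)⁻¹ := by
        rw [show j+2+1 = j+3 from rfl, hadiff j, norm_mul, norm_inv, RCLike.norm_natCast]
        norm_num
      have hd : (0:ℝ) < (((j+1) * (j+2) * (j+3) : ℕ) : ℝ) := by positivity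
      have hk2 : (0:ℝ) < ((j+2:ℕ):ℝ)^2 := by positivity
      calc ‖(a (j+2) - a (j+2+1)) • S (j+2)‖
          = ‖a (j+2) - a (j+2+1)‖ * ‖S (j+2)‖ := norm_smul _ _
        _ ≤ (2 * ((((j+1) * (j+2) * (j+3) : ℕ)) : ℝ)⁻¹) * (((j+2 : ℕ):ℝ) * C * ‖y‖) := by
            rw [hnn]
            exact mul_le_mul_of_nonneg_left (hSb (j+2)) (by positivity)
        _ = (2 * ((j+2:ℕ):ℝ) / (((j+1) * (j+2) * (j+3) : ℕ) : ℝ)) * (C * ‖y‖) := by ring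
        _ ≤ (4 / ((j+2:ℕ):ℝ)^2) * (C * ‖y‖) := by
            apply mul_le_mul_of_nonneg_right _ (by positivity)
            rw [div_le_div_iff₀ hd hk2]
            push_cast
            nlinarith [Nat.cast_nonneg (α := ℝ) j]
        _ = (4 * C * ‖y‖) * (((j+2:ℕ):ℝ)^2)⁻¹ := by ring
  -- assemble the limits
  obtain ⟨L, hL⟩ := hsum
  have hLt : Tendsto (fun n => ∑ k ∈ Finset.range n, h k) atTop (𝓝 L) :=
    hL.tendsto_sum_nat
  have t2 : Tendsto (fun n : ℕ => (n:𝕜)⁻¹ • (T ^ (n+1)) y) atTop (𝓝 0) := by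
    simpa only [pow_succ, ContinuousLinearMap.mul_apply] using hpow (T y)
  have t3 : Tendsto (fun n : ℕ => a n • S n) atTop (𝓝 0) := by
    apply squeeze_zero_norm' (a := fun n : ℕ => C * ‖y‖ * (((n-1:ℕ)):ℝ)⁻¹)
    · filter_upwards [eventually_ge_atTop 2] with n hn
      obtain ⟨m, rfl⟩ : ∃ m, n = m + 2 := ⟨n - 2, by omega⟩
      have hm1 : (0:ℝ) < (m:ℝ) + 1 := by positivity
      have hm2 : (0:ℝ) < (m:ℝ) + 2 := by positivity
      calc ‖a (m+2) • S (m+2)‖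
          = ((((m+2) - 1) * (m+2) : ℕ):ℝ)⁻¹ * ‖S (m+2)‖ := by
            rw [norm_smul, hanorm (m+2) (by omega)]
        _ ≤ ((((m+2) - 1) * (m+2) : ℕ):ℝ)⁻¹ * (((m+2:ℕ):ℝ) * C * ‖y‖) := by
            exact mul_le_mul_of_nonneg_left (hSb (m+2)) (by positivity)
        _ = C * ‖y‖ * ((((m+2) - 1 : ℕ)):ℝ)⁻¹ := by
            have : (m + 2) - 1 = m + 1 := by omega
            rw [this]
            push_cast
            field_simp
    · have h1 : Tendsto (fun n : ℕ => ((n-1:ℕ):ℝ)⁻¹) atTop (𝓝 0) :=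
        tendsto_inv_atTop_zero.comp
          (tendsto_natCast_atTop_atTop.comp (tendsto_sub_atTop_nat 1))
      simpa using h1.const_mul (C * ‖y‖)
  have t4 : Tendsto (fun n : ℕ => ∑ k ∈ Finset.Icc 2 (n-1), h k) atTop
      (𝓝 (L - (h 0 + h 1))) := by
    have e1 : Tendsto (fun n : ℕ => (∑ k ∈ Finset.range n, h k) - (h 0 + h 1)) atTop
        (𝓝 (L - (h 0 + h 1))) := hLt.sub_const _
    apply e1.congr'
    filter_upwards [eventually_ge_atTop 2] with n hn
    have hIco : Finset.Icc 2 (n-1) = Finset.Ico 2 n := by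
      rw [← Finset.Ico_add_one_right_eq_Icc]
      congr 1
      omega
    rw [hIco, Finset.sum_Ico_eq_sub _ hn]
    congr 1
    simp [Finset.sum_range_succ]
  have tF : Tendsto (fun n : ℕ => T y - (n:𝕜)⁻¹ • (T ^ (n+1)) y - a n • S n + a 2 • S 1
      - ∑ k ∈ Finset.Icc 2 (n-1), h k) atTop
      (𝓝 (T y - 0 - 0 + a 2 • S 1 - (L - (h 0 + h 1)))) :=
    ((((tendsto_const_nhds.sub t2).sub t3).add tendsto_const_nhds).sub t4)
  refine ⟨_, tF.congr' ?_⟩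
  filter_upwards [eventually_ge_atTop 2] with n hn
  exact (key n hn).symm
end

section
/- Let T be a bounded linear operator on a Banach space with ‖T^n‖/n → 0 and such that sup_n ‖∑_{k=1}^n T^k x / k‖ < ∞ for every x in the closure of (I-T)X. Then T is uniformly ergodic (the averages M_n(T) converge in operator norm). -/
open Filter Topology Finset

section aux
variable {𝕜 : Type*} [RCLike 𝕜] {X : Type*} [NormedAddCommGroup X] [NormedSpace 𝕜 X]

lemma sum_Icc_one' {M : Type*} [AddCommMonoid M] (f : ℕ → M) (n : ℕ) :
    ∑ k ∈ Finset.Icc 1 n, f k = ∑ i ∈ Finset.range n, f (i + 1) := by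
  rw [← Finset.Ico_add_one_right_eq_Icc, Finset.sum_Ico_eq_sum_range]
  simp [add_comm]

lemma telescope' {M : Type*} [AddCommGroup M] (g : ℕ → M) (n : ℕ) :
    ∑ k ∈ Finset.Icc 1 n, (g k - g (k + 1)) = g 1 - g (n + 1) := by
  rw [sum_Icc_one' (fun k => g k - g (k+1))]
  exact Finset.sum_range_sub' (fun i => g (i + 1)) n

lemma one_sub_pow (T : X →L[𝕜] X) (k : ℕ) :
    (1 : X →L[𝕜] X) - T ^ k = (∑ i ∈ Finset.range k, T ^ i) * (1 - T) := by
  have h := geom_sum_mul T k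
  have h2 : (∑ i ∈ Finset.range k, T ^ i) * (1 - T)
      = -((∑ i ∈ Finset.range k, T ^ i) * (T - 1)) := by rw [← mul_neg, neg_sub]
  rw [h2, h, neg_sub]

lemma sub_pow_apply (T : X →L[𝕜] X) (k : ℕ) (x : X) :
    x - (T ^ k) x = ∑ i ∈ Finset.range k, (T ^ i) (x - T x) := by
  have h := congrArg (fun L : X →L[𝕜] X => L x) (one_sub_pow T k)
  simpa [ContinuousLinearMap.mul_apply, ContinuousLinearMap.sub_apply,
    ContinuousLinearMap.coe_sum', Finset.sum_apply] using h
end aux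

set_option maxHeartbeats 1600000 in
/-- If `‖T^n‖/n → 0` and the partial sums of the one-sided ergodic Hilbert transform are
bounded for every `x` in the closure of `(I-T)X`, then `T` is uniformly ergodic. -/
theorem uniformly_ergodic_of_bounded_hilbert_sums {𝕜 : Type*} [RCLike 𝕜]
    {X : Type*} [NormedAddCommGroup X] [NormedSpace 𝕜 X] [CompleteSpace X]
    (T : X →L[𝕜] X)
    (hpow : Tendsto (fun n : ℕ => ‖T ^ n‖ / (n : ℝ)) atTop (𝓝 0))
    (hbdd : ∀ x ∈ closure (Set.range ⇑(1 - T)),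
      ∃ C : ℝ, ∀ n : ℕ, ‖∑ k ∈ Finset.Icc 1 n, (k : 𝕜)⁻¹ • (T ^ k) x‖ ≤ C) :
    ∃ E : X →L[𝕜] X,
      Tendsto (fun n : ℕ => (n : 𝕜)⁻¹ • ∑ k ∈ Finset.Icc 1 n, T ^ k) atTop (𝓝 E) := by
  classical
  -- the closed subspace Y = closure((1-T)X)
  set Y : Submodule 𝕜 X := (LinearMap.range ((1 - T : X →L[𝕜] X) : X →ₗ[𝕜] X)).topologicalClosure with hYdef
  have hYclosed : IsClosed (Y : Set X) := Submodule.isClosed_topologicalClosure _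
  have hYset : closure (Set.range ⇑(1 - T)) = (Y : Set X) := by
    rw [hYdef, Submodule.topologicalClosure_coe, LinearMap.coe_range, ContinuousLinearMap.coe_coe]
  have hsubY : ∀ x : X, x - T x ∈ Y := by
    intro x
    apply Submodule.le_topologicalClosure
    exact LinearMap.mem_range.mpr ⟨x, by simp⟩
  have hTY : ∀ x ∈ Y, T x ∈ Y := by
    intro x hx
    have hmaps : Set.MapsTo ⇑T (Set.range ⇑(1 - T)) (Set.range ⇑(1 - T)) := by
      rintro _ ⟨z, rfl⟩
      exact ⟨T z, by simp [map_sub]⟩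
    have h2 := hmaps.closure T.continuous
    have hx' : x ∈ closure (Set.range ⇑(1 - T)) := by rw [hYset]; exact hx
    have h3 := h2 hx'
    rwa [hYset] at h3
  have hTkY : ∀ (k : ℕ) (x : X), x ∈ Y → (T ^ k) x ∈ Y := by
    intro k
    induction k with
    | zero => intro x hx; simpa using hx
    | succ k ih =>
      intro x hx
      rw [pow_succ']
      simpa [ContinuousLinearMap.mul_apply] using hTY _ (ih x hx)
  have hxkY : ∀ (k : ℕ) (x : X), x - (T ^ k) x ∈ Y := by
    intro k x
    rw [sub_pow_apply T k x]
    exact Submodule.sum_mem _ fun i _ => hTkY i _ (hsubY x)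
  haveI : CompleteSpace Y := hYclosed.completeSpace_coe
  -- uniform boundedness
  obtain ⟨C, hC⟩ : ∃ C : ℝ, ∀ (n : ℕ) (y : Y),
      ‖∑ k ∈ Finset.Icc 1 n, (k : 𝕜)⁻¹ • (T ^ k) (y : X)‖ ≤ C * ‖(y : X)‖ := by
    set g : ℕ → Y →L[𝕜] X :=
      fun n => (∑ k ∈ Finset.Icc 1 n, (k : 𝕜)⁻¹ • T ^ k).comp Y.subtypeL with hg
    have hgapp : ∀ (n : ℕ) (y : Y), g n y = ∑ k ∈ Finset.Icc 1 n, (k : 𝕜)⁻¹ • (T ^ k) (y : X) := by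
      intro n y
      simp [hg, ContinuousLinearMap.coe_sum', Finset.sum_apply]
    have hpt : ∀ y : Y, ∃ C, ∀ n, ‖g n y‖ ≤ C := by
      intro y
      obtain ⟨C, hC⟩ := hbdd (y : X) (by rw [hYset]; exact y.2)
      exact ⟨C, fun n => by rw [hgapp]; exact hC n⟩
    obtain ⟨C', hC'⟩ := banach_steinhaus hpt
    refine ⟨C', fun n y => ?_⟩
    rw [← hgapp]
    calc ‖g n y‖ ≤ ‖g n‖ * ‖y‖ := (g n).le_opNorm y
    _ ≤ C' * ‖y‖ := mul_le_mul_of_nonneg_right (hC' n) (norm_nonneg y)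
  -- the lower bound
  obtain ⟨c, hc, hlow⟩ : ∃ c : ℝ, 0 < c ∧ ∀ x ∈ Y, c * ‖x‖ ≤ ‖x - T x‖ := by
    -- harmonic sums diverge
    have hharm : Tendsto (fun n : ℕ => ∑ k ∈ Finset.Icc 1 n, (k : ℝ)⁻¹) atTop atTop := by
      have h := Real.tendsto_sum_range_one_div_nat_succ_atTop
      have heq : (fun n : ℕ => ∑ k ∈ Finset.Icc 1 n, (k : ℝ)⁻¹)
          = fun n : ℕ => ∑ i ∈ Finset.range n, 1 / ((i : ℝ) + 1) := by
        funext n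
        rw [sum_Icc_one' (fun k => (k : ℝ)⁻¹) n]
        exact Finset.sum_congr rfl fun i _ => by push_cast; rw [one_div]
      rw [heq]; exact h
    obtain ⟨n₀, hn₀⟩ := (hharm.eventually_ge_atTop (C + 1)).exists
    set H : ℝ := ∑ k ∈ Finset.Icc 1 n₀, (k : ℝ)⁻¹ with hH
    set D : ℝ := ∑ k ∈ Finset.Icc 1 n₀, (k : ℝ)⁻¹ * ∑ i ∈ Finset.range k, ‖T ^ i‖ with hD
    have hDnn : 0 ≤ D := Finset.sum_nonneg fun k _ => by positivity
    refine ⟨1 / (D + 1), by positivity, ?_⟩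
    intro x hx
    -- the identity  H • x = S + ∑ k⁻¹ • (x - T^k x)
    have hid : ((H : ℝ) : 𝕜) • x = (∑ k ∈ Finset.Icc 1 n₀, (k : 𝕜)⁻¹ • (T ^ k) x)
        + ∑ k ∈ Finset.Icc 1 n₀, (k : 𝕜)⁻¹ • (x - (T ^ k) x) := by
      rw [← Finset.sum_add_distrib]
      have h1 : ∀ k ∈ Finset.Icc 1 n₀,
          (k : 𝕜)⁻¹ • (T ^ k) x + (k : 𝕜)⁻¹ • (x - (T ^ k) x) = (k : 𝕜)⁻¹ • x := by
        intro k _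
        rw [← smul_add]
        congr 1
        abel
      rw [Finset.sum_congr rfl h1, ← Finset.sum_smul]
      congr 1
      rw [hH]
      push_cast
      ring
    have hnormH : ‖((H : ℝ) : 𝕜) • x‖ = H * ‖x‖ := by
      rw [norm_smul, RCLike.norm_ofReal, abs_of_nonneg]
      exact Finset.sum_nonneg fun k _ => by positivity
    have hterm : ∀ k ∈ Finset.Icc 1 n₀,
        ‖(k : 𝕜)⁻¹ • (x - (T ^ k) x)‖ ≤ ((k : ℝ)⁻¹ * ∑ i ∈ Finset.range k, ‖T ^ i‖) * ‖x - T x‖ := by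
      intro k _
      rw [norm_smul, norm_inv, RCLike.norm_natCast, mul_assoc]
      apply mul_le_mul_of_nonneg_left _ (by positivity)
      rw [sub_pow_apply T k x]
      calc ‖∑ i ∈ Finset.range k, (T ^ i) (x - T x)‖
          ≤ ∑ i ∈ Finset.range k, ‖(T ^ i) (x - T x)‖ := norm_sum_le _ _
        _ ≤ ∑ i ∈ Finset.range k, ‖T ^ i‖ * ‖x - T x‖ :=
            Finset.sum_le_sum fun i _ => (T ^ i).le_opNorm _
        _ = (∑ i ∈ Finset.range k, ‖T ^ i‖) * ‖x - T x‖ := by rw [Finset.sum_mul]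
    have hmain : H * ‖x‖ ≤ C * ‖x‖ + D * ‖x - T x‖ := by
      calc H * ‖x‖ = ‖((H : ℝ) : 𝕜) • x‖ := hnormH.symm
      _ ≤ ‖∑ k ∈ Finset.Icc 1 n₀, (k : 𝕜)⁻¹ • (T ^ k) x‖
          + ‖∑ k ∈ Finset.Icc 1 n₀, (k : 𝕜)⁻¹ • (x - (T ^ k) x)‖ := by
          rw [hid]; exact norm_add_le _ _
      _ ≤ C * ‖x‖ + D * ‖x - T x‖ := by
          apply add_le_add
          · exact hC n₀ ⟨x, hx⟩
          · calc ‖∑ k ∈ Finset.Icc 1 n₀, (k : 𝕜)⁻¹ • (x - (T ^ k) x)‖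
                ≤ ∑ k ∈ Finset.Icc 1 n₀, ‖(k : 𝕜)⁻¹ • (x - (T ^ k) x)‖ := norm_sum_le _ _
              _ ≤ ∑ k ∈ Finset.Icc 1 n₀, ((k : ℝ)⁻¹ * ∑ i ∈ Finset.range k, ‖T ^ i‖) * ‖x - T x‖ :=
                  Finset.sum_le_sum hterm
              _ = D * ‖x - T x‖ := by rw [hD, Finset.sum_mul]
    -- combine
    have hxnn : (0:ℝ) ≤ ‖x‖ := norm_nonneg x
    have hwnn : (0:ℝ) ≤ ‖x - T x‖ := norm_nonneg _
    have h2 : ‖x‖ ≤ (D + 1) * ‖x - T x‖ := by nlinarith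
    rw [div_mul_eq_mul_div, one_mul, div_le_iff₀ (by positivity)]
    nlinarith
  -- tendsto of the error factor
  have hphi : Tendsto (fun n : ℕ => (‖T‖ + ‖T ^ (n + 1)‖) / (n : ℝ)) atTop (𝓝 0) := by
    have h1 : Tendsto (fun n : ℕ => ‖T‖ / (n : ℝ)) atTop (𝓝 0) :=
      tendsto_const_div_atTop_nhds_zero_nat ‖T‖
    have h3 : Tendsto (fun n : ℕ => ‖T ^ (n + 1)‖ / ((n : ℝ) + 1)) atTop (𝓝 0) := by
      have h := hpow.comp (tendsto_add_atTop_nat 1)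
      have heq : (fun n : ℕ => ‖T ^ (n + 1)‖ / ((n : ℝ) + 1))
          = (fun n : ℕ => ‖T ^ n‖ / (n : ℝ)) ∘ (fun a => a + 1) := by
        funext n
        simp [Function.comp]
      rw [heq]; exact h
    have h2 : Tendsto (fun n : ℕ => ‖T ^ (n + 1)‖ / (n : ℝ)) atTop (𝓝 0) := by
      apply squeeze_zero' (g := fun n : ℕ => 2 * (‖T ^ (n + 1)‖ / ((n : ℝ) + 1)))
      · filter_upwards [eventually_ge_atTop 1] with n hn
        positivity
      · filter_upwards [eventually_ge_atTop 1] with n hn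
        have hn' : (1:ℝ) ≤ (n:ℝ) := by exact_mod_cast hn
        have hpos : (0:ℝ) < (n:ℝ) := by linarith
        have hpos1 : (0:ℝ) < (n:ℝ) + 1 := by linarith
        rw [div_le_iff₀ hpos]
        have hrw : 2 * (‖T ^ (n+1)‖ / ((n:ℝ) + 1)) * (n:ℝ)
            = ‖T ^ (n+1)‖ * (2 * (n:ℝ) / ((n:ℝ) + 1)) := by field_simp
        rw [hrw]
        apply le_mul_of_one_le_right (norm_nonneg _)
        rw [le_div_iff₀ hpos1]; linarith
      · simpa using h3.const_mul 2
    have h4 := h1.add h2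
    simpa [add_div] using h4
  -- the operator A = (1-T) restricted to Y
  have hAmem : ∀ y : Y, ((1 - T).comp Y.subtypeL) y ∈ Y := fun y => by
    simpa [ContinuousLinearMap.sub_apply] using hsubY (y : X)
  set A : Y →L[𝕜] Y := ContinuousLinearMap.codRestrict ((1 - T).comp Y.subtypeL) Y hAmem
    with hAdef
  have hA : ∀ y : Y, (A y : X) = (y : X) - T (y : X) := fun y => by
    simp [hAdef, ContinuousLinearMap.coe_codRestrict_apply]
  have hanti : ∀ y : Y, ‖y‖ ≤ c⁻¹ * ‖A y‖ := by
    intro y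
    have h1 := hlow (y : X) y.2
    rw [← hA y] at h1
    have h2 : ‖(y:X)‖ = ‖y‖ := rfl
    have h3 : ‖(A y : X)‖ = ‖A y‖ := rfl
    rw [h2, h3] at h1
    calc ‖y‖ = c⁻¹ * (c * ‖y‖) := by field_simp
    _ ≤ c⁻¹ * ‖A y‖ := by
        apply mul_le_mul_of_nonneg_left h1 (by positivity)
  have hantiLip : AntilipschitzWith (⟨c⁻¹, by positivity⟩ : NNReal) ⇑A :=
    AddMonoidHomClass.antilipschitz_of_bound A hanti
  have hker : LinearMap.ker (A : Y →ₗ[𝕜] Y) = ⊥ := LinearMap.ker_eq_bot.mpr hantiLip.injective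
  have hdense : DenseRange ⇑A := by
    rw [Metric.denseRange_iff]
    intro y ε hε
    have hy : (y : X) ∈ closure (Set.range ⇑(1 - T)) := by rw [hYset]; exact y.2
    rw [Metric.mem_closure_iff] at hy
    obtain ⟨b, ⟨x₀, rfl⟩, hb⟩ := hy (ε / 2) (by positivity)
    have hb' : ‖(y : X) - (x₀ - T x₀)‖ < ε / 2 := by
      rw [dist_eq_norm] at hb
      simpa [ContinuousLinearMap.sub_apply] using hb
    set δ : ℝ := ε / (2 * (‖x₀‖ + 1)) with hδdef
    have hδ : 0 < δ := by positivity
    obtain ⟨m, hm2, hm1⟩ :=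
      ((hphi.eventually_lt_const hδ).and (eventually_ge_atTop 1)).exists
    have hm0 : (0:ℝ) < (m:ℝ) := by exact_mod_cast hm1
    set u : X := x₀ - (m : 𝕜)⁻¹ • ∑ k ∈ Finset.Icc 1 m, (T ^ k) x₀ with hu
    have h1 : u = (m : 𝕜)⁻¹ • ∑ k ∈ Finset.Icc 1 m, (x₀ - (T ^ k) x₀) := by
      rw [Finset.sum_sub_distrib, smul_sub, Finset.sum_const, Nat.card_Icc,
        add_tsub_cancel_right, ← Nat.cast_smul_eq_nsmul 𝕜, smul_smul,
        inv_mul_cancel₀ (by exact_mod_cast hm0.ne' : (m:𝕜) ≠ 0), one_smul, hu]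
    have huY : u ∈ Y := by
      rw [h1]
      exact Submodule.smul_mem _ _ (Submodule.sum_mem _ fun k _ => hxkY k x₀)
    have hTu : u - T u = (x₀ - T x₀) - (m : 𝕜)⁻¹ • (T x₀ - (T ^ (m + 1)) x₀) := by
      have hTM : T ((m : 𝕜)⁻¹ • ∑ k ∈ Finset.Icc 1 m, (T ^ k) x₀)
          = (m : 𝕜)⁻¹ • ∑ k ∈ Finset.Icc 1 m, (T ^ (k + 1)) x₀ := by
        rw [map_smul, map_sum]
        congr 1
        exact Finset.sum_congr rfl fun k _ => by
          simp [pow_succ', ContinuousLinearMap.mul_apply]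
      have htel : (∑ k ∈ Finset.Icc 1 m, (T ^ k) x₀) - ∑ k ∈ Finset.Icc 1 m, (T ^ (k + 1)) x₀
          = T x₀ - (T ^ (m + 1)) x₀ := by
        rw [← Finset.sum_sub_distrib]
        have := telescope' (fun k => (T ^ k) x₀) m
        simpa [pow_one] using this
      rw [hu, map_sub, hTM, ← htel, smul_sub]
      abel
    refine ⟨⟨u, huY⟩, ?_⟩
    rw [Subtype.dist_eq, dist_eq_norm, hA ⟨u, huY⟩]
    have hnorm2 : ‖(m : 𝕜)⁻¹ • (T x₀ - (T ^ (m + 1)) x₀)‖ < ε / 2 := by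
      rw [norm_smul, norm_inv, RCLike.norm_natCast]
      have hb1 : ‖T x₀ - (T ^ (m + 1)) x₀‖ ≤ (‖T‖ + ‖T ^ (m + 1)‖) * ‖x₀‖ := by
        calc ‖T x₀ - (T ^ (m + 1)) x₀‖ ≤ ‖T x₀‖ + ‖(T ^ (m + 1)) x₀‖ := norm_sub_le _ _
        _ ≤ ‖T‖ * ‖x₀‖ + ‖T ^ (m + 1)‖ * ‖x₀‖ := add_le_add (T.le_opNorm _) ((T ^ (m+1)).le_opNorm _)
        _ = (‖T‖ + ‖T ^ (m + 1)‖) * ‖x₀‖ := by ring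
      calc (m:ℝ)⁻¹ * ‖T x₀ - (T ^ (m + 1)) x₀‖
          ≤ (m:ℝ)⁻¹ * ((‖T‖ + ‖T ^ (m + 1)‖) * ‖x₀‖) :=
            mul_le_mul_of_nonneg_left hb1 (by positivity)
        _ = ((‖T‖ + ‖T ^ (m + 1)‖) / (m:ℝ)) * ‖x₀‖ := by ring
        _ ≤ ((‖T‖ + ‖T ^ (m + 1)‖) / (m:ℝ)) * (‖x₀‖ + 1) := by
            apply mul_le_mul_of_nonneg_left (by linarith) (by positivity)
        _ < δ * (‖x₀‖ + 1) := by
            apply mul_lt_mul_of_pos_right hm2 (by positivity)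
        _ = ε / 2 := by rw [hδdef]; field_simp
    calc ‖(y : X) - (u - T u)‖
        = ‖((y : X) - (x₀ - T x₀)) + (m : 𝕜)⁻¹ • (T x₀ - (T ^ (m + 1)) x₀)‖ := by
          rw [hTu]; congr 1; abel
      _ ≤ ‖(y : X) - (x₀ - T x₀)‖ + ‖(m : 𝕜)⁻¹ • (T x₀ - (T ^ (m + 1)) x₀)‖ := norm_add_le _ _
      _ < ε / 2 + ε / 2 := add_lt_add hb' hnorm2
      _ = ε := by ring
  have hsurj : Function.Surjective ⇑A := by
    have hcl : IsClosed (Set.range ⇑A) := hantiLip.isClosed_range A.uniformContinuous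
    have : Set.range ⇑A = Set.univ := by
      rw [← hcl.closure_eq, hdense.closure_eq]
    exact Set.range_eq_univ.mp this
  have hrng : LinearMap.range (A : Y →ₗ[𝕜] Y) = ⊤ := LinearMap.range_eq_top.mpr hsurj
  let eqv : Y ≃L[𝕜] Y := ContinuousLinearEquiv.ofBijective A hker hrng
  let R : Y →L[𝕜] Y := (eqv.symm : Y →L[𝕜] Y)
  have hAR : ∀ y : Y, A (R y) = y := by
    intro y
    have := eqv.apply_symm_apply y
    simp only [eqv, R, ContinuousLinearEquiv.coe_ofBijective] at this ⊢
    exact this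
  -- the projection E
  have hBmem : ∀ x : X, (1 - T) x ∈ Y := fun x => by
    simpa [ContinuousLinearMap.sub_apply] using hsubY x
  set B : X →L[𝕜] Y := ContinuousLinearMap.codRestrict (1 - T) Y hBmem with hBdef
  set E : X →L[𝕜] X := ContinuousLinearMap.id 𝕜 X - Y.subtypeL.comp (R.comp B) with hEdef
  refine ⟨E, ?_⟩
  rw [tendsto_iff_norm_sub_tendsto_zero]
  have hB : ∀ x : X, (B x : X) = x - T x := fun x => by
    simp [hBdef, ContinuousLinearMap.coe_codRestrict_apply]
  have hbound : ∀ n : ℕ, 1 ≤ n →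
      ‖((n : 𝕜)⁻¹ • ∑ k ∈ Finset.Icc 1 n, T ^ k) - E‖
        ≤ (c⁻¹ * (c⁻¹ * ‖1 - T‖)) * ((‖T‖ + ‖T ^ (n + 1)‖) / (n : ℝ)) := by
    rw [hEdef]
    intro n hn
    have hn0 : (0:ℝ) < (n : ℝ) := by exact_mod_cast hn
    apply ContinuousLinearMap.opNorm_le_bound _ (by positivity)
    intro x
    set u : Y := R (B x) with hudef
    have hu : (u : X) - T (u : X) = x - T x := by
      have h := congrArg Subtype.val (hAR (B x))
      rw [hA] at h
      rw [hB] at h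
      exact h
    set w : X := x - (u : X) with hw
    have hTw : T w = w := by
      rw [hw, map_sub]
      calc T x - T (u : X)
          = (x - (u : X)) - ((x - T x) - ((u : X) - T (u : X))) := by abel
        _ = x - (u : X) := by rw [hu, sub_self, sub_zero]
    have hTkw : ∀ k : ℕ, (T ^ k) w = w := by
      intro k
      induction k with
      | zero => simp
      | succ k ih => rw [pow_succ', ContinuousLinearMap.mul_apply, ih, hTw]
    set v : X := (n : 𝕜)⁻¹ • ∑ k ∈ Finset.Icc 1 n, (T ^ k) (u : X) with hv
    have happly : (((n : 𝕜)⁻¹ • ∑ k ∈ Finset.Icc 1 n, T ^ k)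
        - (ContinuousLinearMap.id 𝕜 X - Y.subtypeL.comp (R.comp B))) x = v := by
      have h1 : ((n : 𝕜)⁻¹ • ∑ k ∈ Finset.Icc 1 n, T ^ k) x
          = (n : 𝕜)⁻¹ • ∑ k ∈ Finset.Icc 1 n, (T ^ k) x := by
        simp [ContinuousLinearMap.coe_sum', Finset.sum_apply]
      have hEx : (ContinuousLinearMap.id 𝕜 X - Y.subtypeL.comp (R.comp B)) x = w := by
        simp [hw, hudef]
      have h2 : ∑ k ∈ Finset.Icc 1 n, (T ^ k) x
          = (∑ k ∈ Finset.Icc 1 n, (T ^ k) (u : X)) + n • w := by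
        have hx : x = (u : X) + w := by rw [hw]; abel
        calc ∑ k ∈ Finset.Icc 1 n, (T ^ k) x
            = ∑ k ∈ Finset.Icc 1 n, ((T ^ k) (u : X) + w) := by
              refine Finset.sum_congr rfl fun k _ => ?_
              conv_lhs => rw [hx]
              rw [map_add, hTkw k]
          _ = (∑ k ∈ Finset.Icc 1 n, (T ^ k) (u : X)) + n • w := by
              rw [Finset.sum_add_distrib, Finset.sum_const, Nat.card_Icc, add_tsub_cancel_right]
      have h3 : (n : 𝕜)⁻¹ • ((n : ℕ) • w) = w := by
        rw [← Nat.cast_smul_eq_nsmul 𝕜, smul_smul,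
          inv_mul_cancel₀ (by exact_mod_cast hn0.ne' : (n:𝕜) ≠ 0), one_smul]
      rw [ContinuousLinearMap.sub_apply, h1, hEx, h2, smul_add, h3, hv]
      abel
    have hvY : v ∈ Y := by
      rw [hv]
      exact Submodule.smul_mem _ _ (Submodule.sum_mem _ fun k _ => hTkY k _ u.2)
    have hvt : v - T v = (n : 𝕜)⁻¹ • (T (u : X) - (T ^ (n + 1)) (u : X)) := by
      have hTM : T ((n : 𝕜)⁻¹ • ∑ k ∈ Finset.Icc 1 n, (T ^ k) (u : X))
          = (n : 𝕜)⁻¹ • ∑ k ∈ Finset.Icc 1 n, (T ^ (k + 1)) (u : X) := by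
        rw [map_smul, map_sum]
        congr 1
        exact Finset.sum_congr rfl fun k _ => by
          simp [pow_succ', ContinuousLinearMap.mul_apply]
      have htel : (∑ k ∈ Finset.Icc 1 n, (T ^ k) (u : X))
          - ∑ k ∈ Finset.Icc 1 n, (T ^ (k + 1)) (u : X)
          = T (u : X) - (T ^ (n + 1)) (u : X) := by
        rw [← Finset.sum_sub_distrib]
        have := telescope' (fun k => (T ^ k) (u : X)) n
        simpa [pow_one] using this
      rw [hv, hTM, ← htel, smul_sub]
    have hunorm : ‖(u : X)‖ ≤ c⁻¹ * (‖1 - T‖ * ‖x‖) := by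
      have h3 := hlow (u : X) u.2
      rw [hu] at h3
      have h4 : ‖x - T x‖ ≤ ‖1 - T‖ * ‖x‖ := by
        simpa [ContinuousLinearMap.sub_apply] using (1 - T).le_opNorm x
      calc ‖(u : X)‖ = c⁻¹ * (c * ‖(u : X)‖) := by field_simp
      _ ≤ c⁻¹ * (‖1 - T‖ * ‖x‖) :=
          mul_le_mul_of_nonneg_left (h3.trans h4) (by positivity)
    have hb1 : ‖T (u:X) - (T ^ (n + 1)) (u:X)‖ ≤ (‖T‖ + ‖T ^ (n + 1)‖) * ‖(u:X)‖ := by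
      calc ‖T (u:X) - (T ^ (n + 1)) (u:X)‖ ≤ ‖T (u:X)‖ + ‖(T ^ (n + 1)) (u:X)‖ := norm_sub_le _ _
      _ ≤ ‖T‖ * ‖(u:X)‖ + ‖T ^ (n + 1)‖ * ‖(u:X)‖ :=
          add_le_add (T.le_opNorm _) ((T ^ (n + 1)).le_opNorm _)
      _ = (‖T‖ + ‖T ^ (n + 1)‖) * ‖(u:X)‖ := by ring
    rw [happly]
    calc ‖v‖ = c⁻¹ * (c * ‖v‖) := by field_simp
    _ ≤ c⁻¹ * ‖v - T v‖ := mul_le_mul_of_nonneg_left (hlow v hvY) (by positivity)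
    _ = c⁻¹ * ((n:ℝ)⁻¹ * ‖T (u:X) - (T ^ (n + 1)) (u:X)‖) := by
        rw [hvt, norm_smul, norm_inv, RCLike.norm_natCast]
    _ ≤ c⁻¹ * ((n:ℝ)⁻¹ * ((‖T‖ + ‖T ^ (n + 1)‖) * (c⁻¹ * (‖1 - T‖ * ‖x‖)))) := by
        have hinner : ‖T (u:X) - (T ^ (n + 1)) (u:X)‖
            ≤ (‖T‖ + ‖T ^ (n + 1)‖) * (c⁻¹ * (‖1 - T‖ * ‖x‖)) :=
          hb1.trans (mul_le_mul_of_nonneg_left hunorm (by positivity))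
        exact mul_le_mul_of_nonneg_left
          (mul_le_mul_of_nonneg_left hinner (by positivity)) (by positivity)
    _ = (c⁻¹ * (c⁻¹ * ‖1 - T‖)) * ((‖T‖ + ‖T ^ (n + 1)‖) / (n : ℝ)) * ‖x‖ := by
        field_simp
  have hlim : Tendsto (fun n : ℕ => (c⁻¹ * (c⁻¹ * ‖1 - T‖)) * ((‖T‖ + ‖T ^ (n + 1)‖) / (n : ℝ)))
      atTop (𝓝 0) := by simpa using hphi.const_mul (c⁻¹ * (c⁻¹ * ‖1 - T‖))
  exact squeeze_zero' (Eventually.of_forall fun n => norm_nonneg _)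
    (eventually_atTop.2 ⟨1, hbound⟩) hlim
end

section
/- Let T be a bounded linear operator on a Banach space such that the series ∑_{n=1}^∞ T^n(I-T)/n converges in operator norm. Then ‖T^n‖/n → 0. -/
/-!
With `x n = T ^ n * (1 - T)`, the partial sums `∑_{n ≤ N} x n` telescope to `T - T ^ (N + 1)`,
and Kronecker's lemma turns convergence of `∑ x n / n` into `∑_{n ≤ N} x n = o(N)`; hence
`‖T ^ N‖ = o(N)`. Kronecker's lemma itself is Abel summation followed by Cesàro's theorem.
-/

open Filter Topology Asymptotics Finset

section Kronecker

variable {E : Type*}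

theorem sum_range_succ_nsmul_sub_eq [AddCommGroup E] (s : ℕ → E) (c : E) (N : ℕ) :
    ∑ n ∈ range N, (n + 1) • (s (n + 1) - s n) = N • (s N - c) - ∑ n ∈ range N, (s n - c) := by
  induction N with
  | zero => simp
  | succ N ih =>
    rw [sum_range_succ, ih, sum_range_succ, succ_nsmul, succ_nsmul]
    simp only [smul_sub]
    abel

theorem isLittleO_nsmul_of_tendsto_zero [NormedAddCommGroup E] {t : ℕ → E}
    (ht : Tendsto t atTop (𝓝 0)) : (fun N : ℕ => N • t N) =o[atTop] fun N => (N : ℝ) := by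
  have hbound : (fun N : ℕ => N • t N) =O[atTop] fun N => (N : ℝ) * ‖t N‖ :=
    IsBigO.of_bound' (Eventually.of_forall fun N => by
      simpa [abs_of_nonneg] using norm_nsmul_le (n := N) (a := t N))
  refine hbound.trans_isLittleO ?_
  simpa using (isBigO_refl (fun N : ℕ => (N : ℝ)) atTop).mul_isLittleO
    ((isLittleO_one_iff ℝ).2 (tendsto_zero_iff_norm_tendsto_zero.1 ht))

/-- Kronecker's lemma, with the terms `x (n + 1) / (n + 1)` of the convergent series written as
the increments of its partial sums `s`, so that no scalars are needed. -/
theorem Filter.Tendsto.isLittleO_sum_range_succ_nsmul_sub [NormedAddCommGroup E]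
    {s : ℕ → E} {S : E} (hs : Tendsto s atTop (𝓝 S)) :
    (fun N => ∑ n ∈ range N, (n + 1) • (s (n + 1) - s n)) =o[atTop] fun N => (N : ℝ) := by
  have ht : Tendsto (fun n => s n - S) atTop (𝓝 0) := tendsto_sub_nhds_zero_iff.2 hs
  simp_rw [sum_range_succ_nsmul_sub_eq s S]
  exact (isLittleO_nsmul_of_tendsto_zero ht).sub (isLittleO_sum_range_of_tendsto_zero ht)

end Kronecker

theorem succ_nsmul_sub_sum_Icc_inv_smul {𝕜 E : Type*} [DivisionRing 𝕜] [CharZero 𝕜]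
    [AddCommGroup E] [Module 𝕜 E] (a : ℕ → E) (n : ℕ) :
    (n + 1) • (∑ k ∈ Icc 1 (n + 1), (k : 𝕜)⁻¹ • a k - ∑ k ∈ Icc 1 n, (k : 𝕜)⁻¹ • a k) =
      a (n + 1) := by
  rw [sum_Icc_succ_top (by omega), add_sub_cancel_left, ← Nat.cast_smul_eq_nsmul 𝕜, smul_smul,
    mul_inv_cancel₀ (Nat.cast_ne_zero.2 n.succ_ne_zero), one_smul]

theorem sum_range_pow_succ_mul_one_sub {R : Type*} [Ring R] (x : R) (N : ℕ) :
    ∑ n ∈ range N, x ^ (n + 1) * (1 - x) = x - x ^ (N + 1) := by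
  simp_rw [mul_sub, mul_one, ← pow_succ]
  simpa using sum_range_sub' (fun n => x ^ (n + 1)) N

theorem tendsto_norm_div_natCast_of_isLittleO_succ {E : Type*} [NormedAddCommGroup E]
    {u : ℕ → E} (h : (fun N => u (N + 1)) =o[atTop] fun N => (N : ℝ)) :
    Tendsto (fun n => ‖u n‖ / n) atTop (𝓝 0) := by
  rw [← tendsto_add_atTop_iff_nat 1]
  have hle : (fun N : ℕ => (N : ℝ)) =O[atTop] fun N => ((N + 1 : ℕ) : ℝ) :=
    IsBigO.of_bound' (Eventually.of_forall fun N => by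
      simp only [Real.norm_natCast, Nat.cast_le]; omega)
  exact (h.norm_left.trans_isBigO hle).tendsto_div_nhds_zero

theorem norm_pow_div_tendsto_zero_of_series_converges_general {𝕜 : Type*} [RCLike 𝕜]
    {X : Type*} [NormedAddCommGroup X] [NormedSpace 𝕜 X]
    (T : X →L[𝕜] X)
    (h : ∃ S : X →L[𝕜] X,
      Tendsto (fun N : ℕ => ∑ n ∈ Finset.Icc 1 N, (n : 𝕜)⁻¹ • (T ^ n * (1 - T)))
        atTop (𝓝 S)) :
    Tendsto (fun n : ℕ => ‖T ^ n‖ / (n : ℝ)) atTop (𝓝 0) := by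
  obtain ⟨S, hS⟩ := h
  have hdiff : (fun N : ℕ => T - T ^ (N + 1)) =o[atTop] fun N => (N : ℝ) := by
    simpa only [succ_nsmul_sub_sum_Icc_inv_smul, sum_range_pow_succ_mul_one_sub]
      using hS.isLittleO_sum_range_succ_nsmul_sub
  have hconst : (fun _ : ℕ => T) =o[atTop] fun N => (N : ℝ) :=
    isLittleO_const_left.2 (Or.inr (tendsto_norm_atTop_atTop.comp tendsto_natCast_atTop_atTop))
  exact tendsto_norm_div_natCast_of_isLittleO_succ (by simpa using hconst.sub hdiff)

/-- If `∑_{n=1}^∞ T^n (I - T) / n` converges in operator norm, then `‖T^n‖/n → 0`. -/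
theorem norm_pow_div_tendsto_zero_of_series_converges {𝕜 : Type*} [RCLike 𝕜]
    {X : Type*} [NormedAddCommGroup X] [NormedSpace 𝕜 X] [CompleteSpace X]
    (T : X →L[𝕜] X)
    (h : ∃ S : X →L[𝕜] X,
      Tendsto (fun N : ℕ => ∑ n ∈ Finset.Icc 1 N, (n : 𝕜)⁻¹ • (T ^ n * (1 - T)))
        atTop (𝓝 S)) :
    Tendsto (fun n : ℕ => ‖T ^ n‖ / (n : ℝ)) atTop (𝓝 0) :=
  norm_pow_div_tendsto_zero_of_series_converges_general T h
end

section
/- Let T be a bounded linear operator on a Banach space, let y ∈ X and 0 < β < 1 satisfy ‖M_n(T) y‖ = O(1/n^β). Then the series ∑_{k=1}^∞ T^k y / k converges in norm. -/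
open Filter Topology

/-- If `‖M_n(T) y‖ = O(1/n^β)` for some `0 < β < 1`, then the one-sided ergodic Hilbert
transform `∑_{k=1}^∞ T^k y / k` converges in norm. -/
theorem hilbert_transform_converges_of_cesaro_decay {𝕜 : Type*} [RCLike 𝕜]
    {X : Type*} [NormedAddCommGroup X] [NormedSpace 𝕜 X] [CompleteSpace X]
    (T : X →L[𝕜] X) (y : X) (β : ℝ) (hβ0 : 0 < β) (hβ1 : β < 1)
    (h : ∃ C : ℝ, ∀ n : ℕ, 1 ≤ n →
      ‖(n : 𝕜)⁻¹ • ∑ k ∈ Finset.Icc 1 n, (T ^ k) y‖ ≤ C / (n : ℝ) ^ β) :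
    ∃ L : X, Tendsto (fun n : ℕ => ∑ k ∈ Finset.Icc 1 n, (k : 𝕜)⁻¹ • (T ^ k) y)
      atTop (𝓝 L) := by
  obtain ⟨C, hC⟩ := h
  set S : ℕ → X := fun n => ∑ k ∈ Finset.Icc 1 n, (T ^ k) y with hSdef
  have hC0 : 0 ≤ C := by
    have := hC 1 le_rfl
    simp at this
    exact le_trans (norm_nonneg _) this
  -- bound on S
  have hS : ∀ n : ℕ, 1 ≤ n → ‖S n‖ ≤ C * (n : ℝ) ^ (1 - β) := by
    intro n hn
    have hn0 : (0:ℝ) < n := by exact_mod_cast hn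
    have h1 := hC n hn
    rw [norm_smul, norm_inv, RCLike.norm_natCast] at h1
    have h2 : ‖S n‖ ≤ n * (C / (n:ℝ) ^ β) := by
      rw [← inv_mul_le_iff₀ hn0] at *
      exact h1
    calc ‖S n‖ ≤ n * (C / (n:ℝ) ^ β) := h2
      _ = C * (n : ℝ) ^ (1 - β) := by
          rw [Real.rpow_sub hn0, Real.rpow_one]
          field_simp
  set g : ℕ → X := fun k => ((k : 𝕜)⁻¹ - ((k + 1 : ℕ) : 𝕜)⁻¹) • S k with hgdef
  have hg0 : g 0 = 0 := by simp [hgdef, hSdef]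
  -- norm bound on g
  have hgb : ∀ k : ℕ, ‖g k‖ ≤ C * ((k : ℝ) ^ (1 + β))⁻¹ := by
    intro k
    rcases Nat.eq_zero_or_pos k with rfl | hk
    · rw [hg0]
      rw [Nat.cast_zero, Real.zero_rpow (by positivity)]
      simp
    have hk0 : (0:ℝ) < k := by exact_mod_cast hk
    have hk1 : (1:ℝ) ≤ k := by exact_mod_cast hk
    have hknz : (k : 𝕜) ≠ 0 := Nat.cast_ne_zero.mpr hk.ne'
    have hk1nz : ((k + 1 : ℕ) : 𝕜) ≠ 0 := Nat.cast_ne_zero.mpr (Nat.succ_ne_zero k)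
    have hcoef : (k : 𝕜)⁻¹ - ((k + 1 : ℕ) : 𝕜)⁻¹ = ((k : 𝕜) * ((k + 1 : ℕ) : 𝕜))⁻¹ := by
      rw [inv_sub_inv hknz hk1nz]
      push_cast
      rw [add_sub_cancel_left, one_div]
    have hnorm : ‖(k : 𝕜)⁻¹ - ((k + 1 : ℕ) : 𝕜)⁻¹‖ = ((k : ℝ) * ((k : ℝ) + 1))⁻¹ := by
      rw [hcoef, norm_inv, norm_mul, RCLike.norm_natCast, RCLike.norm_natCast]
      push_cast
      ring_nf
    rw [hgdef]
    simp only [norm_smul, hnorm]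
    calc ((k : ℝ) * ((k : ℝ) + 1))⁻¹ * ‖S k‖
        ≤ ((k : ℝ) * ((k : ℝ) + 1))⁻¹ * (C * (k : ℝ) ^ (1 - β)) := by
          apply mul_le_mul_of_nonneg_left (hS k hk)
          positivity
      _ = C * (k : ℝ) ^ (1 - β) / ((k:ℝ) * ((k:ℝ) + 1)) := by ring
      _ ≤ C / (k : ℝ) ^ (1 + β) := by
          have h2 : (k:ℝ) ^ (1 - β) * (k:ℝ) ^ (1 + β) = (k:ℝ) * (k:ℝ) := by
            rw [← Real.rpow_add hk0]
            norm_num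
            first
            | ring
            | (rw [show (2:ℝ) = ((2:ℕ):ℝ) by norm_num, Real.rpow_natCast]; ring)
          rw [div_le_div_iff₀ (by positivity) (by positivity), mul_assoc, h2]
          apply mul_le_mul_of_nonneg_left (by nlinarith) hC0
      _ = C * ((k : ℝ) ^ (1 + β))⁻¹ := by ring
  -- summability of g
  have hsum : Summable g := by
    apply Summable.of_norm_bounded (g := fun k : ℕ => C * ((k : ℝ) ^ (1 + β))⁻¹) ?_ hgb
    apply Summable.mul_left
    exact (Real.summable_nat_rpow_inv).mpr (by linarith)
  -- the limit
  obtain ⟨L, hL⟩ := hsum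
  -- Abel summation identity
  have hid : ∀ n : ℕ, ∑ k ∈ Finset.Icc 1 n, (k : 𝕜)⁻¹ • (T ^ k) y
      = (∑ k ∈ Finset.Icc 1 n, g k) + (((n + 1 : ℕ) : 𝕜))⁻¹ • S n := by
    intro n
    induction n with
    | zero => simp [hSdef]
    | succ n ih =>
      rw [Finset.sum_Icc_succ_top (Nat.one_le_iff_ne_zero.mpr (Nat.succ_ne_zero n)),
        Finset.sum_Icc_succ_top (Nat.one_le_iff_ne_zero.mpr (Nat.succ_ne_zero n)), ih]
      have hSsucc : S (n + 1) = S n + (T ^ (n + 1)) y := by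
        rw [hSdef]
        exact Finset.sum_Icc_succ_top (Nat.one_le_iff_ne_zero.mpr (Nat.succ_ne_zero n)) _
      rw [hgdef]
      simp only [hSsucc]
      push_cast
      simp only [sub_smul, smul_add]
      abel
  -- partial sums of g over Icc 1 n equal sums over range (n+1)
  have hrange : ∀ n : ℕ, ∑ k ∈ Finset.Icc 1 n, g k = ∑ k ∈ Finset.range (n + 1), g k := by
    intro n
    induction n with
    | zero => simp [hg0]
    | succ n ih =>
      rw [Finset.sum_Icc_succ_top (Nat.one_le_iff_ne_zero.mpr (Nat.succ_ne_zero n)), ih,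
        Finset.sum_range_succ, Finset.sum_range_succ]
      rw [Finset.sum_range_succ]
  have htend1 : Tendsto (fun n : ℕ => ∑ k ∈ Finset.Icc 1 n, g k) atTop (𝓝 L) := by
    have h1 := hL.tendsto_sum_nat
    have h2 : Tendsto (fun n : ℕ => ∑ k ∈ Finset.range (n + 1), g k) atTop (𝓝 L) :=
      h1.comp (tendsto_add_atTop_nat 1)
    simpa only [← hrange] using h2
  -- the boundary term tends to 0
  have htend2 : Tendsto (fun n : ℕ => (((n + 1 : ℕ) : 𝕜))⁻¹ • S n) atTop (𝓝 (0 : X)) := by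
    apply squeeze_zero_norm' (a := fun n : ℕ => C * ((n : ℝ) ^ β)⁻¹)
    · filter_upwards [eventually_ge_atTop 1] with n hn
      have hn0 : (0:ℝ) < n := by exact_mod_cast hn
      rw [norm_smul, norm_inv, RCLike.norm_natCast]
      calc (((n + 1 : ℕ) : ℝ))⁻¹ * ‖S n‖ ≤ ((n : ℝ))⁻¹ * (C * (n : ℝ) ^ (1 - β)) := by
            apply mul_le_mul ?_ (hS n hn) (norm_nonneg _) (by positivity)
            apply inv_anti₀ hn0
            push_cast; linarith
        _ = C * ((n : ℝ) ^ β)⁻¹ := by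
            rw [Real.rpow_sub hn0, Real.rpow_one]
            field_simp
    · rw [show (0:ℝ) = C * 0 by ring]
      apply Tendsto.const_mul
      apply Tendsto.inv_tendsto_atTop
      apply Tendsto.comp (tendsto_rpow_atTop hβ0) tendsto_natCast_atTop_atTop
  refine ⟨L, ?_⟩
  have := htend1.add htend2
  rw [add_zero] at this
  apply this.congr
  intro n
  exact (hid n).symm
end

section
/- Let T be a bounded linear operator on a complex Banach space such that for every x ∈ X and every continuous linear functional x* there exists p ∈ [1, ∞) with ∑_{n=1}^∞ |⟨x*, T^n x⟩|^p < ∞. Then ‖T^n‖ → 0. -/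
open Filter Topology

set_option maxHeartbeats 4000000
set_option synthInstance.maxHeartbeats 400000

private lemma aux_half (j : ℕ) (a : ℝ) (ha : 0 ≤ a) : a ≤ 1/2 + 2^j * a^(j+1) := by
  rcases le_or_gt a (1/2) with h | h
  · nlinarith [pow_nonneg ha (j+1), pow_nonneg (by norm_num : (0:ℝ) ≤ 2) j,
      mul_nonneg (pow_nonneg (by norm_num : (0:ℝ) ≤ 2) j) (pow_nonneg ha (j+1))]
  · have h1 : (1:ℝ) ≤ 2 * a := by linarith
    have : a * 1 ≤ a * (2*a)^j := by
      have := one_le_pow₀ (n := j) h1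
      nlinarith
    calc a = a * 1 := (mul_one a).symm
      _ ≤ a * (2*a)^j := this
      _ = 2^j * a^(j+1) := by ring
      _ ≤ 1/2 + 2^j * a^(j+1) := by norm_num

private lemma aux_four (m : ℕ) {a b c d : ℝ} (ha : 0 ≤ a) (hb : 0 ≤ b) (hc : 0 ≤ c) (hd : 0 ≤ d) :
    (a + b + c + d)^m ≤ 4^m * (a^m + b^m + c^m + d^m) := by
  set M := max (max a b) (max c d) with hM
  have hMnn : 0 ≤ M := le_trans ha (le_trans (le_max_left a b) (le_max_left _ _))
  have hsum : a + b + c + d ≤ 4 * M := by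
    have h1 : a ≤ M := le_trans (le_max_left a b) (le_max_left _ _)
    have h2 : b ≤ M := le_trans (le_max_right a b) (le_max_left _ _)
    have h3 : c ≤ M := le_trans (le_max_left c d) (le_max_right _ _)
    have h4 : d ≤ M := le_trans (le_max_right c d) (le_max_right _ _)
    linarith
  have hMpow : M^m ≤ a^m + b^m + c^m + d^m := by
    have : M = a ∨ M = b ∨ M = c ∨ M = d := by
      rcases max_choice (max a b) (max c d) with h | h <;> rw [hM, h]
      · rcases max_choice a b with h' | h' <;> simp [h']
      · rcases max_choice c d with h' | h' <;> simp [h']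
    have pa := pow_nonneg ha m; have pb := pow_nonneg hb m
    have pc := pow_nonneg hc m; have pd := pow_nonneg hd m
    rcases this with h | h | h | h <;> rw [h] <;> linarith
  calc (a+b+c+d)^m ≤ (4*M)^m := pow_le_pow_left₀ (by linarith) hsum m
    _ = 4^m * M^m := mul_pow 4 M m
    _ ≤ 4^m * (a^m+b^m+c^m+d^m) :=
        mul_le_mul_of_nonneg_left hMpow (pow_nonneg (by norm_num) m)

/-- If for every `x ∈ X` and every continuous functional `x*` there is `p ∈ [1, ∞)` with
`∑_{n=1}^∞ |⟨x*, T^n x⟩|^p < ∞`, then `‖T^n‖ → 0`. -/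
theorem norm_pow_tendsto_zero_of_weak_lp
    {X : Type*} [NormedAddCommGroup X] [NormedSpace ℂ X] [CompleteSpace X]
    (T : X →L[ℂ] X)
    (h : ∀ x : X, ∀ f : X →L[ℂ] ℂ, ∃ p : ℝ, 1 ≤ p ∧
      Summable (fun n : ℕ => ‖f ((T ^ (n + 1)) x)‖ ^ p)) :
    Tendsto (fun n : ℕ => ‖T ^ n‖) atTop (𝓝 0) := by
  classical
  rcases subsingleton_or_nontrivial X with hX | hX
  · haveI : Subsingleton (X →L[ℂ] X) :=
      ⟨fun f g => ContinuousLinearMap.ext fun x => Subsingleton.elim _ _⟩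
    have hz : ∀ n : ℕ, ‖T ^ n‖ = 0 := fun n => by
      rw [Subsingleton.elim (T ^ n) 0, norm_zero]
    simpa [hz] using (tendsto_const_nhds : Tendsto (fun _ : ℕ => (0:ℝ)) atTop (𝓝 0))
  -- the Banach algebra of operators
  haveI : Nontrivial (X →L[ℂ] X) := by
    refine ⟨1, 0, fun hc => ?_⟩
    have h1 : ‖(1 : X →L[ℂ] X)‖ = 1 := norm_one
    rw [hc, norm_zero] at h1
    norm_num at h1
  -- Step 1 : Baire category
  set S : ℕ → Set (X × (X →L[ℂ] ℂ)) := fun k =>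
    {z | ∀ N, ∑ n ∈ Finset.Ico (k+1) N, ‖z.2 ((T ^ (n+1)) z.1)‖ ^ (k+1) ≤ 1} with hS
  have hclosed : ∀ k, IsClosed (S k) := by
    intro k
    have : S k = ⋂ N, {z : X × (X →L[ℂ] ℂ) |
        ∑ n ∈ Finset.Ico (k+1) N, ‖z.2 ((T ^ (n+1)) z.1)‖ ^ (k+1) ≤ 1} := by
      ext z; simp [hS, Set.mem_iInter]
    rw [this]
    refine isClosed_iInter fun N => isClosed_le ?_ continuous_const
    refine continuous_finset_sum _ fun n _ => ?_
    exact ((isBoundedBilinearMap_apply.continuous.comp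
      (continuous_snd.prodMk ((T ^ (n+1)).continuous.comp continuous_fst))).norm).pow _
  have hcover : (⋃ k, S k) = Set.univ := by
    refine Set.eq_univ_of_forall fun z => ?_
    obtain ⟨p, hp1, hsum⟩ := h z.1 z.2
    set a : ℕ → ℝ := fun n => ‖z.2 ((T ^ (n+1)) z.1)‖ with ha
    have hanon : ∀ n, 0 ≤ a n := fun n => norm_nonneg _
    have hap : ∀ n, 0 ≤ a n ^ p := fun n => Real.rpow_nonneg (hanon n) _
    have h0 : Tendsto (fun n => a n ^ p) atTop (𝓝 0) := hsum.tendsto_atTop_zero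
    obtain ⟨N0, hN0⟩ :=
      (h0.eventually (eventually_le_nhds (by norm_num : (0:ℝ) < 1))).exists_forall_of_atTop
    have ha1 : ∀ n ≥ N0, a n ≤ 1 := by
      intro n hn
      by_contra hgt
      push_neg at hgt
      have : 1 < a n ^ p := by
        rw [Real.one_lt_rpow_iff_of_pos (lt_trans one_pos hgt)]
        exact Or.inl ⟨hgt, lt_of_lt_of_le one_pos hp1⟩
      linarith [hN0 n hn]
    set Sp := ∑' n, a n ^ p with hSp
    obtain ⟨N1, hN1⟩ := (hsum.hasSum.tendsto_sum_nat.eventually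
      (eventually_ge_nhds (show Sp - 1 < Sp by linarith))).exists
    refine Set.mem_iUnion.mpr ⟨max (max N0 N1) ⌈p⌉₊, fun N => ?_⟩
    set k := max (max N0 N1) ⌈p⌉₊ with hk
    have hkN0 : N0 ≤ k + 1 :=
      le_trans (le_trans (le_max_left _ _) (le_max_left _ _)) (Nat.le_succ k)
    have hkN1 : N1 ≤ k + 1 :=
      le_trans (le_trans (le_max_right _ _) (le_max_left _ _)) (Nat.le_succ k)
    have hkp : p ≤ (k + 1 : ℝ) := by
      have h1 : p ≤ (⌈p⌉₊ : ℝ) := Nat.le_ceil p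
      have h2 : (⌈p⌉₊ : ℝ) ≤ (k : ℝ) := by exact_mod_cast Nat.cast_le.mpr (le_max_right _ _)
      linarith
    have step1 : ∑ n ∈ Finset.Ico (k+1) N, a n ^ (k+1) ≤ ∑ n ∈ Finset.Ico (k+1) N, a n ^ p := by
      refine Finset.sum_le_sum fun n hn => ?_
      have hn1 : k + 1 ≤ n := (Finset.mem_Ico.mp hn).1
      rcases eq_or_lt_of_le (hanon n) with h0' | h0'
      · rw [← h0', zero_pow (by omega), Real.zero_rpow (by linarith)]
      · rw [show a n ^ (k+1) = a n ^ ((k+1 : ℕ) : ℝ) by rw [Real.rpow_natCast]]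
        exact Real.rpow_le_rpow_of_exponent_ge h0' (ha1 n (le_trans hkN0 hn1))
          (by exact_mod_cast hkp)
    have step2 : ∑ n ∈ Finset.Ico (k+1) N, a n ^ p ≤ 1 := by
      rcases le_or_gt N (k+1) with hN' | hN'
      · rw [Finset.Ico_eq_empty (by omega)]
        norm_num
      have hsplit : ∑ n ∈ Finset.range (k+1), a n ^ p + ∑ n ∈ Finset.Ico (k+1) N, a n ^ p
          = ∑ n ∈ Finset.range N, a n ^ p :=
        Finset.sum_range_add_sum_Ico _ (by omega)
      have h1 : ∑ n ∈ Finset.range N, a n ^ p ≤ Sp := Summable.sum_le_tsum _ (fun i _ => hap i) hsum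
      have h2 : ∑ n ∈ Finset.range N1, a n ^ p ≤ ∑ n ∈ Finset.range (k+1), a n ^ p := by
        apply Finset.sum_le_sum_of_subset_of_nonneg
        · exact Finset.range_subset_range.mpr hkN1
        · exact fun i _ _ => hap i
      linarith
    linarith
  haveI : Nonempty (X × (X →L[ℂ] ℂ)) := ⟨(0, 0)⟩
  obtain ⟨j, hj⟩ := nonempty_interior_of_iUnion_of_closed hclosed hcover
  set m := j + 1 with hm
  obtain ⟨z0, hz0⟩ := hj
  rw [mem_interior_iff_mem_nhds, Metric.mem_nhds_iff] at hz0
  obtain ⟨ε, hε, hball⟩ := hz0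
  -- the four-corner membership
  have hcorner : ∀ (u : X) (g : X →L[ℂ] ℂ), ‖u‖ < ε → ‖g‖ < ε → ∀ N,
      ∑ n ∈ Finset.Ico m N, ‖(z0.2 + g) ((T ^ (n+1)) (z0.1 + u))‖ ^ m ≤ 1 := by
    intro u g hu hg
    have : (z0.1 + u, z0.2 + g) ∈ Metric.ball z0 ε := by
      rw [Metric.mem_ball, Prod.dist_eq]
      have d1 : dist (z0.1 + u) z0.1 = ‖u‖ := by simp [dist_eq_norm]
      have d2 : dist (z0.2 + g) z0.2 = ‖g‖ := by simp [dist_eq_norm]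
      rw [d1, d2]
      exact max_lt hu hg
    have h'' := hball this
    rw [hS] at h''
    intro N
    rw [hm]
    exact h'' N
  -- the key uniform estimate for small u, g
  set B : ℝ := 4 ^ m * 4 with hB
  have hB1 : (1:ℝ) ≤ B := by
    have : (1:ℝ) ≤ 4 ^ m := one_le_pow₀ (by norm_num)
    nlinarith
  have key1 : ∀ (u : X) (g : X →L[ℂ] ℂ), ‖u‖ < ε → ‖g‖ < ε → ∀ N,
      ∑ n ∈ Finset.Ico m N, ‖g ((T ^ (n+1)) u)‖ ^ m ≤ B := by
    intro u g hu hg N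
    have h0ε : ‖(0 : X)‖ < ε := by simpa using hε
    have h0ε' : ‖(0 : X →L[ℂ] ℂ)‖ < ε := by simpa using hε
    have c11 := hcorner u g hu hg N
    have c10 := hcorner u 0 hu h0ε' N
    have c01 := hcorner 0 g h0ε hg N
    have c00 := hcorner 0 0 h0ε h0ε' N
    simp only [add_zero] at c10 c01 c00
    have quad : ∀ n, ‖g ((T ^ (n+1)) u)‖ ≤
        ‖(z0.2 + g) ((T ^ (n+1)) (z0.1 + u))‖ + ‖z0.2 ((T ^ (n+1)) (z0.1 + u))‖
        + ‖(z0.2 + g) ((T ^ (n+1)) z0.1)‖ + ‖z0.2 ((T ^ (n+1)) z0.1)‖ := by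
      intro n
      have hid : g ((T ^ (n+1)) u) =
          (z0.2 + g) ((T ^ (n+1)) (z0.1 + u)) - z0.2 ((T ^ (n+1)) (z0.1 + u))
          - (z0.2 + g) ((T ^ (n+1)) z0.1) + z0.2 ((T ^ (n+1)) z0.1) := by
        simp only [map_add, ContinuousLinearMap.add_apply]
        ring
      rw [hid]
      have t1 := norm_add_le ((z0.2 + g) ((T ^ (n+1)) (z0.1 + u)) - z0.2 ((T ^ (n+1)) (z0.1 + u))
          - (z0.2 + g) ((T ^ (n+1)) z0.1)) (z0.2 ((T ^ (n+1)) z0.1))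
      have t2 := norm_sub_le ((z0.2 + g) ((T ^ (n+1)) (z0.1 + u)) - z0.2 ((T ^ (n+1)) (z0.1 + u)))
          ((z0.2 + g) ((T ^ (n+1)) z0.1))
      have t3 := norm_sub_le ((z0.2 + g) ((T ^ (n+1)) (z0.1 + u)))
          (z0.2 ((T ^ (n+1)) (z0.1 + u)))
      linarith
    calc ∑ n ∈ Finset.Ico m N, ‖g ((T ^ (n+1)) u)‖ ^ m
        ≤ ∑ n ∈ Finset.Ico m N, 4 ^ m *
          (‖(z0.2 + g) ((T ^ (n+1)) (z0.1 + u))‖ ^ m + ‖z0.2 ((T ^ (n+1)) (z0.1 + u))‖ ^ m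
           + ‖(z0.2 + g) ((T ^ (n+1)) z0.1)‖ ^ m + ‖z0.2 ((T ^ (n+1)) z0.1)‖ ^ m) := by
          refine Finset.sum_le_sum fun n _ => ?_
          refine le_trans (pow_le_pow_left₀ (norm_nonneg _) (quad n) m) ?_
          exact aux_four m (norm_nonneg _) (norm_nonneg _) (norm_nonneg _) (norm_nonneg _)
      _ = 4 ^ m * (
            (∑ n ∈ Finset.Ico m N, ‖(z0.2 + g) ((T ^ (n+1)) (z0.1 + u))‖ ^ m)
          + (∑ n ∈ Finset.Ico m N, ‖z0.2 ((T ^ (n+1)) (z0.1 + u))‖ ^ m)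
          + (∑ n ∈ Finset.Ico m N, ‖(z0.2 + g) ((T ^ (n+1)) z0.1)‖ ^ m)
          + (∑ n ∈ Finset.Ico m N, ‖z0.2 ((T ^ (n+1)) z0.1)‖ ^ m)) := by
          rw [← Finset.mul_sum]
          congr 1
          rw [Finset.sum_add_distrib, Finset.sum_add_distrib, Finset.sum_add_distrib]
      _ ≤ 4 ^ m * (1 + 1 + 1 + 1) := by
          refine mul_le_mul_of_nonneg_left ?_ (pow_nonneg (by norm_num) m)
          refine add_le_add (add_le_add (add_le_add c11 c10) c01) c00
      _ = B := by rw [hB]; ring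
  -- scaling: the homogeneous uniform estimate
  set c : ℝ := 4 / (ε * ε) with hc
  have hcpos : 0 < c := by positivity
  have key3 : ∀ (u : X) (g : X →L[ℂ] ℂ) (N : ℕ),
      ∑ n ∈ Finset.Ico m N, ‖g ((T ^ (n+1)) u)‖ ^ m ≤ B * (c * (‖u‖ * ‖g‖)) ^ m := by
    intro u g N
    have hm0 : m ≠ 0 := by omega
    rcases eq_or_ne u 0 with hu0 | hu0
    · have hz : ∀ n ∈ Finset.Ico m N, ‖g ((T ^ (n+1)) u)‖ ^ m = 0 := by
        intro n _
        simp [hu0, zero_pow hm0]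
      rw [Finset.sum_congr rfl hz, Finset.sum_const, smul_zero]
      positivity
    rcases eq_or_ne g 0 with hg0 | hg0
    · have hz : ∀ n ∈ Finset.Ico m N, ‖g ((T ^ (n+1)) u)‖ ^ m = 0 := by
        intro n _
        simp [hg0, zero_pow hm0]
      rw [Finset.sum_congr rfl hz, Finset.sum_const, smul_zero]
      positivity
    have hun : 0 < ‖u‖ := norm_pos_iff.mpr hu0
    have hgn : 0 < ‖g‖ := norm_pos_iff.mpr hg0
    set r : ℝ := ε / (2 * ‖u‖) with hr
    set s : ℝ := ε / (2 * ‖g‖) with hs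
    have hrpos : 0 < r := by positivity
    have hspos : 0 < s := by positivity
    set u' : X := (r : ℂ) • u with hu'
    set g' : X →L[ℂ] ℂ := (s : ℂ) • g with hg'
    have hnu' : ‖u'‖ = ε / 2 := by
      rw [hu', norm_smul, Complex.norm_real, Real.norm_of_nonneg hrpos.le, hr]
      field_simp
    have hng' : ‖g'‖ = ε / 2 := by
      rw [hg']
      rw [norm_smul ((s:ℂ)) g, Complex.norm_real, Real.norm_of_nonneg hspos.le, hs]
      field_simp
    have h1 := key1 u' g' (by rw [hnu']; linarith) (by rw [hng']; linarith) N
    have hterm : ∀ n : ℕ, ‖g' ((T ^ (n+1)) u')‖ = r * s * ‖g ((T ^ (n+1)) u)‖ := by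
      intro n
      rw [hu', hg']
      simp only [map_smul, ContinuousLinearMap.smul_apply, smul_eq_mul, norm_mul,
        Complex.norm_real, Real.norm_of_nonneg hrpos.le, Real.norm_of_nonneg hspos.le]
      ring
    have h2 : ∑ n ∈ Finset.Ico m N, ‖g' ((T ^ (n+1)) u')‖ ^ m
        = (r*s)^m * ∑ n ∈ Finset.Ico m N, ‖g ((T ^ (n+1)) u)‖ ^ m := by
      rw [Finset.mul_sum]
      refine Finset.sum_congr rfl fun n _ => ?_
      rw [hterm n, mul_pow]
    rw [h2] at h1
    have hrs : 0 < (r*s)^m := by positivity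
    have hkey : ∑ n ∈ Finset.Ico m N, ‖g ((T ^ (n+1)) u)‖ ^ m ≤ B / (r*s)^m := by
      rw [le_div_iff₀ hrs]
      linarith [h1]
    refine hkey.trans (le_of_eq ?_)
    have hrs_eq : (r * s)⁻¹ = c * (‖u‖ * ‖g‖) := by
      rw [hr, hs, hc]
      field_simp
      ring
    rw [div_eq_mul_inv, ← inv_pow, hrs_eq]
  -- power boundedness
  set D : ℝ := B * c + ∑ i ∈ Finset.range (m+1), ‖T ^ i‖ with hD
  have hDpos : 0 < D := by
    have h1 : (0:ℝ) < B * c := by nlinarith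
    have h2 : (0:ℝ) ≤ ∑ i ∈ Finset.range (m+1), ‖T ^ i‖ :=
      Finset.sum_nonneg fun i _ => norm_nonneg _
    linarith
  have hTD : ∀ n : ℕ, ‖T ^ n‖ ≤ D := by
    have hsumnn : (0:ℝ) ≤ ∑ i ∈ Finset.range (m+1), ‖T ^ i‖ :=
      Finset.sum_nonneg fun i _ => norm_nonneg _
    have hBc : (0:ℝ) < B * c := by nlinarith
    have hbig : ∀ n', m ≤ n' → ‖T ^ (n'+1)‖ ≤ B * c := by
      intro n' hn'
      have hbound : ∀ (u : X) (g : X →L[ℂ] ℂ), ‖g ((T ^ (n'+1)) u)‖ ≤ B * c * ‖u‖ * ‖g‖ := by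
        intro u g
        have h1 : ‖g ((T ^ (n'+1)) u)‖ ^ m ≤ B * (c * (‖u‖ * ‖g‖)) ^ m := by
          refine le_trans ?_ (key3 u g (n'+2))
          refine Finset.single_le_sum (f := fun n => ‖g ((T ^ (n+1)) u)‖ ^ m)
            (fun i _ => pow_nonneg (norm_nonneg _) m) ?_
          exact Finset.mem_Ico.mpr ⟨hn', by omega⟩
        have ht0 : (0:ℝ) ≤ c * (‖u‖ * ‖g‖) := by positivity
        have h2 : B * (c * (‖u‖ * ‖g‖)) ^ m ≤ (B * (c * (‖u‖ * ‖g‖))) ^ m := by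
          rw [mul_pow B (c * (‖u‖ * ‖g‖)) m]
          exact mul_le_mul_of_nonneg_right (le_self_pow₀ (n := m) hB1 (by rw [hm]; omega))
            (pow_nonneg ht0 m)
        have h3 : ‖g ((T ^ (n'+1)) u)‖ ^ m ≤ (B * (c * (‖u‖ * ‖g‖))) ^ m := h1.trans h2
        have h4 := le_of_pow_le_pow_left₀ (by rw [hm]; omega) (by positivity) h3
        calc ‖g ((T ^ (n'+1)) u)‖ ≤ B * (c * (‖u‖ * ‖g‖)) := h4
          _ = B * c * ‖u‖ * ‖g‖ := by ring
      refine ContinuousLinearMap.opNorm_le_bound _ (by positivity) fun u => ?_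
      refine NormedSpace.norm_le_dual_bound ℂ _ (by positivity) fun g => ?_
      calc ‖g ((T ^ (n'+1)) u)‖ ≤ B * c * ‖u‖ * ‖g‖ := hbound u g
        _ = B * c * ‖u‖ * ‖g‖ := rfl
    intro n
    rcases le_or_gt n m with hn | hn
    · have h1 : ‖T ^ n‖ ≤ ∑ i ∈ Finset.range (m+1), ‖T ^ i‖ :=
        Finset.single_le_sum (f := fun i => ‖T ^ i‖) (fun i _ => norm_nonneg _)
          (Finset.mem_range.mpr (by omega))
      rw [hD]; linarith
    · obtain ⟨n', rfl⟩ : ∃ n', n = n' + 1 := ⟨n - 1, by omega⟩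
      have := hbig n' (Nat.lt_succ_iff.mp hn)
      rw [hD]; linarith
  -- Neumann series resolvent with norm control
  set Q : ℝ := ((m:ℝ) + 1) * D + 2 ^ j * (B * c ^ m) with hQ
  have hQpos : 0 < Q := by positivity
  have hres : ∀ lam : ℂ, 1 < ‖lam‖ → ∃ W : (X →L[ℂ] X)ˣ,
      (W : X →L[ℂ] X) = algebraMap ℂ (X →L[ℂ] X) lam - T ∧
      ‖((W⁻¹ : (X →L[ℂ] X)ˣ) : X →L[ℂ] X)‖ ≤ Q + (1/2) * (‖lam‖ - 1)⁻¹ := by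
    intro lam hlam
    have hlam0 : lam ≠ 0 := by
      intro h0
      rw [h0, norm_zero] at hlam
      linarith
    have hs1 : ‖lam‖⁻¹ < 1 := by
      rw [inv_lt_one_iff₀]
      right; exact hlam
    have hs0 : (0:ℝ) ≤ ‖lam‖⁻¹ := by positivity
    set f : ℕ → (X →L[ℂ] X) := fun n => (lam ^ (n+1))⁻¹ • T ^ n with hf
    have hnf : ∀ n, ‖f n‖ ≤ D * ‖lam‖⁻¹ ^ (n+1) := by
      intro n
      rw [hf]
      rw [norm_smul ((lam ^ (n+1))⁻¹) (T ^ n : X →L[ℂ] X), norm_inv, norm_pow, ← inv_pow]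
      have hp : (0:ℝ) ≤ ‖lam‖⁻¹ ^ (n+1) := pow_nonneg hs0 _
      calc ‖lam‖⁻¹ ^ (n+1) * ‖T ^ n‖ ≤ ‖lam‖⁻¹ ^ (n+1) * D :=
            mul_le_mul_of_nonneg_left (hTD n) hp
        _ = D * ‖lam‖⁻¹ ^ (n+1) := mul_comm _ _
    have hgeo0 : Summable (fun n : ℕ => ‖lam‖⁻¹ ^ n) := summable_geometric_of_lt_one hs0 hs1
    have hgeo : Summable (fun n : ℕ => D * ‖lam‖⁻¹ ^ (n+1)) :=
      (((summable_nat_add_iff 1).mpr hgeo0).mul_left D)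
    have hfs : Summable f :=
      Summable.of_norm (Summable.of_nonneg_of_le (fun n => norm_nonneg _) hnf hgeo)
    set R : X →L[ℂ] X := ∑' n, f n with hR
    set fe : ℕ → (X →L[ℂ] X) := fun n => (lam ^ n)⁻¹ • T ^ n with hfe
    have hnfe : ∀ n, ‖fe n‖ ≤ D * ‖lam‖⁻¹ ^ n := by
      intro n
      rw [hfe]
      rw [norm_smul ((lam ^ n)⁻¹) (T ^ n : X →L[ℂ] X), norm_inv, norm_pow, ← inv_pow]
      have hp : (0:ℝ) ≤ ‖lam‖⁻¹ ^ n := pow_nonneg hs0 _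
      calc ‖lam‖⁻¹ ^ n * ‖T ^ n‖ ≤ ‖lam‖⁻¹ ^ n * D := mul_le_mul_of_nonneg_left (hTD n) hp
        _ = D * ‖lam‖⁻¹ ^ n := mul_comm _ _
    have hfe0 : fe 0 = 1 := by
      rw [hfe]
      simp
    have hfes : Summable fe :=
      Summable.of_norm (Summable.of_nonneg_of_le (fun n => norm_nonneg _) hnfe
        (hgeo0.mul_left D))
    have hfet : Tendsto fe atTop (𝓝 0) := by
      refine squeeze_zero_norm hnfe ?_
      have h1 := (tendsto_pow_atTop_nhds_zero_of_lt_one hs0 hs1).const_mul D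
      simpa using h1
    have htel : HasSum (fun n => fe n - fe (n+1)) 1 := by
      have hsub : Summable (fun n => fe n - fe (n+1)) :=
        hfes.sub ((summable_nat_add_iff 1).mpr hfes)
      rw [hsub.hasSum_iff_tendsto_nat]
      have heq : ∀ N, ∑ i ∈ Finset.range N, (fe i - fe (i+1)) = fe 0 - fe N := fun N =>
        Finset.sum_range_sub' fe N
      simp only [heq]
      have h2 := (tendsto_const_nhds (x := fe 0) (f := atTop (α := ℕ))).sub hfet
      simpa [hfe0] using h2
    have hsc : ∀ n : ℕ, lam * (lam ^ (n+1))⁻¹ = (lam ^ n)⁻¹ := by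
      intro n
      field_simp
      ring
    have hterm1 : ∀ n, (algebraMap ℂ (X →L[ℂ] X) lam - T) * f n = fe n - fe (n+1) := by
      intro n
      rw [hf, hfe]
      show (algebraMap ℂ (X →L[ℂ] X) lam - T) * ((lam ^ (n+1))⁻¹ • T ^ n)
          = (lam ^ n)⁻¹ • T ^ n - (lam ^ (n+1))⁻¹ • T ^ (n+1)
      have e1 : (algebraMap ℂ (X →L[ℂ] X) lam) * ((lam ^ (n+1))⁻¹ • T ^ n)
          = (lam * (lam ^ (n+1))⁻¹) • T ^ n := by
        rw [Algebra.algebraMap_eq_smul_one, smul_mul_assoc, one_mul, smul_smul]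
      have e2 : T * ((lam ^ (n+1))⁻¹ • T ^ n) = (lam ^ (n+1))⁻¹ • T ^ (n+1) := by
        rw [mul_smul_comm, ← pow_succ']
      rw [sub_mul, e1, e2, hsc n]
    have hterm2 : ∀ n, f n * (algebraMap ℂ (X →L[ℂ] X) lam - T) = fe n - fe (n+1) := by
      intro n
      rw [hf, hfe]
      show ((lam ^ (n+1))⁻¹ • T ^ n) * (algebraMap ℂ (X →L[ℂ] X) lam - T)
          = (lam ^ n)⁻¹ • T ^ n - (lam ^ (n+1))⁻¹ • T ^ (n+1)
      have e1 : ((lam ^ (n+1))⁻¹ • T ^ n) * (algebraMap ℂ (X →L[ℂ] X) lam)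
          = (lam * (lam ^ (n+1))⁻¹) • T ^ n := by
        rw [Algebra.algebraMap_eq_smul_one, mul_smul_comm, mul_one, smul_smul, mul_comm]
      have e2 : ((lam ^ (n+1))⁻¹ • T ^ n) * T = (lam ^ (n+1))⁻¹ • T ^ (n+1) := by
        rw [smul_mul_assoc, ← pow_succ]
      rw [mul_sub, e1, e2, hsc n]
    have hmul1 : (algebraMap ℂ (X →L[ℂ] X) lam - T) * R = 1 := by
      have h1 : HasSum (fun n => (algebraMap ℂ (X →L[ℂ] X) lam - T) * f n)
          ((algebraMap ℂ (X →L[ℂ] X) lam - T) * R) := hfs.hasSum.mul_left _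
      simp only [hterm1] at h1
      exact h1.unique htel
    have hmul2 : R * (algebraMap ℂ (X →L[ℂ] X) lam - T) = 1 := by
      have h1 : HasSum (fun n => f n * (algebraMap ℂ (X →L[ℂ] X) lam - T))
          (R * (algebraMap ℂ (X →L[ℂ] X) lam - T)) := hfs.hasSum.mul_right _
      simp only [hterm2] at h1
      exact h1.unique htel
    refine ⟨⟨algebraMap ℂ (X →L[ℂ] X) lam - T, R, hmul1, hmul2⟩, rfl, ?_⟩
    show ‖R‖ ≤ Q + (1/2) * (‖lam‖ - 1)⁻¹
    set K : ℝ := Q + (1/2) * (‖lam‖ - 1)⁻¹ with hK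
    have hl1 : (0:ℝ) < ‖lam‖ - 1 := by linarith
    have hKpos : 0 < K := by
      have h2 : 0 < (‖lam‖-1)⁻¹ := inv_pos.mpr hl1
      rw [hK]
      linarith [hQpos]
    have hRu : ∀ (u : X) (g : X →L[ℂ] ℂ), ‖u‖ ≤ 1 → ‖g‖ ≤ 1 → ‖g (R u)‖ ≤ K := by
      intro u g hu hg
      have h1 : HasSum (fun n => (f n) u) (R u) := by
        have h2 := hfs.hasSum.mapL (ContinuousLinearMap.apply ℂ X u)
        simpa [ContinuousLinearMap.apply_apply] using h2
      have h2 : HasSum (fun n => g ((f n) u)) (g (R u)) := h1.mapL g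
      set φ : ℕ → ℝ := fun n => ‖g ((f n) u)‖ with hφ
      have hφval : ∀ n, φ n = ‖lam‖⁻¹ ^ (n+1) * ‖g ((T ^ n) u)‖ := by
        intro n
        rw [hφ, hf]
        simp only [ContinuousLinearMap.smul_apply, map_smul, smul_eq_mul, norm_mul,
          norm_inv, norm_pow, inv_pow]
      have hgTn : ∀ n : ℕ, ‖g ((T ^ n) u)‖ ≤ D := by
        intro n
        calc ‖g ((T ^ n) u)‖ ≤ ‖g‖ * ‖(T ^ n) u‖ := g.le_opNorm _
          _ ≤ 1 * ‖(T ^ n) u‖ := by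
              exact mul_le_mul_of_nonneg_right hg (norm_nonneg _)
          _ = ‖(T ^ n) u‖ := one_mul _
          _ ≤ ‖T ^ n‖ * ‖u‖ := (T ^ n).le_opNorm u
          _ ≤ ‖T ^ n‖ * 1 := by
              exact mul_le_mul_of_nonneg_left hu (norm_nonneg _)
          _ = ‖T ^ n‖ := mul_one _
          _ ≤ D := hTD n
      have hφle : ∀ n, φ n ≤ D * ‖lam‖⁻¹ ^ (n+1) := by
        intro n
        rw [hφval n]
        have hp : (0:ℝ) ≤ ‖lam‖⁻¹ ^ (n+1) := pow_nonneg hs0 _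
        calc ‖lam‖⁻¹ ^ (n+1) * ‖g ((T ^ n) u)‖ ≤ ‖lam‖⁻¹ ^ (n+1) * D :=
              mul_le_mul_of_nonneg_left (hgTn n) hp
          _ = D * ‖lam‖⁻¹ ^ (n+1) := mul_comm _ _
      have hφnn : ∀ n, 0 ≤ φ n := fun n => norm_nonneg _
      have hφsum : Summable φ := Summable.of_nonneg_of_le hφnn hφle hgeo
      have hgRu : ‖g (R u)‖ ≤ ∑' n, φ n := by
        rw [← h2.tsum_eq]
        exact norm_tsum_le_tsum_norm hφsum
      have hsplit : ∑ i ∈ Finset.range (m+1), φ i + ∑' i, φ (i + (m+1)) = ∑' n, φ n :=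
        Summable.sum_add_tsum_nat_add (m+1) hφsum
      have hhead : ∑ i ∈ Finset.range (m+1), φ i ≤ ((m:ℝ)+1) * D := by
        have hb : ∀ i ∈ Finset.range (m+1), φ i ≤ D := by
          intro i _
          have h3 := hφle i
          have hp1 : ‖lam‖⁻¹ ^ (i+1) ≤ 1 := pow_le_one₀ hs0 (le_of_lt hs1)
          nlinarith [hDpos]
        calc ∑ i ∈ Finset.range (m+1), φ i ≤ ∑ _i ∈ Finset.range (m+1), D :=
              Finset.sum_le_sum hb
          _ = ((m:ℝ)+1) * D := by
              rw [Finset.sum_const, Finset.card_range, nsmul_eq_mul]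
              push_cast
              ring
      set w : ℕ → ℝ := fun i => ‖g ((T ^ (i + m + 1)) u)‖ with hw
      have hφtail : ∀ i, φ (i + (m+1)) ≤ (1/2) * ‖lam‖⁻¹ ^ (i+1) + 2^j * w i ^ m := by
        intro i
        rw [hφval]
        have hidx : i + (m+1) = i + m + 1 := by omega
        have e1 : ‖lam‖⁻¹ ^ (i + (m+1) + 1) ≤ ‖lam‖⁻¹ ^ (i+1) :=
          pow_le_pow_of_le_one hs0 (le_of_lt hs1) (by omega)
        have e2 : ‖g ((T ^ (i + (m+1))) u)‖ = w i := by
          rw [hw, hidx]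
        have e3 : w i ≤ 1/2 + 2^j * w i ^ m := by
          have h4 := aux_half j (w i) (norm_nonneg _)
          rw [hm]
          exact h4
        have hwnn : (0:ℝ) ≤ w i := norm_nonneg _
        have hp1 : ‖lam‖⁻¹ ^ (i+1) ≤ 1 := pow_le_one₀ hs0 (le_of_lt hs1)
        have hp0 : (0:ℝ) ≤ ‖lam‖⁻¹ ^ (i+1) := pow_nonneg hs0 _
        have hp0' : (0:ℝ) ≤ ‖lam‖⁻¹ ^ (i + (m+1) + 1) := pow_nonneg hs0 _
        rw [e2]
        have h5 : ‖lam‖⁻¹ ^ (i + (m+1) + 1) * w i ≤ ‖lam‖⁻¹ ^ (i+1) * w i :=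
          mul_le_mul_of_nonneg_right e1 hwnn
        have h6 : ‖lam‖⁻¹ ^ (i+1) * w i ≤ ‖lam‖⁻¹ ^ (i+1) * (1/2 + 2^j * w i ^ m) :=
          mul_le_mul_of_nonneg_left e3 hp0
        have h7 : ‖lam‖⁻¹ ^ (i+1) * (1/2 + 2^j * w i ^ m)
            ≤ (1/2) * ‖lam‖⁻¹ ^ (i+1) + 2^j * w i ^ m := by
          have h8 : (0:ℝ) ≤ 2^j * w i ^ m := by positivity
          nlinarith
        linarith
      have hwsum_bound : ∀ M : ℕ, ∑ i ∈ Finset.range M, w i ^ m ≤ B * c ^ m := by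
        intro M
        have h5 := key3 u g (m + M)
        rw [Finset.sum_Ico_eq_sum_range] at h5
        have hMM : m + M - m = M := by omega
        rw [hMM] at h5
        have heq : ∀ i, ‖g ((T ^ (m + i + 1)) u)‖ ^ m = w i ^ m := by
          intro i
          rw [hw]
          have : m + i = i + m := Nat.add_comm m i
          rw [this]
        calc ∑ i ∈ Finset.range M, w i ^ m
            = ∑ i ∈ Finset.range M, ‖g ((T ^ (m + i + 1)) u)‖ ^ m :=
              Finset.sum_congr rfl fun i _ => (heq i).symm
          _ ≤ B * (c * (‖u‖ * ‖g‖)) ^ m := h5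
          _ ≤ B * c ^ m := by
              have h9a : ‖u‖ * ‖g‖ ≤ 1 := by
                calc ‖u‖ * ‖g‖ ≤ 1 * 1 := mul_le_mul hu hg (norm_nonneg g) zero_le_one
                  _ = 1 := one_mul 1
              have h9 : c * (‖u‖*‖g‖) ≤ c := by
                nlinarith [hcpos]
              have h10 : (0:ℝ) ≤ c * (‖u‖*‖g‖) := by positivity
              have h11 := pow_le_pow_left₀ h10 h9 m
              have hB0 : (0:ℝ) ≤ B := by linarith
              exact mul_le_mul_of_nonneg_left h11 hB0
      have hwnn' : ∀ i : ℕ, (0:ℝ) ≤ w i ^ m := fun i => pow_nonneg (norm_nonneg _) m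
      have hwsum : Summable (fun i => w i ^ m) :=
        summable_of_sum_range_le hwnn' hwsum_bound
      have hwt : ∑' i, w i ^ m ≤ B * c ^ m :=
        Real.tsum_le_of_sum_range_le hwnn' hwsum_bound
      have hgeo2 : Summable (fun i : ℕ => (1/2) * ‖lam‖⁻¹ ^ (i+1)) :=
        ((summable_nat_add_iff 1).mpr hgeo0).mul_left _
      have htail : ∑' i, φ (i + (m+1)) ≤ (1/2) * (‖lam‖ - 1)⁻¹ + 2^j * (B * c^m) := by
        have hsum2 : Summable (fun i => (1/2) * ‖lam‖⁻¹ ^ (i+1) + 2^j * w i ^ m) :=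
          hgeo2.add (hwsum.mul_left _)
        have h6 : ∑' i, φ (i+(m+1))
            ≤ ∑' i, ((1/2) * ‖lam‖⁻¹ ^ (i+1) + 2^j * w i ^ m) :=
          Summable.tsum_le_tsum hφtail ((summable_nat_add_iff (m+1)).mpr hφsum) hsum2
        rw [Summable.tsum_add hgeo2 (hwsum.mul_left _), tsum_mul_left, tsum_mul_left] at h6
        have h7 : ∑' i : ℕ, ‖lam‖⁻¹ ^ (i+1) = (‖lam‖ - 1)⁻¹ := by
          have h8 : (fun i : ℕ => ‖lam‖⁻¹ ^ (i+1)) = fun i : ℕ => ‖lam‖⁻¹ * ‖lam‖⁻¹ ^ i := by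
            funext i
            rw [pow_succ']
          rw [h8, tsum_mul_left, tsum_geometric_of_lt_one hs0 hs1]
          have hLpos : (0:ℝ) < ‖lam‖ := by linarith
          have h1ne : (1:ℝ) - ‖lam‖⁻¹ ≠ 0 := ne_of_gt (by linarith [hs1])
          have hlne : ‖lam‖ - 1 ≠ 0 := ne_of_gt hl1
          field_simp
        rw [h7] at h6
        have h9 : (2:ℝ)^j * ∑' i, w i^m ≤ 2^j * (B*c^m) :=
          mul_le_mul_of_nonneg_left hwt (by positivity)
        linarith
      rw [hK, hQ]
      calc ‖g (R u)‖ ≤ ∑' n, φ n := hgRu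
        _ = ∑ i ∈ Finset.range (m+1), φ i + ∑' i, φ (i + (m+1)) := hsplit.symm
        _ ≤ ((m:ℝ)+1) * D + (1/2 * (‖lam‖ - 1)⁻¹ + 2^j * (B * c^m)) := add_le_add hhead htail
        _ = ((m:ℝ) + 1) * D + 2 ^ j * (B * c ^ m) + 1 / 2 * (‖lam‖ - 1)⁻¹ := by ring
    have hRgen : ∀ (u : X) (g : X →L[ℂ] ℂ), ‖g (R u)‖ ≤ K * ‖u‖ * ‖g‖ := by
      intro u g
      rcases eq_or_ne u 0 with h0 | h0
      · simp [h0]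
      rcases eq_or_ne g 0 with h0' | h0'
      · simp [h0']
      have hun : 0 < ‖u‖ := norm_pos_iff.mpr h0
      have hgn : 0 < ‖g‖ := norm_pos_iff.mpr h0'
      set u' : X := ((‖u‖⁻¹ : ℝ) : ℂ) • u with hu'
      set g' : X →L[ℂ] ℂ := ((‖g‖⁻¹ : ℝ) : ℂ) • g with hg'
      have hnu' : ‖u'‖ ≤ 1 := by
        rw [hu', norm_smul, Complex.norm_real, Real.norm_of_nonneg (by positivity)]
        rw [inv_mul_cancel₀ (ne_of_gt hun)]
      have hng' : ‖g'‖ ≤ 1 := by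
        rw [hg', norm_smul ((‖g‖⁻¹ : ℝ) : ℂ) g, Complex.norm_real,
          Real.norm_of_nonneg (by positivity)]
        rw [inv_mul_cancel₀ (ne_of_gt hgn)]
      have h12 := hRu u' g' hnu' hng'
      have hval : ‖g' (R u')‖ = ‖u‖⁻¹ * ‖g‖⁻¹ * ‖g (R u)‖ := by
        rw [hu', hg']
        simp only [map_smul, ContinuousLinearMap.smul_apply, smul_eq_mul, norm_mul,
          Complex.norm_real, Real.norm_of_nonneg (le_of_lt (inv_pos.mpr hun)),
          Real.norm_of_nonneg (le_of_lt (inv_pos.mpr hgn))]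
        ring
      rw [hval] at h12
      have h13 : ‖g (R u)‖ = ‖u‖ * ‖g‖ * (‖u‖⁻¹ * ‖g‖⁻¹ * ‖g (R u)‖) := by
        field_simp
      rw [h13]
      calc ‖u‖ * ‖g‖ * (‖u‖⁻¹ * ‖g‖⁻¹ * ‖g (R u)‖) ≤ ‖u‖ * ‖g‖ * K := by
            refine mul_le_mul_of_nonneg_left h12 (by positivity)
        _ = K * ‖u‖ * ‖g‖ := by ring
    refine ContinuousLinearMap.opNorm_le_bound _ hKpos.le fun u => ?_
    refine NormedSpace.norm_le_dual_bound ℂ _ (by positivity) fun g => ?_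
    calc ‖g (R u)‖ ≤ K * ‖u‖ * ‖g‖ := hRgen u g
      _ = K * ‖u‖ * ‖g‖ := rfl
  -- every spectral value has modulus < 1
  have hspec : ∀ lam0 ∈ spectrum ℂ T, ‖lam0‖ < 1 := by
    intro lam0 hmem
    by_contra hge
    push_neg at hge
    have hTn : ‖lam0‖ ≤ ‖T‖ := spectrum.norm_le_norm_of_mem hmem
    have hT0 : (0:ℝ) < ‖T‖ + 1 := by positivity
    obtain ⟨δ, hδpos, hδsmall⟩ : ∃ δ : ℝ, 0 < δ ∧ δ * ‖lam0‖ * Q < 1/2 := by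
      have hden : (0:ℝ) < 2 * (‖T‖ + 1) * (Q + 1) :=
        mul_pos (mul_pos two_pos hT0) (by linarith [hQpos])
      refine ⟨1 / (2 * (‖T‖ + 1) * (Q + 1)), one_div_pos.mpr hden, ?_⟩
      rw [div_mul_eq_mul_div, div_mul_eq_mul_div, div_lt_iff₀ hden]
      nlinarith [hQpos, hTn, hT0, hge, mul_nonneg (sub_nonneg.mpr hTn) hQpos.le]
    set t : ℝ := 1 + δ with ht
    have ht1 : 1 < t := by rw [ht]; linarith
    set lam : ℂ := (t : ℂ) * lam0 with hlam
    have hl0pos : (0:ℝ) < ‖lam0‖ := by linarith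
    have hnl : ‖lam‖ = t * ‖lam0‖ := by
      rw [hlam, norm_mul, Complex.norm_real, Real.norm_of_nonneg (by linarith : (0:ℝ) ≤ t)]
    have hgt : 1 < ‖lam‖ := by
      rw [hnl]
      nlinarith
    obtain ⟨W, hWval, hWinv⟩ := hres lam hgt
    have hle : ‖lam0‖ * δ ≤ ‖lam‖ - 1 := by
      rw [hnl, ht]
      nlinarith
    have hinvle : (‖lam‖ - 1)⁻¹ ≤ (‖lam0‖ * δ)⁻¹ := by
      apply inv_anti₀ (by positivity) hle
    have hWinv2 : ‖((W⁻¹ : (X →L[ℂ] X)ˣ) : X →L[ℂ] X)‖ ≤ Q + (1/2) * (‖lam0‖ * δ)⁻¹ := by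
      have : (1/2 : ℝ) * (‖lam‖ - 1)⁻¹ ≤ (1/2) * (‖lam0‖ * δ)⁻¹ := by linarith
      linarith [hWinv]
    have hpert : ‖(algebraMap ℂ (X →L[ℂ] X) lam0 - T) - (W : X →L[ℂ] X)‖ = δ * ‖lam0‖ := by
      rw [hWval]
      have h1 : (algebraMap ℂ (X →L[ℂ] X) lam0 - T) - (algebraMap ℂ (X →L[ℂ] X) lam - T)
          = algebraMap ℂ (X →L[ℂ] X) (lam0 - lam) := by
        rw [map_sub]
        abel
      rw [h1, norm_algebraMap']
      have h2 : lam0 - lam = ((-δ : ℝ) : ℂ) * lam0 := by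
        rw [hlam, ht]
        push_cast
        ring
      rw [h2, norm_mul, Complex.norm_real, Real.norm_of_nonpos (by linarith : (-δ:ℝ) ≤ 0)]
      ring_nf
    have hWinvpos : 0 < ‖((W⁻¹ : (X →L[ℂ] X)ˣ) : X →L[ℂ] X)‖ := Units.norm_pos _
    have hsmall : δ * ‖lam0‖ * ‖((W⁻¹ : (X →L[ℂ] X)ˣ) : X →L[ℂ] X)‖ < 1 := by
      have hinv_eq : (‖lam0‖ * δ)⁻¹ = ‖lam0‖⁻¹ * δ⁻¹ := mul_inv_rev ‖lam0‖ δ |>.trans (mul_comm _ _)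
      have h3 : δ * ‖lam0‖ * (Q + (1/2) * (‖lam0‖ * δ)⁻¹) = δ * ‖lam0‖ * Q + 1/2 := by
        have e0 : (‖lam0‖ * δ) * (‖lam0‖ * δ)⁻¹ = 1 := mul_inv_cancel₀ (by positivity)
        calc δ * ‖lam0‖ * (Q + (1/2) * (‖lam0‖ * δ)⁻¹)
            = δ * ‖lam0‖ * Q + (1/2) * ((‖lam0‖ * δ) * (‖lam0‖ * δ)⁻¹) := by ring
          _ = δ * ‖lam0‖ * Q + 1/2 := by rw [e0, mul_one]
      have h4 : δ * ‖lam0‖ * Q < 1/2 := hδsmall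
      calc δ * ‖lam0‖ * ‖((W⁻¹ : (X →L[ℂ] X)ˣ) : X →L[ℂ] X)‖
          ≤ δ * ‖lam0‖ * (Q + (1/2) * (‖lam0‖ * δ)⁻¹) := by
            refine mul_le_mul_of_nonneg_left hWinv2 (by positivity)
        _ = δ * ‖lam0‖ * Q + 1/2 := h3
        _ < 1 := by linarith
    have hcond : ‖(algebraMap ℂ (X →L[ℂ] X) lam0 - T) - (W : X →L[ℂ] X)‖
        < ‖((W⁻¹ : (X →L[ℂ] X)ˣ) : X →L[ℂ] X)‖⁻¹ := by
      rw [hpert, inv_eq_one_div, lt_div_iff₀ hWinvpos]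
      linarith [hsmall]
    have hunit : IsUnit (algebraMap ℂ (X →L[ℂ] X) lam0 - T) := by
      refine ⟨Units.ofNearby W (algebraMap ℂ (X →L[ℂ] X) lam0 - T) hcond, ?_⟩
      simp [Units.ofNearby]
    exact (spectrum.mem_iff.mp hmem) hunit
  -- conclude via Gelfand's formula
  have hrad : spectralRadius ℂ T < 1 := by
    have h1 : ∀ z ∈ spectrum ℂ T, ‖z‖₊ < (1 : NNReal) := by
      intro z hz
      have := hspec z hz
      rw [← NNReal.coe_lt_coe]
      simpa [coe_nnnorm] using this
    simpa using spectrum.spectralRadius_lt_of_forall_lt (a := T) h1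
  obtain ⟨ρ, hρ1, hρ2⟩ := ENNReal.lt_iff_exists_nnreal_btwn.mp hrad
  have hG := spectrum.pow_nnnorm_pow_one_div_tendsto_nhds_spectralRadius T
  have hev : ∀ᶠ n : ℕ in atTop, (‖T ^ n‖₊ : ENNReal) ^ (1/(n:ℝ)) < (ρ : ENNReal) :=
    hG.eventually_lt_const hρ1
  have hev2 : ∀ᶠ n : ℕ in atTop, ‖T ^ n‖ ≤ (ρ:ℝ) ^ n := by
    filter_upwards [hev, eventually_ge_atTop 1] with n hn hn1
    have hne : (n:ℝ) ≠ 0 := by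
      have : 0 < n := hn1
      positivity
    have hx : (‖T ^ n‖₊ : ENNReal) < (ρ : ENNReal) ^ (n:ℝ) := by
      have h2 := ENNReal.rpow_lt_rpow hn (by positivity : (0:ℝ) < (n:ℝ))
      rwa [← ENNReal.rpow_mul, one_div, inv_mul_cancel₀ hne, ENNReal.rpow_one] at h2
    have hx2 : ‖T ^ n‖₊ < ρ ^ n := by
      rw [ENNReal.rpow_natCast, ← ENNReal.coe_pow, ENNReal.coe_lt_coe] at hx
      exact hx
    have := NNReal.coe_lt_coe.mpr hx2
    rw [coe_nnnorm, NNReal.coe_pow] at this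
    exact le_of_lt this
  have hρlt : (ρ:ℝ) < 1 := by exact_mod_cast hρ2
  have hgeo : Tendsto (fun n : ℕ => (ρ:ℝ) ^ n) atTop (𝓝 0) :=
    tendsto_pow_atTop_nhds_zero_of_lt_one (by positivity) hρlt
  exact squeeze_zero' (Eventually.of_forall fun n => norm_nonneg _) hev2 hgeo
end

section
/- Let T be a bounded linear operator on a complex Banach space with ‖T^n‖/n → 0, such that for every x in the closure of (I-T)X there exists p ∈ (1,∞) with ∑_{n=1}^∞ ‖T^n x‖^p < ∞. Then T^n converges in operator norm. -/
open Filter Topology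

set_option maxHeartbeats 1000000
set_option synthInstance.maxHeartbeats 1000000

/-- If `‖T^n‖/n → 0` and for every `x` in the closure of `(I-T)X` there is `p ∈ (1, ∞)` with
`∑_{n=1}^∞ ‖T^n x‖^p < ∞`, then `T^n` converges in operator norm. -/
theorem pow_converges_of_lp_on_range_closure
    {X : Type*} [NormedAddCommGroup X] [NormedSpace ℂ X] [CompleteSpace X]
    (T : X →L[ℂ] X)
    (hpow : Tendsto (fun n : ℕ => ‖T ^ n‖ / (n : ℝ)) atTop (𝓝 0))
    (h : ∀ x ∈ closure (Set.range ⇑(1 - T)), ∃ p : ℝ, 1 < p ∧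
      Summable (fun n : ℕ => ‖(T ^ (n + 1)) x‖ ^ p)) :
    ∃ E : X →L[ℂ] X, Tendsto (fun n : ℕ => T ^ n) atTop (𝓝 E) := by
  classical
  set M : Submodule ℂ X := (LinearMap.range ((1 - T : X →L[ℂ] X) : X →ₗ[ℂ] X)).topologicalClosure with hMdef
  have hMc : (M : Set X) = closure (Set.range ⇑(1 - T)) := by
    rw [hMdef, Submodule.topologicalClosure_coe, LinearMap.coe_range, ContinuousLinearMap.coe_coe]
  have hrange : ∀ x : X, (1 - T) x ∈ M := fun x =>
    Submodule.le_topologicalClosure _ (LinearMap.mem_range_self _ x)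
  -- T preserves M
  have hTM : ∀ x ∈ M, T x ∈ M := by
    intro x hx
    have hx' : x ∈ closure (Set.range ⇑(1 - T)) := by
      rw [← hMc]; exact hx
    have hTx : T x ∈ closure (Set.range ⇑(1 - T)) := by
      refine map_mem_closure T.continuous hx' ?_
      rintro a ⟨w, rfl⟩
      exact ⟨T w, by simp⟩
    have : T x ∈ (M : Set X) := by rw [hMc]; exact hTx
    exact this
  have hTnM : ∀ (n : ℕ) (x : X), x ∈ M → (T ^ n) x ∈ M := by
    intro n
    induction n with
    | zero => intro x hx; simpa using hx
    | succ n ih =>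
      intro x hx
      have hrw : (T ^ (n + 1)) x = (T ^ n) (T x) := by
        rw [pow_succ]; rfl
      rw [hrw]; exact ih _ (hTM x hx)
  haveI : CompleteSpace ↥M := (Submodule.isClosed_topologicalClosure _).completeSpace_coe
  haveI : Nonempty ↥M := ⟨0⟩
  have hbaire := nonempty_interior_of_iUnion_of_closed
    (f := fun i : ℕ × ℕ => {y : ↥M | ∀ N : ℕ,
      ∑ n ∈ Finset.range N, ‖(T ^ (n + 1)) (y : X)‖ ^ (i.1 + 2) ≤ (i.2 : ℝ)})
    (fun i => by
      simp only [Set.setOf_forall]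
      refine isClosed_iInter fun N => isClosed_le ?_ continuous_const
      exact continuous_finset_sum _ fun n _ =>
        (((T ^ (n + 1)).continuous.comp continuous_subtype_val).norm.pow _))
    (by
    rw [Set.eq_univ_iff_forall]
    intro y
    rw [Set.mem_iUnion]
    obtain ⟨p, hp1, hsum⟩ := h (y : X) (by
      have hy : (y : X) ∈ (M : Set X) := y.2
      rwa [hMc] at hy)
    set a : ℕ → ℝ := fun n => ‖(T ^ (n + 1)) (y : X)‖ with ha
    have h0 : ∀ n, 0 ≤ a n := fun n => norm_nonneg _
    have hp0 : (0 : ℝ) < p := lt_trans one_pos hp1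
    have hev : ∀ᶠ n in atTop, a n ^ p < 1 :=
      hsum.tendsto_atTop_zero.eventually_lt_const one_pos
    obtain ⟨N₁, hN₁⟩ := hev.exists_forall_of_atTop
    have hle1 : ∀ n, N₁ ≤ n → a n ≤ 1 := by
      intro n hn
      by_contra hgt
      push_neg at hgt
      have : (1 : ℝ) ≤ a n ^ p := by
        calc (1:ℝ) = 1 ^ p := (Real.one_rpow p).symm
        _ ≤ a n ^ p := Real.rpow_le_rpow (by norm_num) hgt.le hp0.le
      exact absurd (hN₁ n hn) (not_lt.mpr this)
    set k := ⌈p⌉₊ with hk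
    have hkp : p ≤ ((k + 2 : ℕ) : ℝ) := by
      have := Nat.le_ceil p
      push_cast
      push_cast at this
      linarith
    have hcomp : ∀ n : ℕ, a (n + N₁) ^ (k + 2) ≤ a (n + N₁) ^ p := by
      intro n
      rcases eq_or_lt_of_le (h0 (n + N₁)) with hz | hz
      · rw [← hz, Real.zero_rpow hp0.ne', zero_pow (by omega)]
      · calc a (n + N₁) ^ (k + 2) = a (n + N₁) ^ ((k + 2 : ℕ) : ℝ) :=
              (Real.rpow_natCast _ _).symm
        _ ≤ a (n + N₁) ^ p :=
              Real.rpow_le_rpow_of_exponent_ge hz (hle1 _ (Nat.le_add_left _ _)) hkp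
    have hsum2 : Summable fun n => a n ^ (k + 2) := by
      refine (summable_nat_add_iff N₁).mp ?_
      exact Summable.of_nonneg_of_le (fun n => pow_nonneg (h0 _) _) hcomp
        ((summable_nat_add_iff N₁).mpr hsum)
    refine ⟨(k, ⌈∑' n, a n ^ (k + 2)⌉₊), fun N => ?_⟩
    calc ∑ n ∈ Finset.range N, a n ^ (k + 2)
        ≤ ∑' n, a n ^ (k + 2) :=
          Summable.sum_le_tsum _ (fun n _ => pow_nonneg (h0 _) _) hsum2
    _ ≤ _ := Nat.le_ceil _)
  obtain ⟨⟨k, C⟩, y₀, hy₀⟩ := hbaire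
  have hKex : ∃ K : ℝ, 0 ≤ K ∧ ∀ x ∈ M, ∀ N : ℕ,
      ∑ n ∈ Finset.range N, ‖(T ^ (n + 1)) x‖ ^ (k + 2) ≤ K * ‖x‖ ^ (k + 2) := by
    set κ := k + 2 with hκ
    obtain ⟨r, hr, hball⟩ := Metric.mem_nhds_iff.mp (mem_interior_iff_mem_nhds.mp hy₀)
    have hy₀F : ∀ N : ℕ, ∑ n ∈ Finset.range N, ‖(T ^ (n + 1)) (y₀ : X)‖ ^ κ ≤ (C : ℝ) :=
      hball (Metric.mem_ball_self hr)
    refine ⟨2 ^ κ * (2 * C) * (2 / r) ^ κ, by positivity, ?_⟩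
    intro x hx N
    rcases eq_or_ne x 0 with rfl | hx0
    · simp [zero_pow (by omega : κ ≠ 0)]
    have hxn : (0 : ℝ) < ‖x‖ := norm_pos_iff.mpr hx0
    set c : ℝ := r / (2 * ‖x‖) with hc
    have hc0 : 0 < c := by positivity
    set z : ↥M := (c : ℂ) • ⟨x, hx⟩ with hz
    have hzc : (z : X) = (c : ℂ) • x := rfl
    have hznorm : ‖(z : X)‖ = r / 2 := by
      rw [hzc, norm_smul, Complex.norm_real, Real.norm_of_nonneg hc0.le, hc]
      field_simp
    have hw : y₀ + z ∈ Metric.ball y₀ r := by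
      rw [Metric.mem_ball, dist_eq_norm, add_sub_cancel_left]
      rw [show ‖z‖ = ‖(z : X)‖ from rfl, hznorm]
      linarith
    have hwF : ∀ N : ℕ, ∑ n ∈ Finset.range N, ‖(T ^ (n + 1)) ((y₀ + z : ↥M) : X)‖ ^ κ ≤ (C : ℝ) :=
      hball hw
    -- pointwise bound on z
    have hzbd : ∀ n : ℕ, ‖(T ^ (n + 1)) (z : X)‖ ^ κ ≤
        2 ^ κ * (‖(T ^ (n + 1)) ((y₀ + z : ↥M) : X)‖ ^ κ + ‖(T ^ (n + 1)) (y₀ : X)‖ ^ κ) := by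
      intro n
      have h1 : ‖(T ^ (n + 1)) (z : X)‖ ≤
          ‖(T ^ (n + 1)) ((y₀ + z : ↥M) : X)‖ + ‖(T ^ (n + 1)) (y₀ : X)‖ := by
        have : (T ^ (n + 1)) (z : X)
            = (T ^ (n + 1)) ((y₀ + z : ↥M) : X) - (T ^ (n + 1)) (y₀ : X) := by
          rw [← map_sub]
          congr 1
          push_cast
          abel
        rw [this]
        exact norm_sub_le _ _
      calc ‖(T ^ (n + 1)) (z : X)‖ ^ κ
          ≤ (‖(T ^ (n + 1)) ((y₀ + z : ↥M) : X)‖ + ‖(T ^ (n + 1)) (y₀ : X)‖) ^ κ :=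
            pow_le_pow_left₀ (norm_nonneg _) h1 κ
        _ ≤ 2 ^ (κ - 1) * (‖(T ^ (n + 1)) ((y₀ + z : ↥M) : X)‖ ^ κ + ‖(T ^ (n + 1)) (y₀ : X)‖ ^ κ) :=
            add_pow_le (norm_nonneg _) (norm_nonneg _) κ
        _ ≤ _ := by
            apply mul_le_mul_of_nonneg_right _ (by positivity)
            exact pow_le_pow_right₀ (by norm_num) (Nat.sub_le _ _)
    have hsz : ∀ N : ℕ, ∑ n ∈ Finset.range N, ‖(T ^ (n + 1)) (z : X)‖ ^ κ ≤ 2 ^ κ * (2 * C) := by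
      intro N
      calc ∑ n ∈ Finset.range N, ‖(T ^ (n + 1)) (z : X)‖ ^ κ
          ≤ ∑ n ∈ Finset.range N, 2 ^ κ * (‖(T ^ (n + 1)) ((y₀ + z : ↥M) : X)‖ ^ κ
              + ‖(T ^ (n + 1)) (y₀ : X)‖ ^ κ) := Finset.sum_le_sum fun n _ => hzbd n
        _ = 2 ^ κ * (∑ n ∈ Finset.range N, ‖(T ^ (n + 1)) ((y₀ + z : ↥M) : X)‖ ^ κ
              + ∑ n ∈ Finset.range N, ‖(T ^ (n + 1)) (y₀ : X)‖ ^ κ) := by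
            rw [← Finset.mul_sum, Finset.sum_add_distrib]
        _ ≤ 2 ^ κ * ((C : ℝ) + (C : ℝ)) := by
            apply mul_le_mul_of_nonneg_left _ (by positivity)
            exact add_le_add (hwF N) (hy₀F N)
        _ = 2 ^ κ * (2 * C) := by ring
    -- relate z-sums to x-sums
    have hscale : ∀ n : ℕ, ‖(T ^ (n + 1)) (z : X)‖ ^ κ = c ^ κ * ‖(T ^ (n + 1)) x‖ ^ κ := by
      intro n
      rw [hzc, map_smul, norm_smul, Complex.norm_real, Real.norm_of_nonneg hc0.le, mul_pow]
    have hsum : c ^ κ * ∑ n ∈ Finset.range N, ‖(T ^ (n + 1)) x‖ ^ κ ≤ 2 ^ κ * (2 * C) := by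
      rw [Finset.mul_sum]
      calc ∑ n ∈ Finset.range N, c ^ κ * ‖(T ^ (n + 1)) x‖ ^ κ
          = ∑ n ∈ Finset.range N, ‖(T ^ (n + 1)) (z : X)‖ ^ κ :=
            Finset.sum_congr rfl fun n _ => (hscale n).symm
        _ ≤ _ := hsz N
    have hcinv : (c ^ κ)⁻¹ = (2 / r) ^ κ * ‖x‖ ^ κ := by
      rw [← mul_pow, ← inv_pow, hc]
      congr 1
      field_simp
    have hcpos : (0 : ℝ) < c ^ κ := by positivity
    calc ∑ n ∈ Finset.range N, ‖(T ^ (n + 1)) x‖ ^ κ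
        = (c ^ κ)⁻¹ * (c ^ κ * ∑ n ∈ Finset.range N, ‖(T ^ (n + 1)) x‖ ^ κ) := by
          rw [← mul_assoc, inv_mul_cancel₀ hcpos.ne', one_mul]
      _ ≤ (c ^ κ)⁻¹ * (2 ^ κ * (2 * C)) := by
          exact mul_le_mul_of_nonneg_left hsum (by positivity)
      _ = 2 ^ κ * (2 * C) * (2 / r) ^ κ * ‖x‖ ^ κ := by rw [hcinv]; ring
  obtain ⟨K, hK0, hK⟩ := hKex
  set κ := k + 2 with hκ
  have hκ0 : κ ≠ 0 := by omega
  set K₁ : ℝ := K + 1 with hK₁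
  have hK₁1 : (1 : ℝ) ≤ K₁ := by linarith
  have hK₁0 : (0 : ℝ) < K₁ := by linarith
  -- full-range bound
  have hB : ∀ x ∈ M, ∀ N : ℕ,
      ∑ n ∈ Finset.range N, ‖(T ^ n) x‖ ^ κ ≤ K₁ * ‖x‖ ^ κ := by
    intro x hx N
    cases N with
    | zero => simp; positivity
    | succ N =>
      rw [Finset.sum_range_succ']
      have h1 := hK x hx N
      have h2 : ‖(T ^ 0) x‖ ^ κ = ‖x‖ ^ κ := by simp
      rw [h2]
      rw [hK₁]
      linarith
  -- decay bound
  have hD : ∀ x ∈ M, ∀ N : ℕ, ((N : ℝ) + 1) * ‖(T ^ N) x‖ ^ κ ≤ K₁ * K₁ * ‖x‖ ^ κ := by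
    intro x hx N
    have h1 : ∀ j ∈ Finset.range (N + 1), ‖(T ^ N) x‖ ^ κ ≤ K₁ * ‖(T ^ j) x‖ ^ κ := by
      intro j hj
      have hj' : j ≤ N := Nat.lt_succ_iff.mp (Finset.mem_range.mp hj)
      have h2 := hB _ (hTnM j x hx) (N + 1)
      have h3 : ‖(T ^ N) x‖ ^ κ ≤ ∑ n ∈ Finset.range (N + 1), ‖(T ^ n) ((T ^ j) x)‖ ^ κ := by
        have he : (T ^ (N - j)) ((T ^ j) x) = (T ^ N) x := by
          rw [← ContinuousLinearMap.mul_apply, ← pow_add, Nat.sub_add_cancel hj']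
        calc ‖(T ^ N) x‖ ^ κ = ‖(T ^ (N - j)) ((T ^ j) x)‖ ^ κ := by rw [he]
          _ ≤ _ := Finset.single_le_sum (f := fun n => ‖(T ^ n) ((T ^ j) x)‖ ^ κ)
              (fun i _ => by positivity) (Finset.mem_range.mpr (by omega))
      exact h3.trans h2
    have h4 := Finset.sum_le_sum h1
    rw [Finset.sum_const, Finset.card_range, nsmul_eq_mul, ← Finset.mul_sum] at h4
    have h5 := hB x hx (N + 1)
    have h6 : K₁ * ∑ j ∈ Finset.range (N + 1), ‖(T ^ j) x‖ ^ κ ≤ K₁ * (K₁ * ‖x‖ ^ κ) :=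
      mul_le_mul_of_nonneg_left h5 hK₁0.le
    rw [Nat.cast_add, Nat.cast_one] at h4
    calc ((N : ℝ) + 1) * ‖(T ^ N) x‖ ^ κ ≤ K₁ * ∑ j ∈ Finset.range (N + 1), ‖(T ^ j) x‖ ^ κ := h4
      _ ≤ K₁ * (K₁ * ‖x‖ ^ κ) := h6
      _ = K₁ * K₁ * ‖x‖ ^ κ := by ring
  -- contraction step
  set N₀ : ℕ := ⌈(2 : ℝ) ^ κ * (K₁ * K₁)⌉₊ with hN₀
  have hN₀pos : 0 < N₀ := Nat.ceil_pos.mpr (by positivity)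
  have hhalf : ∀ x ∈ M, ‖(T ^ N₀) x‖ ≤ 2⁻¹ * ‖x‖ := by
    intro x hx
    have hA : (0 : ℝ) ≤ ‖(T ^ N₀) x‖ ^ κ := by positivity
    have hBx : (0 : ℝ) ≤ ‖x‖ ^ κ := by positivity
    refine le_of_pow_le_pow_left₀ hκ0 (by positivity) (n := κ) ?_
    have hd := hD x hx N₀
    have hce : (2 : ℝ) ^ κ * (K₁ * K₁) ≤ (N₀ : ℝ) + 1 := by
      have := Nat.le_ceil ((2 : ℝ) ^ κ * (K₁ * K₁))
      rw [← hN₀] at this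
      linarith
    have h6 : (2 : ℝ) ^ κ * (K₁ * K₁) * ‖(T ^ N₀) x‖ ^ κ ≤ ((N₀ : ℝ) + 1) * ‖(T ^ N₀) x‖ ^ κ :=
      mul_le_mul_of_nonneg_right hce hA
    have h7 : K₁ * K₁ * ((2 : ℝ) ^ κ * ‖(T ^ N₀) x‖ ^ κ) ≤ K₁ * K₁ * ‖x‖ ^ κ := by
      nlinarith
    have h8 : (2 : ℝ) ^ κ * ‖(T ^ N₀) x‖ ^ κ ≤ ‖x‖ ^ κ :=
      le_of_mul_le_mul_left h7 (by positivity)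
    rw [mul_pow, inv_pow]
    rw [inv_mul_eq_div, le_div_iff₀ (by positivity : (0 : ℝ) < (2 : ℝ) ^ κ)]
    linarith
  -- geometric decay along multiples of N₀
  have hG : ∀ m : ℕ, ∀ x ∈ M, ‖(T ^ (N₀ * m)) x‖ ≤ 2⁻¹ ^ m * ‖x‖ := by
    intro m
    induction m with
    | zero => intro x hx; simp
    | succ m ih =>
      intro x hx
      have he : (T ^ (N₀ * (m + 1))) x = (T ^ (N₀ * m)) ((T ^ N₀) x) := by
        rw [← ContinuousLinearMap.mul_apply, ← pow_add, ← Nat.mul_succ]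
      rw [he]
      calc ‖(T ^ (N₀ * m)) ((T ^ N₀) x)‖ ≤ 2⁻¹ ^ m * ‖(T ^ N₀) x‖ :=
            ih _ (hTnM N₀ x hx)
        _ ≤ 2⁻¹ ^ m * (2⁻¹ * ‖x‖) :=
            mul_le_mul_of_nonneg_left (hhalf x hx) (by positivity)
        _ = 2⁻¹ ^ (m + 1) * ‖x‖ := by ring
  -- general geometric decay
  set B₀ : ℝ := ∑ s ∈ Finset.range N₀, ‖T ^ s‖ with hB₀
  have hB₀0 : 0 ≤ B₀ := Finset.sum_nonneg fun s _ => norm_nonneg _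
  have hGen : ∀ x ∈ M, ∀ j : ℕ, ‖(T ^ j) x‖ ≤ B₀ * (2⁻¹ ^ (j / N₀) * ‖x‖) := by
    intro x hx j
    have he : (T ^ j) x = (T ^ (j % N₀)) ((T ^ (N₀ * (j / N₀))) x) := by
      rw [← ContinuousLinearMap.mul_apply, ← pow_add, Nat.mod_add_div]
    rw [he]
    calc ‖(T ^ (j % N₀)) ((T ^ (N₀ * (j / N₀))) x)‖
        ≤ ‖T ^ (j % N₀)‖ * ‖(T ^ (N₀ * (j / N₀))) x‖ :=
          ContinuousLinearMap.le_opNorm _ _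
      _ ≤ B₀ * (2⁻¹ ^ (j / N₀) * ‖x‖) := by
          apply mul_le_mul
          · exact Finset.single_le_sum (f := fun s => ‖T ^ s‖)
              (fun i _ => norm_nonneg _) (Finset.mem_range.mpr (Nat.mod_lt _ hN₀pos))
          · exact hG _ _ hx
          · exact norm_nonneg _
          · exact hB₀0
  -- geometric comparison
  set ρ : ℝ := (2 : ℝ)⁻¹ ^ ((N₀ : ℝ)⁻¹) with hρ
  have hρ0 : 0 ≤ ρ := Real.rpow_nonneg (by norm_num) _
  have hρ1 : ρ < 1 := Real.rpow_lt_one (by norm_num) (by norm_num) (by positivity)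
  have hgeo : Summable fun j : ℕ => ρ ^ j := summable_geometric_of_lt_one hρ0 hρ1
  have hcmp : ∀ j : ℕ, (2 : ℝ)⁻¹ ^ (j / N₀) ≤ 2 * ρ ^ j := by
    intro j
    have hjle : (j : ℝ) ≤ (N₀ : ℝ) * (((j / N₀ : ℕ) : ℝ) + 1) := by
      have h1 := Nat.div_add_mod j N₀
      have h2 := Nat.mod_lt j hN₀pos
      have h1' : (N₀ : ℝ) * ((j / N₀ : ℕ) : ℝ) + ((j % N₀ : ℕ) : ℝ) = (j : ℝ) := by
        exact_mod_cast congrArg (Nat.cast : ℕ → ℝ) h1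
      have h2' : ((j % N₀ : ℕ) : ℝ) < (N₀ : ℝ) := by exact_mod_cast h2
      nlinarith
    have hexp : (N₀ : ℝ)⁻¹ * (j : ℝ) - 1 ≤ ((j / N₀ : ℕ) : ℝ) := by
      have hN₀R : (0 : ℝ) < (N₀ : ℝ) := by exact_mod_cast hN₀pos
      rw [sub_le_iff_le_add, inv_mul_le_iff₀ hN₀R]
      linarith [hjle]
    have h2 : ρ ^ j = (2 : ℝ)⁻¹ ^ ((N₀ : ℝ)⁻¹ * (j : ℝ)) := by
      rw [hρ, ← Real.rpow_natCast ((2:ℝ)⁻¹ ^ ((N₀:ℝ)⁻¹)) j, ← Real.rpow_mul (by norm_num)]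
    have h3 : (2 : ℝ) * ρ ^ j = (2 : ℝ)⁻¹ ^ ((N₀ : ℝ)⁻¹ * (j : ℝ) - 1) := by
      rw [h2, Real.rpow_sub (by norm_num), Real.rpow_one]
      field_simp
    rw [h3, ← Real.rpow_natCast ((2:ℝ)⁻¹) (j / N₀)]
    exact Real.rpow_le_rpow_of_exponent_ge (by norm_num) (by norm_num) hexp
  -- summability of the telescoping series
  have hnb : ∀ j : ℕ, ‖(T ^ j - T ^ (j + 1) : X →L[ℂ] X)‖ ≤
      B₀ * ‖(1 - T : X →L[ℂ] X)‖ * 2 * ρ ^ j := by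
    intro j
    refine ContinuousLinearMap.opNorm_le_bound _ (by positivity) fun x => ?_
    have he : (T ^ j - T ^ (j + 1) : X →L[ℂ] X) x = (T ^ j) ((1 - T) x) := by
      simp [ContinuousLinearMap.sub_apply, map_sub, pow_succ,
        ContinuousLinearMap.mul_apply]
    rw [he]
    calc ‖(T ^ j) ((1 - T) x)‖ ≤ B₀ * (2⁻¹ ^ (j / N₀) * ‖(1 - T) x‖) :=
          hGen _ (hrange x) j
      _ ≤ B₀ * ((2 * ρ ^ j) * (‖(1 - T : X →L[ℂ] X)‖ * ‖x‖)) := by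
          apply mul_le_mul_of_nonneg_left _ hB₀0
          exact mul_le_mul (hcmp j) ((1 - T).le_opNorm x) (norm_nonneg _) (by positivity)
      _ = B₀ * ‖(1 - T : X →L[ℂ] X)‖ * 2 * ρ ^ j * ‖x‖ := by ring
  have hns : Summable fun j : ℕ => ‖(T ^ j - T ^ (j + 1) : X →L[ℂ] X)‖ :=
    Summable.of_nonneg_of_le (fun j => norm_nonneg _) hnb
      (by simpa [mul_assoc] using (hgeo.mul_left (B₀ * ‖(1 - T : X →L[ℂ] X)‖ * 2)))
  have hsum : Summable fun j : ℕ => (T ^ j - T ^ (j + 1) : X →L[ℂ] X) :=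
    Summable.of_norm hns
  refine ⟨1 - ∑' j : ℕ, (T ^ j - T ^ (j + 1) : X →L[ℂ] X), ?_⟩
  have ht := hsum.hasSum.tendsto_sum_nat
  have h1 : Tendsto (fun n : ℕ => 1 - ∑ j ∈ Finset.range n, (T ^ j - T ^ (j + 1) : X →L[ℂ] X))
      atTop (𝓝 (1 - ∑' j : ℕ, (T ^ j - T ^ (j + 1) : X →L[ℂ] X))) :=
    tendsto_const_nhds.sub ht
  refine h1.congr fun n => ?_
  rw [Finset.sum_range_sub' (fun i => (T ^ i : X →L[ℂ] X)) n, pow_zero, sub_sub_cancel]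
end

section
/- Let 0 < α < 1 and let T be a bounded linear operator on a Banach space with sup_n ‖M_n^α(T)‖ < ∞, where M_n^α = S_n^α / A_n^α with S_n^α = ∑_{k=0}^n A_{n-k}^{α-1} T^k and A_n^β = (β+n)(β+n-1)⋯(β+1)/n!. Then ‖T^n‖ = O(n^α). -/
/-!
`A^β_n` is the `n`-th coefficient of `(1 - z)^{-β-1}`, so Cesàro convolution adds exponents:
`A^β * A^γ = A^{β+γ+1}`, which is the Chu–Vandermonde identity for `Ring.choose`. Since
`A^{-1} = δ₀`, convolving `S^α = A^{α-1} * (T^k)` with `A^{-α-1}` recovers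
`T^n = ∑_k A^{-α-1}_{n-k} S_k^α`. For `0 < α < 1` the kernel `A^{-α-1}` is `1` at `0` and
nonpositive afterwards, so its `ℓ¹`-mass up to `n` is `2 - A^{-α}_n ≤ 2`; with
`‖S_k^α‖ ≤ M A^α_k ≤ M A^α_n` this gives `‖T^n‖ ≤ 2 M A^α_n`, and
`A^α_n = ∏ (1 + α/j) ≤ exp (α H_n) ≤ e^α n^α`.
-/

open Filter Topology

/-- The binomial-type coefficients `A_n^β`: `A_0^β = 1` and
`A_n^β = (β+n)(β+n-1)⋯(β+1)/n! = ∏_{j=1}^n (β+j)/j`. -/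
noncomputable def cesaroCoeff (β : ℝ) (n : ℕ) : ℝ :=
  ∏ j ∈ Finset.Icc 1 n, (β + j) / j

open Finset

lemma Ring.choose_eq_inv_factorial_mul_prod {K : Type*} [Field K] [CharZero K] (a : K) (n : ℕ) :
    Ring.choose a n = (n.factorial : K)⁻¹ * ∏ j ∈ range n, (a - j) := by
  rw [Ring.choose_eq_smul, ← Polynomial.aeval_eq_smeval, Polynomial.aeval_def,
    ← Polynomial.eval_map, descPochhammer_map, descPochhammer_eval_eq_prod_range, smul_eq_mul]

lemma cesaroCoeff_zero_right (β : ℝ) : cesaroCoeff β 0 = 1 := by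
  simp [cesaroCoeff]

lemma cesaroCoeff_succ (β : ℝ) (n : ℕ) :
    cesaroCoeff β (n + 1) = cesaroCoeff β n * ((β + (n + 1)) / (n + 1)) := by
  rw [cesaroCoeff, prod_Icc_succ_top (by omega)]
  push_cast
  rfl

lemma cesaroCoeff_zero_left (n : ℕ) : cesaroCoeff 0 n = 1 :=
  prod_eq_one fun j hj => by
    rw [zero_add, div_self (Nat.cast_ne_zero.mpr (by grind))]

lemma cesaroCoeff_neg_one {n : ℕ} (hn : n ≠ 0) : cesaroCoeff (-1) n = 0 :=
  prod_eq_zero (i := 1) (by simp; omega) (by simp)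

lemma cesaroCoeff_pos {β : ℝ} (hβ : -1 < β) (n : ℕ) : 0 < cesaroCoeff β n :=
  prod_pos fun j hj => by
    have : (1 : ℝ) ≤ j := by exact_mod_cast (mem_Icc.mp hj).1
    exact div_pos (by linarith) (by linarith)

lemma cesaroCoeff_nonneg {β : ℝ} (hβ : -1 ≤ β) (n : ℕ) : 0 ≤ cesaroCoeff β n :=
  prod_nonneg fun j hj => by
    have : (1 : ℝ) ≤ j := by exact_mod_cast (mem_Icc.mp hj).1
    exact div_nonneg (by linarith) (by linarith)

lemma cesaroCoeff_eq_neg_one_pow_mul_choose (β : ℝ) (n : ℕ) :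
    cesaroCoeff β n = (-1) ^ n * Ring.choose (-β - 1) n := by
  induction n with
  | zero => simp [cesaroCoeff_zero_right]
  | succ n ih =>
    rw [cesaroCoeff_succ, ih, Ring.choose_eq_inv_factorial_mul_prod,
      Ring.choose_eq_inv_factorial_mul_prod, prod_range_succ, Nat.factorial_succ]
    push_cast
    field_simp
    ring

lemma cesaroCoeff_add_add_one (β γ : ℝ) (n : ℕ) :
    cesaroCoeff (β + γ + 1) n =
      ∑ ij ∈ antidiagonal n, cesaroCoeff β ij.1 * cesaroCoeff γ ij.2 := by
  have h : -(β + γ + 1) - 1 = (-β - 1) + (-γ - 1) := by ring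
  rw [cesaroCoeff_eq_neg_one_pow_mul_choose, h, Ring.add_choose_eq _ (Commute.all _ _),
    mul_sum]
  refine sum_congr rfl fun ij hij => ?_
  rw [← mem_antidiagonal.mp hij, cesaroCoeff_eq_neg_one_pow_mul_choose,
    cesaroCoeff_eq_neg_one_pow_mul_choose, pow_add]
  ring

lemma sum_range_cesaroCoeff (β : ℝ) (n : ℕ) :
    ∑ j ∈ range (n + 1), cesaroCoeff β j = cesaroCoeff (β + 1) n := by
  simpa [cesaroCoeff_zero_left, Nat.sum_antidiagonal_eq_sum_range_succ_mk]
    using (cesaroCoeff_add_add_one β 0 n).symm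

lemma cesaroCoeff_monotone {β : ℝ} (hβ : 0 ≤ β) : Monotone (cesaroCoeff β) :=
  monotone_nat_of_le_succ fun n => by
    rw [cesaroCoeff_succ]
    refine le_mul_of_one_le_right (cesaroCoeff_nonneg (by linarith) n) ?_
    rw [one_le_div (by positivity)]
    linarith

lemma cesaroCoeff_nonpos {β : ℝ} (hβ₂ : -2 ≤ β) (hβ₁ : β ≤ -1) {n : ℕ} (hn : n ≠ 0) :
    cesaroCoeff β n ≤ 0 := by
  induction n with
  | zero => exact absurd rfl hn
  | succ n ih =>
    rcases Nat.eq_zero_or_pos n with rfl | hpos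
    · have h₁ : cesaroCoeff β 1 = β + 1 := by simp [cesaroCoeff]
      linarith
    · rw [cesaroCoeff_succ]
      have : (1 : ℝ) ≤ n := by exact_mod_cast hpos
      exact mul_nonpos_of_nonpos_of_nonneg (ih hpos.ne')
        (div_nonneg (by linarith) (by linarith))

lemma sum_range_abs_cesaroCoeff_le_two {β : ℝ} (hβ₂ : -2 ≤ β) (hβ₁ : β ≤ -1) (n : ℕ) :
    ∑ j ∈ range (n + 1), |cesaroCoeff β j| ≤ 2 := by
  have habs : ∀ j ∈ range (n + 1),
      |cesaroCoeff β j| = 2 * (if j = 0 then 1 else 0) - cesaroCoeff β j := by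
    intro j _
    rcases eq_or_ne j 0 with rfl | hj
    · norm_num [cesaroCoeff_zero_right]
    · simp [hj, abs_of_nonpos (cesaroCoeff_nonpos hβ₂ hβ₁ hj)]
  rw [sum_congr rfl habs, sum_sub_distrib, ← mul_sum, sum_ite_eq', if_pos (by simp),
    sum_range_cesaroCoeff]
  linarith [cesaroCoeff_nonneg (β := β + 1) (by linarith) n]

lemma cesaroCoeff_le_exp_mul_rpow {β : ℝ} (hβ : 0 ≤ β) {n : ℕ} (hn : n ≠ 0) :
    cesaroCoeff β n ≤ Real.exp β * (n : ℝ) ^ β := by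
  have hfactor : ∀ j ∈ Icc 1 n, (β + j) / j ≤ Real.exp (β * (j : ℝ)⁻¹) := fun j hj => by
    have : (0 : ℝ) < j := by exact_mod_cast (mem_Icc.mp hj).1
    rw [add_div, div_self this.ne', ← div_eq_mul_inv]
    exact Real.add_one_le_exp _
  have hharmonic : ∑ j ∈ Icc 1 n, β * (j : ℝ)⁻¹ = β * harmonic n := by
    simp [harmonic_eq_sum_Icc, mul_sum]
  calc cesaroCoeff β n ≤ ∏ j ∈ Icc 1 n, Real.exp (β * (j : ℝ)⁻¹) :=
        prod_le_prod (fun j hj => div_nonneg (by positivity) (by positivity)) hfactor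
    _ = Real.exp (β * harmonic n) := by rw [← Real.exp_sum, hharmonic]
    _ ≤ Real.exp (β * (1 + Real.log n)) := by
        gcongr
        exact harmonic_le_one_add_log n
    _ = Real.exp β * (n : ℝ) ^ β := by
        rw [mul_add, mul_one, Real.exp_add, Real.rpow_def_of_pos (by positivity), mul_comm β]

/-- In the paper's notation, `S_n^α = cesaroSum (α - 1) (T ^ ·) n`. -/
noncomputable def cesaroSum {E : Type*} [AddCommMonoid E] [Module ℝ E] (β : ℝ) (a : ℕ → E)
    (n : ℕ) : E :=
  ∑ k ∈ range (n + 1), cesaroCoeff β (n - k) • a k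

lemma cesaroSum_neg_one {E : Type*} [AddCommMonoid E] [Module ℝ E] (a : ℕ → E) (n : ℕ) :
    cesaroSum (-1) a n = a n := by
  rw [cesaroSum, sum_eq_single_of_mem n (self_mem_range_succ n), Nat.sub_self,
    cesaroCoeff_zero_right, one_smul]
  intro k hk hkn
  rw [cesaroCoeff_neg_one (by grind), zero_smul]

noncomputable def cesaroSeries (R : Type*) [Ring R] [Algebra ℝ R] (β : ℝ) : PowerSeries R :=
  PowerSeries.mk fun n => algebraMap ℝ R (cesaroCoeff β n)

section PowerSeries

variable {R : Type*} [Ring R] [Algebra ℝ R]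

lemma cesaroSeries_mul_cesaroSeries (β γ : ℝ) :
    cesaroSeries R β * cesaroSeries R γ = cesaroSeries R (β + γ + 1) := by
  ext n
  simp [cesaroSeries, PowerSeries.coeff_mul, cesaroCoeff_add_add_one]

lemma coeff_mul_cesaroSeries (f : PowerSeries R) (β : ℝ) (n : ℕ) :
    PowerSeries.coeff n (f * cesaroSeries R β) =
      cesaroSum β (fun k => PowerSeries.coeff k f) n := by
  rw [PowerSeries.coeff_mul, Nat.sum_antidiagonal_eq_sum_range_succ_mk, cesaroSum]
  refine sum_congr rfl fun k _ => ?_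
  simp [cesaroSeries, Algebra.smul_def, Algebra.commutes]

lemma cesaroSum_cesaroSum (β γ : ℝ) (a : ℕ → R) (n : ℕ) :
    cesaroSum β (cesaroSum γ a) n = cesaroSum (γ + β + 1) a n := by
  have hγ : cesaroSum γ a =
      fun k => PowerSeries.coeff k (PowerSeries.mk a * cesaroSeries R γ) := by
    ext k
    rw [coeff_mul_cesaroSeries]
    simp only [PowerSeries.coeff_mk]
  rw [hγ, ← coeff_mul_cesaroSeries, mul_assoc, cesaroSeries_mul_cesaroSeries,
    coeff_mul_cesaroSeries]
  simp only [PowerSeries.coeff_mk]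

end PowerSeries

lemma norm_le_of_norm_cesaroSum_le {R : Type*} [NormedRing R] [NormedAlgebra ℝ R] {α : ℝ}
    (hα₀ : 0 ≤ α) (hα₁ : α ≤ 1) {a : ℕ → R} {M : ℝ}
    (hS : ∀ n, ‖cesaroSum (α - 1) a n‖ ≤ M * cesaroCoeff α n) (n : ℕ) :
    ‖a n‖ ≤ 2 * M * cesaroCoeff α n := by
  have hM : 0 ≤ M := by simpa [cesaroCoeff_zero_right] using (norm_nonneg _).trans (hS 0)
  have hinv : a n = cesaroSum (-α - 1) (cesaroSum (α - 1) a) n := by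
    rw [cesaroSum_cesaroSum, show α - 1 + (-α - 1) + 1 = -1 by ring, cesaroSum_neg_one]
  calc ‖a n‖
      ≤ ∑ k ∈ range (n + 1), |cesaroCoeff (-α - 1) (n - k)| * ‖cesaroSum (α - 1) a k‖ := by
        rw [hinv, cesaroSum]
        refine (norm_sum_le _ _).trans_eq ?_
        simp only [norm_smul, Real.norm_eq_abs]
    _ ≤ ∑ k ∈ range (n + 1), |cesaroCoeff (-α - 1) (n - k)| * (M * cesaroCoeff α n) := by
        gcongr with k hk
        exact (hS k).trans (by gcongr; exact cesaroCoeff_monotone hα₀ (by grind))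
    _ ≤ 2 * (M * cesaroCoeff α n) := by
        have hreflect : ∑ k ∈ range (n + 1), |cesaroCoeff (-α - 1) (n - k)| =
            ∑ j ∈ range (n + 1), |cesaroCoeff (-α - 1) j| := by
          simpa using sum_range_reflect (fun j => |cesaroCoeff (-α - 1) j|) (n + 1)
        rw [← sum_mul, hreflect]
        gcongr
        · exact mul_nonneg hM (cesaroCoeff_nonneg (by linarith) n)
        · exact sum_range_abs_cesaroCoeff_le_two (by linarith) (by linarith) n
    _ = 2 * M * cesaroCoeff α n := by ring

theorem norm_pow_bigO_of_cesaro_alpha_bounded_general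
    {X : Type*} [NormedAddCommGroup X] [NormedSpace ℝ X]
    (T : X →L[ℝ] X) (α : ℝ) (hα0 : 0 < α) (hα1 : α < 1)
    (h : ∃ M : ℝ, ∀ n : ℕ,
      ‖(cesaroCoeff α n)⁻¹ •
        ∑ k ∈ Finset.range (n + 1), cesaroCoeff (α - 1) (n - k) • T ^ k‖ ≤ M) :
    ∃ C : ℝ, ∀ n : ℕ, 1 ≤ n → ‖T ^ n‖ ≤ C * (n : ℝ) ^ α := by
  obtain ⟨M, hM⟩ := h
  have hS : ∀ n, ‖cesaroSum (α - 1) (T ^ ·) n‖ ≤ M * cesaroCoeff α n := fun n => by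
    have hA := cesaroCoeff_pos (by linarith : -1 < α) n
    calc ‖cesaroSum (α - 1) (T ^ ·) n‖
        = cesaroCoeff α n * ‖(cesaroCoeff α n)⁻¹ • cesaroSum (α - 1) (T ^ ·) n‖ := by
          rw [norm_smul, Real.norm_of_nonneg (inv_nonneg.2 hA.le), mul_inv_cancel_left₀ hA.ne']
      _ ≤ M * cesaroCoeff α n := by
          rw [mul_comm M]
          exact mul_le_mul_of_nonneg_left (hM n) hA.le
  have hM₀ : 0 ≤ M := (norm_nonneg _).trans (hM 0)
  refine ⟨2 * M * Real.exp α, fun n hn => ?_⟩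
  calc ‖T ^ n‖ ≤ 2 * M * cesaroCoeff α n :=
        norm_le_of_norm_cesaroSum_le hα0.le hα1.le hS n
    _ ≤ 2 * M * (Real.exp α * (n : ℝ) ^ α) := by
        gcongr
        exact cesaroCoeff_le_exp_mul_rpow hα0.le (by omega)
    _ = 2 * M * Real.exp α * (n : ℝ) ^ α := by ring

/-- If `0 < α < 1` and `T` is `(C,α)`-bounded, i.e. the Cesàro means of order `α`,
`M_n^α = (A_n^α)⁻¹ • ∑_{k=0}^n A_{n-k}^{α-1} T^k`, are uniformly bounded in operator norm,
then `‖T^n‖ = O(n^α)`. -/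
theorem norm_pow_bigO_of_cesaro_alpha_bounded
    {X : Type*} [NormedAddCommGroup X] [NormedSpace ℝ X] [CompleteSpace X]
    (T : X →L[ℝ] X) (α : ℝ) (hα0 : 0 < α) (hα1 : α < 1)
    (h : ∃ M : ℝ, ∀ n : ℕ,
      ‖(cesaroCoeff α n)⁻¹ •
        ∑ k ∈ Finset.range (n + 1), cesaroCoeff (α - 1) (n - k) • T ^ k‖ ≤ M) :
    ∃ C : ℝ, ∀ n : ℕ, 1 ≤ n → ‖T ^ n‖ ≤ C * (n : ℝ) ^ α :=
  norm_pow_bigO_of_cesaro_alpha_bounded_general T α hα0 hα1 h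
end

section
/- Let T be a bounded linear operator on a complex Banach space with ‖T^n‖/n → 0, such that for every x ∈ X and every λ with |λ| = 1 the series ∑_{n=1}^∞ λ^n T^n x / n converges in norm. Then ‖T^n‖ → 0. -/
open Filter Topology

open ENNReal NNReal


lemma approx_eig {X : Type*} [NormedAddCommGroup X] [NormedSpace ℂ X] [CompleteSpace X]
    [Nontrivial X] (T : X →L[ℂ] X) {μ : ℂ} (hμ : μ ∈ spectrum ℂ T) (hμ1 : ‖μ‖ = 1)
    (hs : ∀ z ∈ spectrum ℂ T, ‖z‖ ≤ 1) {ε : ℝ} (hε : 0 < ε) :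
    ∃ x : X, ‖x‖ = 1 ∧ ‖T x - μ • x‖ < ε := by
  obtain ⟨t, ht1, ht4⟩ : ∃ t : ℝ, 1 < t ∧ 3 * (t - 1) < ε :=
    ⟨1 + ε / 4, by linarith, by linarith⟩
  set c : ℂ := (t : ℂ) * μ with hc
  have hcn : ‖c‖ = t := by
    rw [hc, norm_mul, hμ1, mul_one, Complex.norm_real, Real.norm_eq_abs, abs_of_pos (by linarith)]
  have hcρ : c ∉ spectrum ℂ T := fun hcs => absurd (hs c hcs) (by rw [hcn]; push_neg; linarith)
  rw [spectrum.notMem_iff] at hcρ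
  obtain ⟨u, hu⟩ := hcρ
  have hμunit : ¬ IsUnit (algebraMap ℂ (X →L[ℂ] X) μ - T) := hμ
  have hdist : ‖(algebraMap ℂ (X →L[ℂ] X) μ - T) - (u : X →L[ℂ] X)‖ = t - 1 := by
    rw [hu]
    have h1 : (algebraMap ℂ (X →L[ℂ] X) μ - T) - (algebraMap ℂ (X →L[ℂ] X) c - T)
        = algebraMap ℂ (X →L[ℂ] X) (μ - c) := by rw [map_sub]; abel
    rw [h1, norm_algebraMap']
    have h2 : μ - c = -(((t - 1 : ℝ) : ℂ) * μ) := by rw [hc]; push_cast; ring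
    rw [h2, norm_neg, norm_mul, hμ1, mul_one, Complex.norm_real, Real.norm_eq_abs,
      abs_of_pos (by linarith)]
  have hupos : 0 < ‖((u⁻¹ : (X →L[ℂ] X)ˣ) : X →L[ℂ] X)‖ := Units.norm_pos u⁻¹
  have hinv : ‖((u⁻¹ : (X →L[ℂ] X)ˣ) : X →L[ℂ] X)‖⁻¹ ≤ t - 1 := by
    by_contra hcon
    push_neg at hcon
    have h5 := (Units.ofNearby u (algebraMap ℂ (X →L[ℂ] X) μ - T)
      (by rw [hdist]; exact hcon)).isUnit
    rw [Units.val_ofNearby] at h5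
    exact hμunit h5
  obtain ⟨y, hy⟩ : ∃ y : X, ‖((u⁻¹ : (X →L[ℂ] X)ˣ) : X →L[ℂ] X)‖ / 2 * ‖y‖
      < ‖((u⁻¹ : (X →L[ℂ] X)ˣ) : X →L[ℂ] X) y‖ := by
    by_contra hcon
    push_neg at hcon
    have := ContinuousLinearMap.opNorm_le_bound _ (by positivity) hcon
    linarith
  set z : X := ((u⁻¹ : (X →L[ℂ] X)ˣ) : X →L[ℂ] X) y with hzdef
  have hz0 : z ≠ 0 := by
    intro h0
    rw [h0, norm_zero] at hy
    nlinarith [norm_nonneg y]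
  have hznorm : 0 < ‖z‖ := norm_pos_iff.mpr hz0
  clear_value z
  refine ⟨((‖z‖ : ℂ))⁻¹ • z, ?_, ?_⟩
  · rw [norm_smul, norm_inv, Complex.norm_real, Real.norm_eq_abs, abs_of_pos hznorm,
      inv_mul_cancel₀ (ne_of_gt hznorm)]
  · have huz : (u : X →L[ℂ] X) z = y := by
      rw [hzdef, ← ContinuousLinearMap.comp_apply, ← ContinuousLinearMap.mul_def, u.mul_inv]
      simp
    have hTz : T z = c • z - y := by
      rw [hu] at huz
      rw [ContinuousLinearMap.sub_apply, Algebra.algebraMap_eq_smul_one,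
        ContinuousLinearMap.smul_apply, ContinuousLinearMap.one_apply] at huz
      linear_combination (norm := module) -huz
    have key : T (((‖z‖ : ℂ))⁻¹ • z) - μ • (((‖z‖ : ℂ))⁻¹ • z)
        = ((‖z‖ : ℂ))⁻¹ • ((c - μ) • z - y) := by
      rw [map_smul, hTz]; module
    rw [key, norm_smul, norm_inv, Complex.norm_real, Real.norm_eq_abs, abs_of_pos hznorm]
    have hcμ : ‖c - μ‖ = t - 1 := by
      have h3 : c - μ = ((t - 1 : ℝ) : ℂ) * μ := by rw [hc]; push_cast; ring
      rw [h3, norm_mul, hμ1, mul_one, Complex.norm_real, Real.norm_eq_abs,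
        abs_of_pos (by linarith)]
    have hbound : ‖(c - μ) • z - y‖ ≤ (t-1) * ‖z‖ + ‖y‖ :=
      le_trans (norm_sub_le _ _) (by rw [norm_smul, hcμ])
    have hone : (1:ℝ) ≤ ‖((u⁻¹ : (X →L[ℂ] X)ˣ) : X →L[ℂ] X)‖ * (t - 1) := by
      calc (1:ℝ) = ‖((u⁻¹ : (X →L[ℂ] X)ˣ) : X →L[ℂ] X)‖
            * ‖((u⁻¹ : (X →L[ℂ] X)ˣ) : X →L[ℂ] X)‖⁻¹ := by
            rw [mul_inv_cancel₀ (ne_of_gt hupos)]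
        _ ≤ _ := by nlinarith
    have hy2 : ‖y‖ < 2 * (t - 1) * ‖z‖ := by
      have h6 := mul_lt_mul_of_pos_left hy (show (0:ℝ) < t - 1 by linarith)
      have h7 : ‖y‖ ≤ (‖((u⁻¹ : (X →L[ℂ] X)ˣ) : X →L[ℂ] X)‖ * (t-1)) * ‖y‖ :=
        le_mul_of_one_le_left (norm_nonneg y) hone
      nlinarith [h6, h7]
    calc ‖z‖⁻¹ * ‖(c - μ) • z - y‖ ≤ ‖z‖⁻¹ * ((t-1) * ‖z‖ + ‖y‖) := by
          apply mul_le_mul_of_nonneg_left hbound (by positivity)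
      _ < ‖z‖⁻¹ * ((t-1) * ‖z‖ + 2 * (t-1) * ‖z‖) := by
          apply mul_lt_mul_of_pos_left (by linarith) (by positivity)
      _ = 3 * (t - 1) := by field_simp; ring
      _ < ε := ht4


lemma pow_sub_smul_bound {X : Type*} [NormedAddCommGroup X] [NormedSpace ℂ X]
    (T : X →L[ℂ] X) {μ : ℂ} (hμ1 : ‖μ‖ = 1) (x : X) (k : ℕ) :
    ‖(T ^ k) x - μ ^ k • x‖ ≤ (∑ j ∈ Finset.range k, ‖T ^ j‖) * ‖T x - μ • x‖ := by
  induction k with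
  | zero => simp
  | succ k ih =>
    have hdecomp : (T ^ (k+1)) x - μ ^ (k+1) • x
        = (T ^ k) (T x - μ • x) + μ • ((T ^ k) x - μ ^ k • x) := by
      rw [pow_succ, ContinuousLinearMap.mul_apply, map_sub, map_smul]
      module
    rw [hdecomp, Finset.sum_range_succ]
    calc ‖(T ^ k) (T x - μ • x) + μ • ((T ^ k) x - μ ^ k • x)‖
        ≤ ‖(T ^ k) (T x - μ • x)‖ + ‖μ • ((T ^ k) x - μ ^ k • x)‖ := norm_add_le _ _
      _ ≤ ‖T ^ k‖ * ‖T x - μ • x‖ + ‖(T ^ k) x - μ ^ k • x‖ := by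
          gcongr
          · exact ContinuousLinearMap.le_opNorm _ _
          · rw [norm_smul, hμ1, one_mul]
      _ ≤ ‖T ^ k‖ * ‖T x - μ • x‖ + (∑ j ∈ Finset.range k, ‖T ^ j‖) * ‖T x - μ • x‖ := by
          linarith
      _ = (∑ j ∈ Finset.range k, ‖T ^ j‖ + ‖T ^ k‖) * ‖T x - μ • x‖ := by ring

lemma no_unimodular {X : Type*} [NormedAddCommGroup X] [NormedSpace ℂ X] [CompleteSpace X]
    [Nontrivial X] (T : X →L[ℂ] X)
    (hs : ∀ z ∈ spectrum ℂ T, ‖z‖ ≤ 1)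
    (h : ∀ x : X, ∀ lam : ℂ, ‖lam‖ = 1 → ∃ L : X,
      Tendsto (fun n : ℕ => ∑ k ∈ Finset.Icc 1 n, (lam ^ k / k) • (T ^ k) x) atTop (𝓝 L)) :
    ∀ μ ∈ spectrum ℂ T, ‖μ‖ ≠ 1 := by
  intro μ hμ hμ1
  have hlam : ‖μ⁻¹‖ = 1 := by rw [norm_inv, hμ1]; norm_num
  set g : ℕ → X →L[ℂ] X := fun N => ∑ k ∈ Finset.Icc 1 N, (μ⁻¹ ^ k / k) • T ^ k with hg
  have hgapp : ∀ N (x : X), g N x = ∑ k ∈ Finset.Icc 1 N, (μ⁻¹ ^ k / k) • (T ^ k) x := by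
    intro N x
    rw [hg]
    simp [ContinuousLinearMap.sum_apply]
  have hb : ∀ x : X, ∃ C, ∀ N, ‖g N x‖ ≤ C := by
    intro x
    obtain ⟨L, hL⟩ := h x μ⁻¹ hlam
    obtain ⟨C, hC⟩ := hL.norm.bddAbove_range
    exact ⟨C, fun N => by rw [hgapp]; exact hC ⟨N, rfl⟩⟩
  obtain ⟨C, hC⟩ := banach_steinhaus hb
  -- choose N with harmonic sum large
  obtain ⟨N, hN⟩ : ∃ N : ℕ, C + 1 < ∑ k ∈ Finset.Icc 1 N, (1 / (k:ℝ)) := by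
    obtain ⟨N, hN⟩ := (Real.tendsto_sum_range_one_div_nat_succ_atTop.eventually_gt_atTop
      (C + 1)).exists
    refine ⟨N, ?_⟩
    rw [← Finset.Ico_add_one_right_eq_Icc, Finset.sum_Ico_eq_sum_range]
    simpa [add_comm] using hN
  set K : ℝ := ∑ k ∈ Finset.Icc 1 N, (∑ j ∈ Finset.range k, ‖T ^ j‖) / k with hK
  have hK0 : 0 ≤ K := by
    rw [hK]
    apply Finset.sum_nonneg
    intro k _
    positivity
  have hεpos : (0:ℝ) < 1 / (K + 1) := by positivity
  obtain ⟨x, hx1, hxε⟩ := approx_eig T hμ hμ1 hs hεpos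
  set δ : ℝ := ‖T x - μ • x‖ with hδdef
  have hδ0 : 0 ≤ δ := norm_nonneg _
  have hterm : ∀ k ∈ Finset.Icc 1 N,
      ‖(μ⁻¹ ^ k / k) • (T ^ k) x - (1 / (k:ℂ)) • x‖
        ≤ ((∑ j ∈ Finset.range k, ‖T ^ j‖) / k) * δ := by
    intro k hk
    have hk1 : 1 ≤ k := (Finset.mem_Icc.mp hk).1
    have hkpos : (0:ℝ) < k := by exact_mod_cast hk1
    have hkC : (k:ℂ) ≠ 0 := by exact_mod_cast Nat.one_le_iff_ne_zero.mp hk1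
    have hrw : (μ⁻¹ ^ k / k) • (T ^ k) x - (1 / (k:ℂ)) • x
        = (μ⁻¹ ^ k / k) • ((T ^ k) x - μ ^ k • x) := by
      rw [smul_sub, smul_smul]
      have hμ0 : μ ≠ 0 := by intro h0; rw [h0, norm_zero] at hμ1; norm_num at hμ1
      have : μ⁻¹ ^ k / k * μ ^ k = 1 / (k:ℂ) := by
        field_simp
        rw [one_div, inv_pow, inv_mul_cancel₀ (pow_ne_zero _ hμ0)]
      rw [this]
    rw [hrw, norm_smul]
    have hns : ‖μ⁻¹ ^ k / (k:ℂ)‖ = 1 / k := by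
      rw [norm_div, norm_pow, hlam, one_pow, Complex.norm_natCast]
    rw [hns]
    calc 1 / (k:ℝ) * ‖(T ^ k) x - μ ^ k • x‖
        ≤ 1 / (k:ℝ) * ((∑ j ∈ Finset.range k, ‖T ^ j‖) * δ) := by
          apply mul_le_mul_of_nonneg_left (pow_sub_smul_bound T hμ1 x k) (by positivity)
      _ = ((∑ j ∈ Finset.range k, ‖T ^ j‖) / k) * δ := by ring
  have hsum : ‖g N x - (∑ k ∈ Finset.Icc 1 N, (1 / (k:ℂ))) • x‖ ≤ K * δ := by
    rw [hgapp, Finset.sum_smul, ← Finset.sum_sub_distrib]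
    calc ‖∑ k ∈ Finset.Icc 1 N, ((μ⁻¹ ^ k / k) • (T ^ k) x - (1 / (k:ℂ)) • x)‖
        ≤ ∑ k ∈ Finset.Icc 1 N, ‖(μ⁻¹ ^ k / k) • (T ^ k) x - (1 / (k:ℂ)) • x‖ :=
          norm_sum_le _ _
      _ ≤ ∑ k ∈ Finset.Icc 1 N, ((∑ j ∈ Finset.range k, ‖T ^ j‖) / k) * δ :=
          Finset.sum_le_sum hterm
      _ = K * δ := by rw [hK, Finset.sum_mul]
  have hKδ : K * δ ≤ 1 := by
    calc K * δ ≤ K * (1 / (K + 1)) := by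
          apply mul_le_mul_of_nonneg_left (le_of_lt hxε) hK0
      _ ≤ 1 := by
          rw [mul_one_div, div_le_one (by linarith)]
          linarith
  have hnorm_sum : ‖(∑ k ∈ Finset.Icc 1 N, (1 / (k:ℂ))) • x‖ = ∑ k ∈ Finset.Icc 1 N, (1 / (k:ℝ)) := by
    rw [norm_smul, hx1, mul_one]
    have : (∑ k ∈ Finset.Icc 1 N, (1 / (k:ℂ))) = ((∑ k ∈ Finset.Icc 1 N, (1 / (k:ℝ)) : ℝ) : ℂ) := by
      push_cast
      rfl
    rw [this, Complex.norm_real, Real.norm_eq_abs, abs_of_nonneg]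
    apply Finset.sum_nonneg
    intro k _
    positivity
  have hfinal : ∑ k ∈ Finset.Icc 1 N, (1 / (k:ℝ)) ≤ C + 1 := by
    calc ∑ k ∈ Finset.Icc 1 N, (1 / (k:ℝ))
        = ‖(∑ k ∈ Finset.Icc 1 N, (1 / (k:ℂ))) • x‖ := hnorm_sum.symm
      _ ≤ ‖g N x‖ + ‖g N x - (∑ k ∈ Finset.Icc 1 N, (1 / (k:ℂ))) • x‖ := by
          have := norm_sub_le (g N x) ((g N x) - (∑ k ∈ Finset.Icc 1 N, (1 / (k:ℂ))) • x)
          calc ‖(∑ k ∈ Finset.Icc 1 N, (1 / (k:ℂ))) • x‖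
              = ‖g N x - (g N x - (∑ k ∈ Finset.Icc 1 N, (1 / (k:ℂ))) • x)‖ := by
                congr 1; abel
            _ ≤ _ := norm_sub_le _ _
      _ ≤ C + 1 := by
          have h1 : ‖g N x‖ ≤ C := by
            calc ‖g N x‖ ≤ ‖g N‖ * ‖x‖ := ContinuousLinearMap.le_opNorm _ _
              _ = ‖g N‖ := by rw [hx1, mul_one]
              _ ≤ C := hC N
          linarith [le_trans hsum hKδ]
  linarith

/-- If `‖T^n‖/n → 0` and for every `x ∈ X` and every unimodular `λ` the rotated one-sided
ergodic Hilbert transform `∑_{n=1}^∞ λ^n T^n x / n` converges, then `‖T^n‖ → 0`. -/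
theorem norm_pow_tendsto_zero_of_rotated_hilbert_everywhere
    {X : Type*} [NormedAddCommGroup X] [NormedSpace ℂ X] [CompleteSpace X]
    (T : X →L[ℂ] X)
    (hpow : Tendsto (fun n : ℕ => ‖T ^ n‖ / (n : ℝ)) atTop (𝓝 0))
    (h : ∀ x : X, ∀ lam : ℂ, ‖lam‖ = 1 → ∃ L : X,
      Tendsto (fun n : ℕ => ∑ k ∈ Finset.Icc 1 n, (lam ^ k / k) • (T ^ k) x) atTop (𝓝 L)) :
    Tendsto (fun n : ℕ => ‖T ^ n‖) atTop (𝓝 0) := by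
  rcases subsingleton_or_nontrivial X with hX | hX
  · have hz : ∀ n : ℕ, ‖T ^ n‖ = 0 := fun n => by
      rw [show T ^ n = 0 from ContinuousLinearMap.ext fun x => Subsingleton.elim _ _, norm_zero]
    simpa [hz] using tendsto_const_nhds (α := ℝ) (f := atTop (α := ℕ)) (a := 0)
  · -- spectrum is in the closed unit disc
    have hs : ∀ z ∈ spectrum ℂ T, ‖z‖ ≤ 1 := by
      intro z hz
      by_contra hcon
      push_neg at hcon
      have hzn : ∀ n : ℕ, ‖z‖ ^ n ≤ ‖T ^ n‖ := fun n => by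
        have h1 : z ^ n ∈ spectrum ℂ (T ^ n) := by
          rw [spectrum.map_pow]; exact ⟨z, hz, rfl⟩
        simpa [norm_pow] using spectrum.norm_le_norm_of_mem h1
      obtain ⟨n, hn2, hn1⟩ := ((hpow.eventually_lt_const
        (show (0:ℝ) < ‖z‖ - 1 by linarith)).and (eventually_ge_atTop 1)).exists
      have hnpos : (0:ℝ) < n := by exact_mod_cast hn1
      have hb : 1 + (n:ℝ) * (‖z‖ - 1) ≤ ‖z‖ ^ n := by
        have := one_add_mul_le_pow (show (-2:ℝ) ≤ ‖z‖ - 1 by linarith) n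
        simpa using this
      have : (‖z‖ - 1) * n ≤ ‖T ^ n‖ := by nlinarith [hzn n]
      rw [div_lt_iff₀ hnpos] at hn2
      linarith
    have hno : ∀ μ ∈ spectrum ℂ T, ‖μ‖ ≠ 1 := no_unimodular T hs h
    have hlt : ∀ z ∈ spectrum ℂ T, ‖z‖₊ < 1 := by
      intro z hz
      have : ‖z‖ < 1 := lt_of_le_of_ne (hs z hz) (hno z hz)
      exact_mod_cast this
    have hrad : spectralRadius ℂ T < 1 := by
      simpa using spectrum.spectralRadius_lt_of_forall_lt T hlt
    obtain ⟨r, hr1, hr2⟩ := ENNReal.lt_iff_exists_nnreal_btwn.mp hrad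
    have hgel := spectrum.pow_nnnorm_pow_one_div_tendsto_nhds_spectralRadius T
    have hev := hgel.eventually_lt_const hr1
    have hbound : ∀ᶠ n : ℕ in atTop, ‖T ^ n‖ ≤ (r:ℝ) ^ n := by
      filter_upwards [hev, eventually_ge_atTop 1] with n h1 h2
      have hne : (n:ℝ) ≠ 0 := by positivity
      have e2 : (‖T ^ n‖₊ : ℝ≥0∞) ≤ (r : ℝ≥0∞) ^ (n:ℝ) := by
        calc (‖T ^ n‖₊ : ℝ≥0∞) = ((‖T ^ n‖₊ : ℝ≥0∞) ^ (1/(n:ℝ))) ^ (n:ℝ) := by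
              rw [← ENNReal.rpow_mul, one_div, inv_mul_cancel₀ hne, ENNReal.rpow_one]
          _ ≤ (r : ℝ≥0∞) ^ (n:ℝ) := ENNReal.rpow_le_rpow (le_of_lt h1) (by positivity)
      rw [ENNReal.rpow_natCast, ← ENNReal.coe_pow, ENNReal.coe_le_coe] at e2
      calc ‖T ^ n‖ = ((‖T ^ n‖₊ : ℝ≥0) : ℝ) := rfl
        _ ≤ ((r ^ n : ℝ≥0) : ℝ) := by exact_mod_cast e2
        _ = (r:ℝ) ^ n := by push_cast; ring
    have hr2' : (r:ℝ) < 1 := by exact_mod_cast ENNReal.coe_lt_one_iff.mp hr2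
    exact squeeze_zero' (Eventually.of_forall fun n => norm_nonneg _) hbound
      (tendsto_pow_atTop_nhds_zero_of_lt_one r.coe_nonneg hr2')
end

section
/- If T is a bounded linear operator on a complex Banach space such that the set {T^n : n ≥ 0} is relatively compact in the operator norm topology, then for every λ with |λ|=1 the operator λT is uniformly ergodic, i.e. M_n(λT) converges in operator norm. -/
open Filter Topology

set_option maxHeartbeats 1000000

section Aux

variable {X : Type*} [NormedAddCommGroup X] [NormedSpace ℂ X] [CompleteSpace X]

private lemma mapClusterPt_eq_of_tendsto {α Y : Type*} [TopologicalSpace Y] [T2Space Y]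
    {l : Filter α} {u : α → Y} {x y : Y}
    (h : MapClusterPt x l u) (h' : Tendsto u l (𝓝 y)) : x = y :=
  eq_of_nhds_neBot (h.clusterPt.mono h')

private lemma key (T : X →L[ℂ] X)
    (h : IsCompact (closure (Set.range fun n : ℕ => T ^ n))) :
    ∃ E : X →L[ℂ] X,
      Tendsto (fun n : ℕ => (n : ℂ)⁻¹ • ∑ k ∈ Finset.Icc 1 n, T ^ k) atTop (𝓝 E) := by
  set M : ℕ → (X →L[ℂ] X) := fun n => (n : ℂ)⁻¹ • ∑ k ∈ Finset.Icc 1 n, T ^ k with hM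
  set s : Set (X →L[ℂ] X) :=
    closure (convexHull ℝ (Set.range fun n : ℕ => T ^ n)) with hs_def
  -- s is compact
  have hsc : IsCompact s := by
    apply TotallyBounded.isCompact_of_isClosed
    · exact (totallyBounded_convexHull.2
        ((h.totallyBounded).subset subset_closure)).closure
    · exact isClosed_closure
  -- powers are in s
  have hpow : ∀ k : ℕ, T ^ k ∈ s := fun k =>
    subset_closure (subset_convexHull ℝ _ ⟨k, rfl⟩)
  -- M n ∈ s for n ≥ 1
  have hmem : ∀ n : ℕ, 1 ≤ n → M n ∈ s := by
    intro n hn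
    apply subset_closure
    have hn0 : (n : ℝ) ≠ 0 := Nat.cast_ne_zero.2 (Nat.one_le_iff_ne_zero.1 hn)
    have : M n = ∑ k ∈ Finset.Icc 1 n, ((n : ℝ)⁻¹) • T ^ k := by
      rw [show M n = (n : ℂ)⁻¹ • ∑ k ∈ Finset.Icc 1 n, T ^ k from rfl, Finset.smul_sum]
      refine Finset.sum_congr rfl fun k _ => ?_
      rw [← Complex.coe_smul]
      norm_num
    rw [this]
    refine Convex.sum_mem (convex_convexHull ℝ _) (fun k _ => by positivity)
      ?_ (fun k _ => subset_convexHull ℝ _ ⟨k, rfl⟩)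
    rw [Finset.sum_const, Nat.card_Icc]
    simp [nsmul_eq_mul, hn0]
  -- norm bound on s
  obtain ⟨C, hC⟩ := hsc.isBounded.exists_norm_le
  -- telescoping identities
  have htel : ∀ n : ℕ, (∑ k ∈ Finset.Icc 1 n, (T ^ k - T ^ (k + 1))) = T - T ^ (n + 1) := by
    intro n
    have h1 : Finset.Icc 1 n = Finset.Ico 1 (n + 1) := rfl
    rw [h1, Finset.sum_Ico_eq_sum_range]
    have : ∀ i, T ^ (1 + i) - T ^ (1 + i + 1)
        = (fun j => T ^ (j + 1)) i - (fun j => T ^ (j + 1)) (i + 1) := by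
      intro i; simp only []; ring_nf
    simp only [Nat.add_sub_cancel]
    rw [Finset.sum_congr rfl fun i _ => this i, Finset.sum_range_sub']
    simp [pow_succ, add_comm]
  have hMr : ∀ n : ℕ, M n * (1 - T) = (n : ℂ)⁻¹ • (T - T ^ (n + 1)) := by
    intro n
    rw [hM, smul_mul_assoc, Finset.sum_mul, ← htel n]
    congr 1
    refine Finset.sum_congr rfl fun k _ => ?_
    rw [mul_one_sub, pow_succ]
  have hMl : ∀ n : ℕ, (1 - T) * M n = (n : ℂ)⁻¹ • (T - T ^ (n + 1)) := by
    intro n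
    rw [hM, mul_smul_comm, Finset.mul_sum, ← htel n]
    congr 1
    refine Finset.sum_congr rfl fun k _ => ?_
    rw [one_sub_mul, pow_succ']
  -- the remainder tends to 0
  have hrem : Tendsto (fun n : ℕ => (n : ℂ)⁻¹ • (T - T ^ (n + 1))) atTop (𝓝 0) := by
    have hb : ∀ n : ℕ, ‖(n : ℂ)⁻¹ • (T - T ^ (n + 1))‖ ≤ (n : ℝ)⁻¹ * (‖T‖ + C) := by
      intro n
      refine (norm_smul_le ((n : ℂ)⁻¹) (T - T ^ (n + 1))).trans ?_
      have h1 : ‖((n : ℂ))⁻¹‖ = (n : ℝ)⁻¹ := by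
        rw [norm_inv, Complex.norm_natCast]
      rw [h1]
      gcongr
      exact (norm_sub_le _ _).trans (by gcongr; exact hC _ (hpow (n + 1)))
    have h0 : Tendsto (fun n : ℕ => (n : ℝ)⁻¹ * (‖T‖ + C)) atTop (𝓝 0) := by
      simpa using (tendsto_inv_atTop_nhds_zero_nat (𝕜 := ℝ)).mul_const (‖T‖ + C)
    exact squeeze_zero_norm hb h0
  have hr0 : Tendsto (fun n : ℕ => M n * (1 - T)) atTop (𝓝 0) := by
    simpa only [hMr] using hrem
  have hl0 : Tendsto (fun n : ℕ => (1 - T) * M n) atTop (𝓝 0) := by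
    simpa only [hMl] using hrem
  -- key properties of any cluster point
  have hfix : ∀ F : X →L[ℂ] X, MapClusterPt F atTop M → F * T = F ∧ T * F = F := by
    intro F hF
    constructor
    · have h1 : MapClusterPt (F * (1 - T)) atTop ((fun A => A * (1 - T)) ∘ M) :=
        hF.continuousAt_comp (continuous_mul_right (1 - T)).continuousAt
      have h2 : F * (1 - T) = 0 := mapClusterPt_eq_of_tendsto h1 hr0
      rw [mul_one_sub, sub_eq_zero] at h2
      exact h2.symm
    · have h1 : MapClusterPt ((1 - T) * F) atTop ((fun A => (1 - T) * A) ∘ M) :=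
        hF.continuousAt_comp (continuous_mul_left (1 - T)).continuousAt
      have h2 : (1 - T) * F = 0 := mapClusterPt_eq_of_tendsto h1 hl0
      rw [one_sub_mul, sub_eq_zero] at h2
      exact h2.symm
  -- averaging a fixed point gives itself back
  have havg : ∀ F : X →L[ℂ] X, T * F = F → ∀ n : ℕ, 1 ≤ n → M n * F = F := by
    intro F hTF n hn
    have hpowF : ∀ k : ℕ, 1 ≤ k → T ^ k * F = F := by
      intro k hk
      induction k with
      | zero => omega
      | succ m ih =>
        rcases Nat.eq_zero_or_pos m with rfl | hm
        · simpa using hTF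
        · rw [pow_succ', mul_assoc, ih hm, hTF]
    rw [hM, smul_mul_assoc, Finset.sum_mul,
      Finset.sum_congr rfl (fun k hk => hpowF k (Finset.mem_Icc.1 hk).1),
      Finset.sum_const, Nat.card_Icc, Nat.add_sub_cancel,
      ← Nat.cast_smul_eq_nsmul ℂ, smul_smul, inv_mul_cancel₀, one_smul]
    exact Nat.cast_ne_zero.2 (by omega)
  have havg' : ∀ F : X →L[ℂ] X, F * T = F → ∀ n : ℕ, 1 ≤ n → F * M n = F := by
    intro F hFT n hn
    have hpowF : ∀ k : ℕ, 1 ≤ k → F * T ^ k = F := by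
      intro k hk
      induction k with
      | zero => omega
      | succ m ih =>
        rcases Nat.eq_zero_or_pos m with rfl | hm
        · simpa using hFT
        · rw [pow_succ, ← mul_assoc, ih hm, hFT]
    rw [hM, mul_smul_comm, Finset.mul_sum,
      Finset.sum_congr rfl (fun k hk => hpowF k (Finset.mem_Icc.1 hk).1),
      Finset.sum_const, Nat.card_Icc, Nat.add_sub_cancel,
      ← Nat.cast_smul_eq_nsmul ℂ, smul_smul, inv_mul_cancel₀, one_smul]
    exact Nat.cast_ne_zero.2 (by omega)
  -- existence of a cluster point
  have hle : map M atTop ≤ Filter.principal s :=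
    Filter.le_principal_iff.2 (Filter.mem_map.2 (Filter.eventually_atTop.2 ⟨1, hmem⟩))
  obtain ⟨E, hEs, hE⟩ := hsc.exists_clusterPt hle
  have hEcp : MapClusterPt E atTop M := hE
  refine ⟨E, hsc.tendsto_nhds_of_unique_mapClusterPt
    (Filter.eventually_atTop.2 ⟨1, hmem⟩) ?_⟩
  intro F _ hF
  obtain ⟨hFT, hTF⟩ := hfix F hF
  obtain ⟨hET, hTE⟩ := hfix E hEcp
  -- E * F = E
  have t1 : Tendsto (fun n : ℕ => E * M n) atTop (𝓝 E) := by
    refine Tendsto.congr' ?_ tendsto_const_nhds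
    filter_upwards [Filter.eventually_ge_atTop 1] with n hn
    exact (havg' E hET n hn).symm
  have c1 : MapClusterPt (E * F) atTop ((fun A => E * A) ∘ M) :=
    hF.continuousAt_comp (continuous_mul_left E).continuousAt
  have e1 : E * F = E := mapClusterPt_eq_of_tendsto c1 t1
  -- E * F = F
  have t2 : Tendsto (fun n : ℕ => M n * F) atTop (𝓝 F) := by
    refine Tendsto.congr' ?_ tendsto_const_nhds
    filter_upwards [Filter.eventually_ge_atTop 1] with n hn
    exact (havg F hTF n hn).symm
  have c2 : MapClusterPt (E * F) atTop ((fun A => A * F) ∘ M) :=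
    hEcp.continuousAt_comp (continuous_mul_right F).continuousAt
  have e2 : E * F = F := mapClusterPt_eq_of_tendsto c2 t2
  rw [← e2, e1]

end Aux

/-- If `{T^n : n ≥ 0}` is relatively compact in the operator norm topology, then for every
unimodular `λ` the operator `λ T` is uniformly ergodic. -/
theorem rotationally_uniformly_ergodic_of_relatively_compact_powers
    {X : Type*} [NormedAddCommGroup X] [NormedSpace ℂ X] [CompleteSpace X]
    (T : X →L[ℂ] X)
    (h : IsCompact (closure (Set.range fun n : ℕ => T ^ n))) :
    ∀ lam : ℂ, ‖lam‖ = 1 → ∃ E : X →L[ℂ] X,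
      Tendsto (fun n : ℕ => (n : ℂ)⁻¹ • ∑ k ∈ Finset.Icc 1 n, (lam • T) ^ k)
        atTop (𝓝 E) := by
  intro lam hlam
  apply key (lam • T)
  -- the powers of lam • T lie in the compact set sphere • closure(range T^n)
  have hK : IsCompact ((fun p : ℂ × (X →L[ℂ] X) => p.1 • p.2) ''
      (Metric.sphere (0 : ℂ) 1 ×ˢ closure (Set.range fun n : ℕ => T ^ n))) :=
    ((isCompact_sphere 0 1).prod h).image (continuous_fst.smul continuous_snd)
  refine hK.of_isClosed_subset isClosed_closure
    (closure_minimal ?_ hK.isClosed)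
  rintro _ ⟨n, rfl⟩
  refine ⟨(lam ^ n, T ^ n), ⟨?_, subset_closure ⟨n, rfl⟩⟩, ?_⟩
  · simp [mem_sphere_iff_norm, norm_pow, hlam]
  · simp [smul_pow]
end

section
/- Let T be a bounded linear operator on a complex Banach space with ‖T^n‖/n → 0, and let λ be a unimodular complex number with λ̄ not in the spectrum of T. Then the series ∑_{n=1}^∞ λ^n T^n x / n converges for every x ∈ X. -/
open Filter Topology

private lemma sum_Icc_one_tendsto {A : Type*} [NormedAddCommGroup A] [CompleteSpace A]
    (f : ℕ → A) (hf : Summable f) (hf0 : f 0 = 0) :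
    ∃ L, Tendsto (fun n : ℕ => ∑ k ∈ Finset.Icc 1 n, f k) atTop (𝓝 L) := by
  refine ⟨∑' k, f k, ?_⟩
  have h1 : ∀ n : ℕ, ∑ k ∈ Finset.Icc 1 n, f k = ∑ k ∈ Finset.range (n + 1), f k := by
    intro n
    induction n with
    | zero => simp [hf0]
    | succ n ih =>
      rw [Finset.sum_Icc_succ_top (Nat.le_add_left 1 n), Finset.sum_range_succ, ih]
  simp only [h1]
  exact hf.hasSum.tendsto_sum_nat.comp (tendsto_add_atTop_nat 1)

private lemma abel_step {A : Type*} [NormedRing A] [NormedAlgebra ℂ A]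
    (S Q : A) (hQ : (1 - S) * Q = 1)
    (a : ℕ → ℂ) (ha0 : a 0 = 0)
    (hbd : Tendsto (fun n : ℕ => a n • S ^ (n + 1)) atTop (𝓝 0))
    (hb : ∃ L, Tendsto (fun n : ℕ => ∑ k ∈ Finset.Icc 1 n, (a k - a (k - 1)) • S ^ k)
        atTop (𝓝 L)) :
    ∃ L, Tendsto (fun n : ℕ => ∑ k ∈ Finset.Icc 1 n, a k • S ^ k) atTop (𝓝 L) := by
  obtain ⟨L, hL⟩ := hb
  have hmul : ∀ (c : ℂ) (m : ℕ), (c • S ^ m - c • S ^ (m + 1)) * Q = c • S ^ m := by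
    intro c m
    have h : c • S ^ m - c • S ^ (m + 1) = c • (S ^ m * (1 - S)) := by
      rw [mul_sub, mul_one, smul_sub, pow_succ]
    rw [h, smul_mul_assoc, mul_assoc, hQ, mul_one]
  have key : ∀ n : ℕ, ∑ k ∈ Finset.Icc 1 n, a k • S ^ k
      = (∑ k ∈ Finset.Icc 1 n, (a k - a (k - 1)) • S ^ k - a n • S ^ (n + 1)) * Q := by
    intro n
    induction n with
    | zero => simp [ha0]
    | succ n ih =>
      rw [Finset.sum_Icc_succ_top (Nat.le_add_left 1 n),
        Finset.sum_Icc_succ_top (Nat.le_add_left 1 n), ih]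
      simp only [Nat.add_sub_cancel]
      have h1 : a (n + 1) • S ^ (n + 1)
          = ((a (n + 1) - a n) • S ^ (n + 1) + a n • S ^ (n + 1)
              - a (n + 1) • S ^ (n + 1 + 1)) * Q := by
        have h2 : (a (n + 1) - a n) • S ^ (n + 1) + a n • S ^ (n + 1)
            = a (n + 1) • S ^ (n + 1) := by
          rw [sub_smul]; abel
        rw [h2, hmul]
      rw [h1, ← add_mul]
      congr 1
      abel
  refine ⟨(L - 0) * Q, ?_⟩
  have h3 : Tendsto (fun n : ℕ =>
      (∑ k ∈ Finset.Icc 1 n, (a k - a (k - 1)) • S ^ k - a n • S ^ (n + 1)) * Q)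
      atTop (𝓝 ((L - 0) * Q)) :=
    (hL.sub hbd).mul (tendsto_const_nhds (x := Q))
  simpa only [key] using h3

set_option maxHeartbeats 1000000 in
/-- If `‖T^n‖/n → 0` and `λ` is unimodular with `conj λ ∉ σ(T)`, then the rotated one-sided
ergodic Hilbert transform `∑_{n=1}^∞ λ^n T^n x / n` converges for every `x ∈ X`. -/
theorem rotated_hilbert_transform_converges_of_not_mem_spectrum
    {X : Type*} [NormedAddCommGroup X] [NormedSpace ℂ X] [CompleteSpace X]
    (T : X →L[ℂ] X)
    (hpow : Tendsto (fun n : ℕ => ‖T ^ n‖ / (n : ℝ)) atTop (𝓝 0))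
    (lam : ℂ) (hlam : ‖lam‖ = 1) (hsp : (starRingEnd ℂ) lam ∉ spectrum ℂ T) :
    ∀ x : X, ∃ L : X,
      Tendsto (fun n : ℕ => ∑ k ∈ Finset.Icc 1 n, (lam ^ k / k) • (T ^ k) x)
        atTop (𝓝 L) := by
  set S : X →L[ℂ] X := lam • T with hSdef
  have hlam0 : lam ≠ 0 := by
    intro h; rw [h, norm_zero] at hlam; norm_num at hlam
  have hconj : lam * (starRingEnd ℂ) lam = 1 := by
    rw [Complex.mul_conj]
    have h : Complex.normSq lam = 1 := by
      rw [Complex.normSq_eq_norm_sq, hlam, one_pow]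
    rw [h, Complex.ofReal_one]
  have hunit : IsUnit ((1 : X →L[ℂ] X) - S) := by
    have h0 : IsUnit (algebraMap ℂ (X →L[ℂ] X) ((starRingEnd ℂ) lam) - T) :=
      spectrum.notMem_iff.mp hsp
    have h1 : (1 : X →L[ℂ] X) - S
        = lam • (algebraMap ℂ (X →L[ℂ] X) ((starRingEnd ℂ) lam) - T) := by
      rw [smul_sub, Algebra.algebraMap_eq_smul_one, smul_smul, hconj, one_smul]
    have h2 : IsUnit (algebraMap ℂ (X →L[ℂ] X) lam) :=
      (IsUnit.mk0 lam hlam0).map (algebraMap ℂ (X →L[ℂ] X))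
    rw [h1, Algebra.smul_def]
    exact h2.mul h0
  obtain ⟨u, hu⟩ := hunit
  have hQ : ((1 : X →L[ℂ] X) - S) * (↑u⁻¹ : X →L[ℂ] X) = 1 := by rw [← hu]; exact u.mul_inv
  have hnormS : ∀ n : ℕ, ‖S ^ n‖ = ‖T ^ n‖ := by
    intro n
    rw [hSdef, smul_pow]
    rw [norm_smul (lam ^ n) (T ^ n), norm_pow, hlam, one_pow, one_mul]
  have hS0 : Tendsto (fun n : ℕ => ‖S ^ n‖ / (n : ℝ)) atTop (𝓝 0) := by
    simpa only [hnormS] using hpow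
  have hshift : Tendsto (fun n : ℕ => ‖S ^ (n + 1)‖ / ((n : ℝ) + 1)) atTop (𝓝 0) := by
    have h := hS0.comp (tendsto_add_atTop_nat 1)
    have he : (fun n : ℕ => ‖S ^ (n + 1)‖ / ((n : ℝ) + 1))
        = (fun n : ℕ => ‖S ^ n‖ / (n : ℝ)) ∘ (fun n => n + 1) := by
      funext n; simp only [Function.comp_apply]; norm_cast
    rw [he]; exact h
  obtain ⟨M, hM0, hM⟩ : ∃ M : ℝ, 0 < M ∧ ∀ k : ℕ, ‖S ^ k‖ ≤ M * ((k : ℝ) + 1) := by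
    obtain ⟨C, hC⟩ := hS0.bddAbove_range
    simp only [mem_upperBounds, Set.mem_range, forall_exists_index] at hC
    refine ⟨max C 1, lt_of_lt_of_le one_pos (le_max_right _ _), ?_⟩
    intro k
    match k with
    | 0 =>
      simp only [pow_zero, Nat.cast_zero, zero_add, mul_one]
      calc ‖(1 : X →L[ℂ] X)‖ ≤ 1 := ContinuousLinearMap.norm_id_le
        _ ≤ max C 1 := le_max_right _ _
    | (k + 1) =>
      have h1 : ‖S ^ (k + 1)‖ / ((k : ℝ) + 1) ≤ C := by
        have h := hC (‖S ^ (k + 1)‖ / ((k + 1 : ℕ) : ℝ)) (k + 1) rfl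
        push_cast at h
        exact h
      have hk1 : (0 : ℝ) < (k : ℝ) + 1 := by positivity
      have h2 : ‖S ^ (k + 1)‖ ≤ C * ((k : ℝ) + 1) := by
        rw [div_le_iff₀ hk1] at h1; linarith
      have h3 : C * ((k : ℝ) + 1) ≤ max C 1 * ((k : ℝ) + 1 + 1) := by
        nlinarith [le_max_left C 1, le_max_right C 1]
      push_cast
      linarith
  have h1 : Tendsto (fun n : ℕ => ((n : ℂ))⁻¹ • S ^ (n + 1)) atTop (𝓝 0) := by
    apply squeeze_zero_norm' (a := fun n : ℕ => 2 * (‖S ^ (n + 1)‖ / ((n : ℝ) + 1)))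
    · filter_upwards [eventually_ge_atTop 1] with n hn
      have hn0 : (0 : ℝ) < (n : ℝ) := by exact_mod_cast hn
      rw [norm_smul ((n : ℂ))⁻¹ (S ^ (n + 1)), norm_inv, Complex.norm_natCast]
      rw [inv_mul_eq_div, div_le_iff₀ hn0, mul_comm 2 _, mul_assoc, div_mul_eq_mul_div,
        le_div_iff₀ (by positivity)]
      have hnn : (1 : ℝ) ≤ (n : ℝ) := by exact_mod_cast hn
      nlinarith [norm_nonneg (S ^ (n + 1))]
    · simpa using hshift.const_mul 2
  have h2 : Tendsto (fun n : ℕ =>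
      (((n : ℂ))⁻¹ - (((n - 1 : ℕ) : ℂ))⁻¹) • S ^ (n + 1)) atTop (𝓝 0) := by
    apply squeeze_zero_norm' (a := fun n : ℕ => 6 * (‖S ^ (n + 1)‖ / ((n : ℝ) + 1)))
    · filter_upwards [eventually_ge_atTop 2] with n hn
      have hn2 : (2 : ℝ) ≤ (n : ℝ) := by exact_mod_cast hn
      have hn0 : (0 : ℝ) < (n : ℝ) := by linarith
      have hn1 : (0 : ℝ) < (n : ℝ) - 1 := by linarith
      have hcast : (((n - 1 : ℕ) : ℝ)) = (n : ℝ) - 1 := by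
        have h : 1 ≤ n := by omega
        push_cast [h]; ring
      rw [norm_smul (((n : ℂ))⁻¹ - (((n - 1 : ℕ) : ℂ))⁻¹) (S ^ (n + 1))]
      have hcoef : ‖((n : ℂ))⁻¹ - (((n - 1 : ℕ) : ℂ))⁻¹‖ ≤ 2 / ((n : ℝ) - 1) := by
        calc ‖((n : ℂ))⁻¹ - (((n - 1 : ℕ) : ℂ))⁻¹‖
            ≤ ‖((n : ℂ))⁻¹‖ + ‖(((n - 1 : ℕ) : ℂ))⁻¹‖ := norm_sub_le _ _
          _ = ((n : ℝ))⁻¹ + (((n - 1 : ℕ) : ℝ))⁻¹ := by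
              rw [norm_inv, norm_inv, Complex.norm_natCast, Complex.norm_natCast]
          _ ≤ 2 / ((n : ℝ) - 1) := by
              rw [hcast, div_eq_mul_inv]
              have hinv : ((n : ℝ))⁻¹ ≤ ((n : ℝ) - 1)⁻¹ := by
                apply inv_anti₀ hn1; linarith
              linarith
      calc ‖((n : ℂ))⁻¹ - (((n - 1 : ℕ) : ℂ))⁻¹‖ * ‖S ^ (n + 1)‖
          ≤ (2 / ((n : ℝ) - 1)) * ‖S ^ (n + 1)‖ :=
            mul_le_mul_of_nonneg_right hcoef (norm_nonneg _)
        _ = (2 * ‖S ^ (n + 1)‖) / ((n : ℝ) - 1) := by ring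
        _ ≤ (6 * ‖S ^ (n + 1)‖) / ((n : ℝ) + 1) := by
            rw [div_le_div_iff₀ hn1 (by linarith)]
            nlinarith [norm_nonneg (S ^ (n + 1))]
        _ = 6 * (‖S ^ (n + 1)‖ / ((n : ℝ) + 1)) := by ring
    · simpa using hshift.const_mul 6
  set b1 : ℕ → ℂ := fun k => ((k : ℂ))⁻¹ - (((k - 1 : ℕ) : ℂ))⁻¹ with hb1def
  have hsum : Summable (fun k : ℕ => (b1 k - b1 (k - 1)) • S ^ k) := by
    rw [← summable_nat_add_iff 3]
    apply Summable.of_norm_bounded (g := fun k : ℕ => (4 * M) * (1 / ((k : ℝ) + 1) ^ 2))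
    · apply Summable.mul_left
      have hbase : Summable (fun n : ℕ => 1 / (n : ℝ) ^ 2) :=
        Real.summable_one_div_nat_pow.mpr one_lt_two
      have h := (summable_nat_add_iff 1).mpr hbase
      simpa using h
    · intro k
      have e1 : k + 3 - 1 = k + 2 := by omega
      have e2 : k + 3 - 1 - 1 = k + 1 := by omega
      have e3 : k + 2 - 1 = k + 1 := by omega
      have hne1 : ((k : ℂ) + 1) ≠ 0 := by
        have h : ((k + 1 : ℕ) : ℂ) ≠ 0 := Nat.cast_ne_zero.mpr (by omega)
        push_cast at h; exact h
      have hne2 : ((k : ℂ) + 2) ≠ 0 := by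
        have h : ((k + 2 : ℕ) : ℂ) ≠ 0 := Nat.cast_ne_zero.mpr (by omega)
        push_cast at h; exact h
      have hne3 : ((k : ℂ) + 3) ≠ 0 := by
        have h : ((k + 3 : ℕ) : ℂ) ≠ 0 := Nat.cast_ne_zero.mpr (by omega)
        push_cast at h; exact h
      have hval : b1 (k + 3) - b1 (k + 3 - 1)
          = ((2 / (((k : ℝ) + 1) * ((k : ℝ) + 2) * ((k : ℝ) + 3)) : ℝ) : ℂ) := by
        rw [e1]
        simp only [hb1def, e1, e2, e3]
        push_cast
        field_simp
        ring
      rw [hval, norm_smul ((2 / (((k : ℝ) + 1) * ((k : ℝ) + 2) * ((k : ℝ) + 3)) : ℝ) : ℂ) (S ^ (k + 3)), Complex.norm_real, Real.norm_eq_abs]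
      have hr : |(2 / (((k : ℝ) + 1) * ((k : ℝ) + 2) * ((k : ℝ) + 3)) : ℝ)|
          = 2 / (((k : ℝ) + 1) * ((k : ℝ) + 2) * ((k : ℝ) + 3)) := by
        apply abs_of_nonneg; positivity
      rw [hr]
      have hMk := hM (k + 3)
      push_cast at hMk
      have hk1 : (0 : ℝ) < (k : ℝ) + 1 := by positivity
      have hk2 : (0 : ℝ) < (k : ℝ) + 2 := by positivity
      have hk3 : (0 : ℝ) < (k : ℝ) + 3 := by positivity
      calc 2 / (((k : ℝ) + 1) * ((k : ℝ) + 2) * ((k : ℝ) + 3)) * ‖S ^ (k + 3)‖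
          ≤ 2 / (((k : ℝ) + 1) * ((k : ℝ) + 2) * ((k : ℝ) + 3)) * (M * ((k : ℝ) + 3 + 1)) :=
            mul_le_mul_of_nonneg_left hMk (by positivity)
        _ ≤ 4 * M * (1 / ((k : ℝ) + 1) ^ 2) := by
            rw [div_mul_eq_mul_div, div_le_iff₀ (by positivity)]
            have e : 4 * M * (1 / ((k : ℝ) + 1) ^ 2)
                  * (((k : ℝ) + 1) * ((k : ℝ) + 2) * ((k : ℝ) + 3))
                = 4 * M * (((k : ℝ) + 2) * ((k : ℝ) + 3)) / ((k : ℝ) + 1) := by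
              field_simp
            rw [e, le_div_iff₀ hk1]
            nlinarith [hM0.le, mul_nonneg hM0.le (sq_nonneg (k : ℝ)),
              mul_nonneg hM0.le (Nat.cast_nonneg k : (0 : ℝ) ≤ (k : ℝ))]
  have hmain : ∃ L : X →L[ℂ] X,
      Tendsto (fun n : ℕ => ∑ k ∈ Finset.Icc 1 n, ((k : ℂ))⁻¹ • S ^ k) atTop (𝓝 L) := by
    apply abel_step S (↑u⁻¹) hQ _ (by simp) h1
    apply abel_step S (↑u⁻¹) hQ _ (by simp) h2
    exact sum_Icc_one_tendsto _ hsum (by simp)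
  obtain ⟨L, hL⟩ := hmain
  intro x
  refine ⟨L x, ?_⟩
  have happ : ∀ n : ℕ, (∑ k ∈ Finset.Icc 1 n, ((k : ℂ))⁻¹ • S ^ k) x
      = ∑ k ∈ Finset.Icc 1 n, (lam ^ k / k) • (T ^ k) x := by
    intro n
    rw [ContinuousLinearMap.sum_apply]
    refine Finset.sum_congr rfl fun k _ => ?_
    rw [ContinuousLinearMap.smul_apply, hSdef, smul_pow, ContinuousLinearMap.smul_apply,
      smul_smul, div_eq_mul_inv, mul_comm]
  have hfin := ((ContinuousLinearMap.apply ℂ X x).continuous.tendsto L).comp hL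
  simp only [Function.comp_def, ContinuousLinearMap.apply_apply] at hfin
  simpa only [happ] using hfin
end
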